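/- arXiv:2506.16953 — 4 statements merged into one kernel-verified Lean document; each statement's English description precedes it below -/
import Mathlib

section
/- Suppose n = u + v where u and v are distinct powers of a prime p (with u, v ≥ 1). If p = 2, then exactly 2^{n-2} compositions α of n satisfy r_α ≡ 0 (mod 2) and exactly 2^{n-2} satisfy r_α ≡ 1 (mod 2). -/
open Finset

namespace RibbonAux

/-! ### basic fiber counting -/

def fibc {n ℓ : ℕ} (g : Fin n → Fin ℓ) (j : Fin ℓ) : ℕ := (univ.filter fun k => g k = j).card

lemma sum_fibc {n ℓ : ℕ} (g : Fin n → Fin ℓ) : ∑ j, fibc g j = n := by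
  unfold fibc
  simp only [Finset.card_filter]
  rw [Finset.sum_comm]
  simp

lemma fibc_comp_perm {n ℓ : ℕ} (g : Fin n → Fin ℓ) (e : Equiv.Perm (Fin n)) (j : Fin ℓ) :
    fibc (g ∘ e) j = fibc g j := by
  unfold fibc
  simp only [Finset.card_filter]
  exact Fintype.sum_equiv e _ _ (fun k => rfl)

def fcnt (n ℓ : ℕ) (β : Fin ℓ → ℕ) : ℕ :=
  Fintype.card {g : Fin n → Fin ℓ // ∀ j, fibc g j = β j}

def Disj {ℓ : ℕ} (β : Fin ℓ → ℕ) : Prop :=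
  ∀ j k : Fin ℓ, j ≠ k → ∀ i, ¬((β j).testBit i ∧ (β k).testBit i)

/-! ### parity via involution -/

lemma card_parity_involution {X : Type*} [Fintype X] [DecidableEq X]
    (p : X → Prop) [DecidablePred p] (ι : X → X) (hinv : ∀ x, ι (ι x) = x)
    (hp : ∀ x, p x → p (ι x)) :
    (univ.filter p).card % 2 = (univ.filter fun x => p x ∧ ι x = x).card % 2 := by
  classical
  have hsplit : (univ.filter p).card
      = (univ.filter fun x => p x ∧ ι x = x).card + (univ.filter fun x => p x ∧ ι x ≠ x).card := by
    rw [← Finset.filter_filter, ← Finset.filter_filter]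
    exact (Finset.card_filter_add_card_filter_not (fun x => ι x = x)).symm
  have heven : (univ.filter fun x => p x ∧ ι x ≠ x).card % 2 = 0 := by
    have : (∑ _x ∈ univ.filter fun x => p x ∧ ι x ≠ x, (1 : ZMod 2)) = 0 := by
      refine Finset.sum_involution (fun a _ => ι a) (fun a ha => by decide) ?_ ?_ ?_
      · intro a ha h
        simp only [Finset.mem_filter] at ha
        exact ha.2.2
      · intro a ha
        simp only [Finset.mem_filter, Finset.mem_univ, true_and] at ha ⊢
        exact ⟨hp a ha.1, by rw [hinv]; exact fun h => ha.2 h.symm⟩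
      · intro a ha; exact hinv a
    rw [Finset.sum_const, nsmul_eq_mul, mul_one] at this
    have := (ZMod.natCast_eq_natCast_iff' _ 0 2).mp (by simpa using this)
    simpa using this
  omega


/-! ### testBit lemmas -/

lemma testBit_add_of_disj {x y : ℕ} (h : ∀ i, ¬(x.testBit i ∧ y.testBit i)) (i : ℕ) :
    (x + y).testBit i = (x.testBit i || y.testBit i) := by
  induction i generalizing x y with
  | zero =>
    have h0 := h 0
    simp only [Nat.testBit_zero, decide_eq_true_eq] at h0 ⊢
    rw [Bool.eq_iff_iff]
    simp only [Bool.or_eq_true, decide_eq_true_eq]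
    omega
  | succ i ih =>
    rw [Nat.testBit_succ, Nat.testBit_succ, Nat.testBit_succ]
    have h0 := h 0
    simp only [Nat.testBit_zero, decide_eq_true_eq] at h0
    have hdiv : (x + y) / 2 = x / 2 + y / 2 := by omega
    rw [hdiv]
    refine ih fun i hi => h (i + 1) ?_
    rwa [Nat.testBit_succ, Nat.testBit_succ]

lemma testBit_sum_disj {ℓ : ℕ} {β : Fin ℓ → ℕ} (hd : Disj β) (s : Finset (Fin ℓ)) (i : ℕ) :
    ((∑ j ∈ s, β j).testBit i = true) ↔ ∃ j ∈ s, (β j).testBit i = true := by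
  induction s using Finset.induction_on generalizing i with
  | empty => simp [Nat.zero_testBit]
  | @insert a s ha ih =>
    rw [Finset.sum_insert ha]
    have hdisj : ∀ i, ¬((β a).testBit i ∧ (∑ j ∈ s, β j).testBit i) := by
      intro i hi
      obtain ⟨j, hj, hbit⟩ := (ih i).mp hi.2
      exact hd a j (fun he => ha (he ▸ hj)) i ⟨hi.1, hbit⟩
    rw [testBit_add_of_disj hdisj, Bool.or_eq_true, ih i]
    simp only [Finset.mem_insert]
    constructor
    · rintro (h | ⟨j, hj, hb⟩)
      · exact ⟨a, Or.inl rfl, h⟩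
      · exact ⟨j, Or.inr hj, hb⟩
    · rintro ⟨j, (rfl | hj), hb⟩
      · exact Or.inl hb
      · exact Or.inr ⟨j, hj, hb⟩

lemma disj_half {ℓ : ℕ} {β : Fin ℓ → ℕ} (he : ∀ j k : Fin ℓ, j ≠ k → β j % 2 = 0 ∨ β k % 2 = 0) :
    Disj β ↔ Disj (fun j => β j / 2) := by
  constructor
  · intro hD j k hjk i hcontra
    rw [← Nat.testBit_succ, ← Nat.testBit_succ] at hcontra
    exact hD j k hjk (i + 1) hcontra
  · intro hD j k hjk i hcontra
    cases i with
    | zero =>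
      simp only [Nat.testBit_zero, decide_eq_true_eq] at hcontra
      rcases he j k hjk with h | h <;> omega
    | succ i =>
      rw [Nat.testBit_succ, Nat.testBit_succ] at hcontra
      exact hD j k hjk i hcontra

/-! ### sums over ranges in pairs -/

lemma sum_range_pair {M : Type*} [AddCommMonoid M] (f : ℕ → M) (m : ℕ) :
    ∑ k ∈ Finset.range (2 * m), f k = ∑ i ∈ Finset.range m, (f (2 * i) + f (2 * i + 1)) := by
  induction m with
  | zero => simp
  | succ m ih =>
    have h2 : 2 * (m + 1) = (2 * m + 1) + 1 := by ring
    rw [h2, Finset.sum_range_succ, Finset.sum_range_succ, Finset.sum_range_succ, ← ih]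
    exact (add_assoc _ _ _)

def Fx {n ℓ : ℕ} (g : Fin n → Fin ℓ) (j : Fin ℓ) (k : ℕ) : ℕ :=
  if h : k < n then (if g ⟨k, h⟩ = j then 1 else 0) else 0

lemma fibc_eq {n ℓ : ℕ} (g : Fin n → Fin ℓ) (j : Fin ℓ) :
    fibc g j = ∑ k ∈ Finset.range n, Fx g j k := by
  rw [← Fin.sum_univ_eq_sum_range (Fx g j) n]
  unfold fibc
  rw [Finset.card_filter]
  refine Finset.sum_congr rfl fun k _ => ?_
  simp [Fx, k.isLt]

/-! ### the pairing permutation -/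

def pf (m k : ℕ) : ℕ := if k < 2 * m then (if k % 2 = 0 then k + 1 else k - 1) else k

lemma pf_lt {m n k : ℕ} (hm : 2 * m ≤ n) (h : k < n) : pf m k < n := by
  unfold pf; split_ifs <;> omega

lemma pf_pf (m k : ℕ) : pf m (pf m k) = k := by
  unfold pf; split_ifs <;> omega

def pairPerm (n m : ℕ) (hm : 2 * m ≤ n) : Equiv.Perm (Fin n) where
  toFun k := ⟨pf m k.val, pf_lt hm k.isLt⟩
  invFun k := ⟨pf m k.val, pf_lt hm k.isLt⟩
  left_inv k := Fin.ext (pf_pf m k.val)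
  right_inv k := Fin.ext (pf_pf m k.val)

lemma pairPerm_val (n m : ℕ) (hm : 2 * m ≤ n) (k : Fin n) :
    (pairPerm n m hm k).val = pf m k.val := rfl

lemma fibc_fixed {n m ℓ : ℕ} (hm : 2 * m ≤ n) (g : Fin n → Fin ℓ)
    (hfix : g ∘ (pairPerm n m hm) = g) (j : Fin ℓ) :
    fibc g j = 2 * fibc (fun i : Fin m => g ⟨2 * i.val, by have := i.isLt; omega⟩) j
      + ∑ k ∈ Finset.Ico (2 * m) n, Fx g j k := by
  rw [fibc_eq, ← Finset.sum_range_add_sum_Ico _ hm, sum_range_pair]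
  congr 1
  rw [fibc_eq, Finset.mul_sum]
  refine Finset.sum_congr rfl fun i hi => ?_
  have him : i < m := Finset.mem_range.mp hi
  have hlt : 2 * i < n := by omega
  have hlt1 : 2 * i + 1 < n := by omega
  have hpair : g ⟨2 * i + 1, hlt1⟩ = g ⟨2 * i, hlt⟩ := by
    have h1 := congr_fun hfix ⟨2 * i, hlt⟩
    have h2 : (pairPerm n m hm ⟨2 * i, hlt⟩) = ⟨2 * i + 1, hlt1⟩ := by
      apply Fin.ext
      rw [pairPerm_val]
      show pf m (2 * i) = 2 * i + 1
      unfold pf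
      split_ifs <;> omega
    rw [Function.comp_apply, h2] at h1
    exact h1
  have h1 : Fx g j (2 * i) = if g ⟨2 * i, hlt⟩ = j then 1 else 0 := by
    unfold Fx; rw [dif_pos hlt]
  have h2 : Fx g j (2 * i + 1) = if g ⟨2 * i, hlt⟩ = j then 1 else 0 := by
    unfold Fx; rw [dif_pos hlt1, hpair]
  have h3 : Fx (fun i : Fin m => g ⟨2 * i.val, by have := i.isLt; omega⟩) j i
      = if g ⟨2 * i, hlt⟩ = j then 1 else 0 := by
    unfold Fx; rw [dif_pos him]
  rw [h1, h2, h3]; ring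


/-! ### restriction / extension helpers -/

def res2 {n ℓ : ℕ} (m : ℕ) (hm : 2 * m ≤ n) (g : Fin n → Fin ℓ) : Fin m → Fin ℓ :=
  fun i => g ⟨2 * i.val, by have := i.isLt; omega⟩

def halfExt {ℓ : ℕ} (n m : ℕ) (h : n ≤ 2 * m) (g' : Fin m → Fin ℓ) : Fin n → Fin ℓ :=
  fun k => g' ⟨k.val / 2, by have := k.isLt; omega⟩

def ext1 {ℓ : ℕ} (n m : ℕ) (g' : Fin m → Fin ℓ) (j₀ : Fin ℓ) : Fin n → Fin ℓ :=
  fun k => if h : k.val < 2 * m then g' ⟨k.val / 2, by omega⟩ else j₀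

lemma fibc_fixed' {n m ℓ : ℕ} (hm : 2 * m ≤ n) (g : Fin n → Fin ℓ)
    (hfix : g ∘ (pairPerm n m hm) = g) (j : Fin ℓ) :
    fibc g j = 2 * fibc (res2 m hm g) j + ∑ k ∈ Finset.Ico (2 * m) n, Fx g j k :=
  fibc_fixed hm g hfix j

lemma res2_halfExt {n m ℓ : ℕ} (hm : 2 * m ≤ n) (hnm : n ≤ 2 * m) (g' : Fin m → Fin ℓ) :
    res2 m hm (halfExt n m hnm g') = g' := by
  funext i
  show g' ⟨(2 * i.val) / 2, _⟩ = g' i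
  exact congrArg g' (Fin.ext (by show 2 * i.val / 2 = i.val; omega))

lemma res2_ext1 {n m ℓ : ℕ} (hm : 2 * m ≤ n) (g' : Fin m → Fin ℓ) (j₀ : Fin ℓ) :
    res2 m hm (ext1 n m g' j₀) = g' := by
  funext i
  show ext1 n m g' j₀ ⟨2 * i.val, _⟩ = g' i
  unfold ext1
  rw [dif_pos (by show 2 * i.val < 2 * m; have := i.isLt; omega :
    (⟨2 * i.val, by have := i.isLt; omega⟩ : Fin n).val < 2 * m)]
  exact congrArg g' (Fin.ext (by show 2 * i.val / 2 = i.val; omega))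

lemma halfExt_fix {n m ℓ : ℕ} (hm : 2 * m ≤ n) (hnm : n ≤ 2 * m) (g' : Fin m → Fin ℓ) :
    (halfExt n m hnm g') ∘ (pairPerm n m hm) = halfExt n m hnm g' := by
  funext k
  show g' ⟨(pairPerm n m hm k).val / 2, _⟩ = g' ⟨k.val / 2, _⟩
  exact congrArg g' (Fin.ext (by
    show pf m k.val / 2 = k.val / 2
    unfold pf; split_ifs <;> omega))

lemma ext1_fix {n m ℓ : ℕ} (hm : 2 * m ≤ n) (g' : Fin m → Fin ℓ) (j₀ : Fin ℓ) :
    (ext1 n m g' j₀) ∘ (pairPerm n m hm) = ext1 n m g' j₀ := by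
  funext k
  show ext1 n m g' j₀ (pairPerm n m hm k) = ext1 n m g' j₀ k
  unfold ext1
  by_cases hk : k.val < 2 * m
  · have h1 : (pairPerm n m hm k).val < 2 * m := by
      show pf m k.val < 2 * m
      unfold pf; split_ifs <;> omega
    rw [dif_pos h1, dif_pos hk]
    exact congrArg g' (Fin.ext (by
      show pf m k.val / 2 = k.val / 2
      unfold pf; split_ifs <;> omega))
  · have h1 : ¬ (pairPerm n m hm k).val < 2 * m := by
      show ¬ pf m k.val < 2 * m
      unfold pf; split_ifs <;> omega
    rw [dif_neg h1, dif_neg hk]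

lemma ext1_last {n m ℓ : ℕ} (h2m : 2 * m < n) (g' : Fin m → Fin ℓ) (j₀ : Fin ℓ) :
    ext1 n m g' j₀ ⟨2 * m, h2m⟩ = j₀ := by
  unfold ext1
  rw [dif_neg (by show ¬ 2 * m < 2 * m; omega : ¬ (⟨2 * m, h2m⟩ : Fin n).val < 2 * m)]

lemma halfExt_res2 {n m ℓ : ℕ} (hm : 2 * m ≤ n) (hnm : n ≤ 2 * m) (g : Fin n → Fin ℓ)
    (hfix : g ∘ (pairPerm n m hm) = g) :
    halfExt n m hnm (res2 m hm g) = g := by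
  funext k
  show g ⟨2 * ((⟨k.val / 2, _⟩ : Fin m)).val, _⟩ = g k
  by_cases hk : k.val % 2 = 0
  · exact congrArg g (Fin.ext (by show 2 * (k.val / 2) = k.val; omega))
  · rw [← congr_fun hfix k]
    exact congrArg g (Fin.ext (by
      show 2 * (k.val / 2) = pf m k.val
      unfold pf; split_ifs <;> omega))

lemma ext1_res2 {n m ℓ : ℕ} (hm : 2 * m ≤ n) (hnm : n = 2 * m + 1) (h2m : 2 * m < n)
    (g : Fin n → Fin ℓ)
    (hfix : g ∘ (pairPerm n m hm) = g) {j₀ : Fin ℓ} (hlast : g ⟨2 * m, h2m⟩ = j₀) :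
    ext1 n m (res2 m hm g) j₀ = g := by
  funext k
  unfold ext1
  by_cases hk : k.val < 2 * m
  · rw [dif_pos hk]
    show g ⟨2 * ((⟨k.val / 2, _⟩ : Fin m)).val, _⟩ = g k
    by_cases hk2 : k.val % 2 = 0
    · exact congrArg g (Fin.ext (by show 2 * (k.val / 2) = k.val; omega))
    · rw [← congr_fun hfix k]
      exact congrArg g (Fin.ext (by
        show 2 * (k.val / 2) = pf m k.val
        unfold pf; split_ifs <;> omega))
  · rw [dif_neg hk]
    refine Eq.symm (Eq.trans (congrArg g (Fin.ext ?_) : g k = g ⟨2 * m, h2m⟩) hlast)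
    show k.val = 2 * m
    have := k.isLt
    omega

/-! ### the main parity induction -/

lemma glast_eq {n m ℓ : ℕ} (hm2 : 2 * m ≤ n) (hnm : n = 2 * m + 1) (h2m : 2 * m < n)
    {β : Fin ℓ → ℕ} {j₀ : Fin ℓ}
    (hj₀ : β j₀ % 2 = 1) (hrest : ∀ k, k ≠ j₀ → β k % 2 = 0) (g : Fin n → Fin ℓ)
    (hfib : ∀ j, fibc g j = β j) (hfix : g ∘ (pairPerm n m hm2) = g) :
    g ⟨2 * m, h2m⟩ = j₀ := by
  set jj := g ⟨2 * m, h2m⟩ with hjj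
  have h := fibc_fixed' hm2 g hfix jj
  have htail : ∑ k ∈ Finset.Ico (2 * m) n, Fx g jj k = 1 := by
    have hIco : Finset.Ico (2 * m) n = {2 * m} := by
      rw [hnm]; exact Nat.Ico_succ_singleton _
    rw [hIco, Finset.sum_singleton]
    unfold Fx
    rw [dif_pos h2m, if_pos hjj.symm]
  rw [htail, hfib jj] at h
  by_contra hne
  have := hrest jj hne
  omega

set_option maxHeartbeats 1000000 in
open scoped Classical in
theorem fcnt_mod_two : ∀ (n ℓ : ℕ) (β : Fin ℓ → ℕ),
    fcnt n ℓ β % 2 = if (∑ j, β j) = n ∧ Disj β then 1 else 0 := by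
  intro n
  induction n using Nat.strong_induction_on with
  | _ n IH =>
  intro ℓ β
  by_cases hsum : (∑ j, β j) = n
  case neg =>
    rw [if_neg (fun h => hsum h.1)]
    have h0 : fcnt n ℓ β = 0 := by
      rw [fcnt, Fintype.card_eq_zero_iff]
      constructor
      rintro ⟨g, hg⟩
      refine hsum ?_
      rw [← sum_fibc g]
      exact Finset.sum_congr rfl fun j _ => (hg j).symm
    simp [h0]
  case pos =>
  rcases Nat.eq_zero_or_pos n with hn0 | hnpos
  · subst hn0
    have hβ0 : ∀ j, β j = 0 := fun j =>
      Finset.sum_eq_zero_iff.mp hsum j (Finset.mem_univ j)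
    have hD : Disj β := by
      intro j k hjk i hc
      rw [hβ0 j] at hc
      simp [Nat.zero_testBit] at hc
    rw [if_pos ⟨hsum, hD⟩]
    have h1 : fcnt 0 ℓ β = 1 := by
      rw [fcnt, Fintype.card_eq_one_iff]
      refine ⟨⟨fun k => k.elim0, fun j => by rw [hβ0 j]; unfold fibc; simp⟩, ?_⟩
      rintro ⟨g, hg⟩
      apply Subtype.ext
      funext k
      exact k.elim0
    rw [h1]
  obtain ⟨m, hm | hm⟩ := Nat.even_or_odd' n
  · -- n = 2 * m : even case
    have hm2 : 2 * m ≤ n := by omega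
    have hn2 : n ≤ 2 * m := by omega
    have hmlt : m < n := by omega
    have hstep : fcnt n ℓ β % 2
        = (univ.filter fun g : Fin n → Fin ℓ =>
            (∀ j, fibc g j = β j) ∧ g ∘ (pairPerm n m hm2) = g).card % 2 := by
      rw [fcnt, Fintype.card_subtype]
      refine card_parity_involution _ (fun g => g ∘ (pairPerm n m hm2)) ?_
        (fun g hg j => by rw [fibc_comp_perm]; exact hg j)
      intro g; funext k
      simp only [Function.comp_apply]
      exact congrArg g (Fin.ext (pf_pf m k.val))
    have htail : ∀ (g : Fin n → Fin ℓ) (j : Fin ℓ), ∑ k ∈ Finset.Ico (2 * m) n, Fx g j k = 0 := by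
      intro g j
      have hIco : Finset.Ico (2 * m) n = ∅ := by rw [hm]; exact Finset.Ico_self _
      rw [hIco, Finset.sum_empty]
    by_cases heven : ∀ j, β j % 2 = 0
    · have hcard : (univ.filter fun g : Fin n → Fin ℓ =>
            (∀ j, fibc g j = β j) ∧ g ∘ (pairPerm n m hm2) = g).card
          = fcnt m ℓ (fun j => β j / 2) := by
        rw [fcnt, Fintype.card_subtype]
        refine Finset.card_bij'
          (i := fun g _ => res2 m hm2 g)
          (j := fun g' _ => halfExt n m hn2 g')
          ?_ ?_ ?_ ?_
        · intro g hg
          simp only [Finset.mem_filter, Finset.mem_univ, true_and] at hg ⊢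
          intro j
          have h := fibc_fixed' hm2 g hg.2 j
          rw [htail g j, hg.1 j] at h
          omega
        · intro g' hg'
          simp only [Finset.mem_filter, Finset.mem_univ, true_and] at hg' ⊢
          refine ⟨?_, halfExt_fix hm2 hn2 g'⟩
          intro j
          have h := fibc_fixed' hm2 _ (halfExt_fix hm2 hn2 g') j
          rw [htail _ j, res2_halfExt hm2 hn2 g', hg' j] at h
          have := heven j
          omega
        · intro g hg
          simp only [Finset.mem_filter, Finset.mem_univ, true_and] at hg
          exact halfExt_res2 hm2 hn2 g hg.2
        · intro g' hg'
          exact res2_halfExt hm2 hn2 g'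
      rw [hstep, hcard, IH m hmlt]
      have hsum2 : (∑ j, β j / 2) = m := by
        have h2 : (2 : ℕ) * ∑ j, β j / 2 = ∑ j, β j := by
          rw [Finset.mul_sum]
          exact Finset.sum_congr rfl fun j _ => by have := heven j; omega
        omega
      have hdisj : Disj β ↔ Disj (fun j => β j / 2) := disj_half (fun j k _ => Or.inl (heven j))
      by_cases hD : Disj β
      · rw [if_pos ⟨hsum2, hdisj.mp hD⟩, if_pos ⟨hsum, hD⟩]
      · rw [if_neg (fun h => hD (hdisj.mpr h.2)), if_neg (fun h => hD h.2)]
    · push_neg at heven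
      obtain ⟨j₀, hj₀⟩ := heven
      have hzero : (univ.filter fun g : Fin n → Fin ℓ =>
            (∀ j, fibc g j = β j) ∧ g ∘ (pairPerm n m hm2) = g).card = 0 := by
        rw [Finset.card_eq_zero, Finset.filter_eq_empty_iff]
        rintro g _ ⟨hfib, hfix⟩
        have h := fibc_fixed' hm2 g hfix j₀
        rw [htail g j₀, hfib j₀] at h
        omega
      rw [hstep, hzero]
      rw [if_neg ?_]
      rintro ⟨hs, hD⟩
      have hodd2 : ∃ k, k ≠ j₀ ∧ β k % 2 ≠ 0 := by
        by_contra hall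
        push_neg at hall
        have hparity : (∑ j, β j) % 2 = 1 := by
          rw [Finset.sum_nat_mod]
          have h1 : (∑ j, β j % 2) = β j₀ % 2 := by
            refine Finset.sum_eq_single j₀ (fun k _ hk => hall k hk) ?_
            intro h; exact absurd (Finset.mem_univ j₀) h
          rw [h1]
          omega
        omega
      obtain ⟨k₀, hk₀, hodd⟩ := hodd2
      refine hD j₀ k₀ (Ne.symm hk₀) 0 ⟨?_, ?_⟩ <;>
        · simp only [Nat.testBit_zero, decide_eq_true_eq]; omega
  · -- n = 2 * m + 1 : odd case
    have hm2 : 2 * m ≤ n := by omega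
    have h2m : 2 * m < n := by omega
    have hmlt : m < n := by omega
    have hstep : fcnt n ℓ β % 2
        = (univ.filter fun g : Fin n → Fin ℓ =>
            (∀ j, fibc g j = β j) ∧ g ∘ (pairPerm n m hm2) = g).card % 2 := by
      rw [fcnt, Fintype.card_subtype]
      refine card_parity_involution _ (fun g => g ∘ (pairPerm n m hm2)) ?_
        (fun g hg j => by rw [fibc_comp_perm]; exact hg j)
      intro g; funext k
      simp only [Function.comp_apply]
      exact congrArg g (Fin.ext (pf_pf m k.val))
    have htail : ∀ (g : Fin n → Fin ℓ) (j : Fin ℓ),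
        ∑ k ∈ Finset.Ico (2 * m) n, Fx g j k = if g ⟨2 * m, h2m⟩ = j then 1 else 0 := by
      intro g j
      have hIco : Finset.Ico (2 * m) n = {2 * m} := by rw [hm]; exact Nat.Ico_succ_singleton _
      rw [hIco, Finset.sum_singleton]
      unfold Fx
      rw [dif_pos h2m]
    by_cases hone : ∃ j₀, β j₀ % 2 = 1 ∧ ∀ k, k ≠ j₀ → β k % 2 = 0
    · obtain ⟨j₀, hj₀, hrest⟩ := hone
      have hcard : (univ.filter fun g : Fin n → Fin ℓ =>
            (∀ j, fibc g j = β j) ∧ g ∘ (pairPerm n m hm2) = g).card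
          = fcnt m ℓ (fun j => β j / 2) := by
        rw [fcnt, Fintype.card_subtype]
        refine Finset.card_bij'
          (i := fun g _ => res2 m hm2 g)
          (j := fun g' _ => ext1 n m g' j₀)
          ?_ ?_ ?_ ?_
        · intro g hg
          simp only [Finset.mem_filter, Finset.mem_univ, true_and] at hg ⊢
          intro j
          have hlast : g ⟨2 * m, h2m⟩ = j₀ := glast_eq hm2 hm h2m hj₀ hrest g hg.1 hg.2
          have h := fibc_fixed' hm2 g hg.2 j
          rw [htail g j, hg.1 j, hlast] at h
          by_cases hj : j₀ = j
          · rw [if_pos hj] at h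
            subst hj
            omega
          · rw [if_neg hj] at h
            have := hrest j (fun hh => hj hh.symm)
            omega
        · intro g' hg'
          simp only [Finset.mem_filter, Finset.mem_univ, true_and] at hg' ⊢
          refine ⟨?_, ext1_fix hm2 g' j₀⟩
          intro j
          have h := fibc_fixed' hm2 _ (ext1_fix hm2 g' j₀) j
          rw [htail _ j, res2_ext1 hm2 g' j₀, ext1_last h2m g' j₀, hg' j] at h
          rw [h]
          by_cases hj : j₀ = j
          · subst hj; rw [if_pos rfl]; omega
          · rw [if_neg hj]
            have := hrest j (fun hh => hj hh.symm)
            omega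
        · intro g hg
          simp only [Finset.mem_filter, Finset.mem_univ, true_and] at hg
          have hlast : g ⟨2 * m, h2m⟩ = j₀ := glast_eq hm2 hm h2m hj₀ hrest g hg.1 hg.2
          exact ext1_res2 hm2 hm h2m g hg.2 hlast
        · intro g' hg'
          exact res2_ext1 hm2 g' j₀
      rw [hstep, hcard, IH m hmlt]
      have h3 : (∑ j, β j % 2) = 1 := by
        have h1 : (∑ j, β j % 2) = β j₀ % 2 := by
          refine Finset.sum_eq_single j₀ (fun k _ hk => hrest k hk) ?_
          intro h; exact absurd (Finset.mem_univ j₀) h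
        rw [h1, hj₀]
      have hsum2 : (∑ j, β j / 2) = m := by
        have h2 : (∑ j, β j) = 2 * (∑ j, β j / 2) + ∑ j, β j % 2 := by
          rw [Finset.mul_sum, ← Finset.sum_add_distrib]
          exact Finset.sum_congr rfl fun j _ => by omega
        omega
      have hdisj : Disj β ↔ Disj (fun j => β j / 2) := by
        refine disj_half (fun j k hjk => ?_)
        by_cases hj : j = j₀
        · refine Or.inr (hrest k (fun hk => hjk ?_))
          rw [hj, hk]
        · exact Or.inl (hrest j hj)
      by_cases hD : Disj β
      · rw [if_pos ⟨hsum2, hdisj.mp hD⟩, if_pos ⟨hsum, hD⟩]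
      · rw [if_neg (fun h => hD (hdisj.mpr h.2)), if_neg (fun h => hD h.2)]
    · have hzero : (univ.filter fun g : Fin n → Fin ℓ =>
            (∀ j, fibc g j = β j) ∧ g ∘ (pairPerm n m hm2) = g).card = 0 := by
        rw [Finset.card_eq_zero, Finset.filter_eq_empty_iff]
        rintro g _ ⟨hfib, hfix⟩
        refine hone ⟨g ⟨2 * m, h2m⟩, ?_, ?_⟩
        · have h := fibc_fixed' hm2 g hfix (g ⟨2 * m, h2m⟩)
          rw [htail, hfib, if_pos rfl] at h
          omega
        · intro k hk
          have h := fibc_fixed' hm2 g hfix k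
          rw [htail, hfib, if_neg (fun hh => hk hh.symm)] at h
          omega
      rw [hstep, hzero]
      rw [if_neg ?_]
      rintro ⟨hs, hD⟩
      have hj0 : ∃ j₀, β j₀ % 2 = 1 := by
        by_contra hall
        push_neg at hall
        have hparity : (∑ j, β j) % 2 = 0 := by
          rw [Finset.sum_nat_mod]
          have h1 : (∑ j, β j % 2) = 0 := by
            refine Finset.sum_eq_zero (fun k _ => ?_)
            have := hall k; omega
          rw [h1]
        omega
      obtain ⟨j₀, hj₀⟩ := hj0
      have hodd2 : ∃ k, k ≠ j₀ ∧ β k % 2 ≠ 0 := by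
        by_contra hall
        push_neg at hall
        exact hone ⟨j₀, hj₀, hall⟩
      obtain ⟨k₀, hk₀, hodd⟩ := hodd2
      refine hD j₀ k₀ (Ne.symm hk₀) 0 ⟨?_, ?_⟩ <;>
        · simp only [Nat.testBit_zero, decide_eq_true_eq]; omega


/-! ### monotone functions with equal fibers are equal -/

lemma filter_le_card_eq {n ℓ : ℕ} (f : Fin n → Fin ℓ) (j : Fin ℓ) :
    (univ.filter fun k => f k ≤ j).card = ∑ j' ∈ Finset.Iic j, fibc f j' := by
  refine Finset.card_eq_sum_card_fiberwise (f := f) (t := Finset.Iic j) ?_ |>.trans ?_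
  · intro x hx
    simp only [Finset.mem_coe, Finset.mem_filter] at hx
    simpa [Finset.mem_Iic] using hx.2
  · refine Finset.sum_congr rfl fun b hb => ?_
    rw [Finset.filter_filter]
    unfold fibc
    congr 1
    apply Finset.filter_congr
    intro x _
    simp only [Finset.mem_Iic] at hb
    constructor
    · rintro ⟨_, h⟩; exact h
    · intro h; exact ⟨h ▸ hb, h⟩

lemma downset_mem_iff {n : ℕ} (D : Finset (Fin n))
    (hD : ∀ x y : Fin n, x ≤ y → y ∈ D → x ∈ D) (k : Fin n) :
    k ∈ D ↔ k.val < D.card := by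
  have hIio : (univ.filter fun x : Fin n => x < k) = Finset.Iio k := by
    ext x; simp [Finset.mem_Iio]
  have hIic : (univ.filter fun x : Fin n => x ≤ k) = Finset.Iic k := by
    ext x; simp [Finset.mem_Iic]
  constructor
  · intro hk
    have hsub : (univ.filter fun x : Fin n => x ≤ k) ⊆ D := by
      intro x hx
      simp only [Finset.mem_filter, Finset.mem_univ, true_and] at hx
      exact hD x k hx hk
    have := Finset.card_le_card hsub
    rw [hIic, Fin.card_Iic] at this
    omega
  · intro hk
    by_contra hkD
    have hsub : D ⊆ univ.filter fun x : Fin n => x < k := by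
      intro d hd
      simp only [Finset.mem_filter, Finset.mem_univ, true_and]
      rcases lt_or_ge d k with h | h
      · exact h
      · exact absurd (hD k d h hd) hkD
    have := Finset.card_le_card hsub
    rw [hIio, Fin.card_Iio] at this
    omega

lemma mono_fib_ext {n ℓ : ℕ} {f₁ f₂ : Fin n → Fin ℓ} (h₁ : Monotone f₁) (h₂ : Monotone f₂)
    (hf : ∀ j, fibc f₁ j = fibc f₂ j) : f₁ = f₂ := by
  have key : ∀ j : Fin ℓ, (univ.filter fun k => f₁ k ≤ j).card
      = (univ.filter fun k => f₂ k ≤ j).card := by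
    intro j
    rw [filter_le_card_eq, filter_le_card_eq]
    exact Finset.sum_congr rfl fun j' _ => hf j'
  have hds : ∀ (f : Fin n → Fin ℓ), Monotone f → ∀ (j : Fin ℓ) (x y : Fin n),
      x ≤ y → y ∈ (univ.filter fun k => f k ≤ j) → x ∈ (univ.filter fun k => f k ≤ j) := by
    intro f hm j x y hxy hy
    simp only [Finset.mem_filter, Finset.mem_univ, true_and] at hy ⊢
    exact le_trans (hm hxy) hy
  have hiff : ∀ (j : Fin ℓ) (k : Fin n), f₁ k ≤ j ↔ f₂ k ≤ j := by
    intro j k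
    have e1 := downset_mem_iff _ (hds f₁ h₁ j) k
    have e2 := downset_mem_iff _ (hds f₂ h₂ j) k
    simp only [Finset.mem_filter, Finset.mem_univ, true_and] at e1 e2
    rw [e1, e2, key j]
  funext k
  exact le_antisymm ((hiff (f₂ k) k).mpr le_rfl) ((hiff (f₁ k) k).mp le_rfl)

/-! ### blocks determined by a finset of descent positions -/

def blkN (S : Finset ℕ) (k : ℕ) : ℕ := (S.filter (· ≤ k)).card

lemma blkN_le (S : Finset ℕ) (k : ℕ) : blkN S k ≤ S.card :=
  Finset.card_le_card (Finset.filter_subset _ _)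

def blkF (n : ℕ) (S : Finset ℕ) : Fin n → Fin (S.card + 1) :=
  fun k => ⟨blkN S k.val, by have := blkN_le S k.val; omega⟩

lemma blkN_mono (S : Finset ℕ) : Monotone (blkN S) := by
  intro a b hab
  apply Finset.card_le_card
  intro x hx
  simp only [Finset.mem_filter] at hx ⊢
  exact ⟨hx.1, le_trans hx.2 hab⟩

lemma blkF_mono (n : ℕ) (S : Finset ℕ) : Monotone (blkF n S) := by
  intro a b hab
  simp only [blkF, Fin.mk_le_mk]
  exact blkN_mono S hab

lemma blkN_succ (S : Finset ℕ) (k : ℕ) :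
    blkN S (k + 1) = blkN S k + (if k + 1 ∈ S then 1 else 0) := by
  unfold blkN
  have hsplit : S.filter (· ≤ k + 1)
      = if k + 1 ∈ S then insert (k + 1) (S.filter (· ≤ k)) else S.filter (· ≤ k) := by
    split_ifs with h
    · ext x
      simp only [Finset.mem_filter, Finset.mem_insert]
      constructor
      · rintro ⟨hxS, hxle⟩
        rcases Nat.eq_or_lt_of_le hxle with he | hl
        · exact Or.inl he
        · exact Or.inr ⟨hxS, by omega⟩
      · rintro (rfl | ⟨hxS, hxle⟩)
        · exact ⟨h, le_rfl⟩
        · exact ⟨hxS, by omega⟩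
    · ext x
      simp only [Finset.mem_filter]
      constructor
      · rintro ⟨hxS, hxle⟩
        refine ⟨hxS, ?_⟩
        rcases Nat.eq_or_lt_of_le hxle with he | hl
        · exact absurd (he ▸ hxS) h
        · omega
      · rintro ⟨hxS, hxle⟩
        exact ⟨hxS, by omega⟩
  rw [hsplit]
  split_ifs with h
  · rw [Finset.card_insert_of_notMem (by simp)]
  · simp

lemma blkN_succ_eq_iff (S : Finset ℕ) (k : ℕ) :
    blkN S (k + 1) = blkN S k ↔ k + 1 ∉ S := by
  rw [blkN_succ]
  split_ifs with h <;> simp [h]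

/-! ### descent conditions for permutations -/

def desCond (n : ℕ) (S : Finset ℕ) (σ : Equiv.Perm (Fin n)) : Prop :=
  ∀ (k : ℕ) (h : k + 1 < n), k + 1 ∉ S → σ ⟨k, by omega⟩ < σ ⟨k + 1, h⟩

lemma desCond_chain {n : ℕ} {S : Finset ℕ} {σ : Equiv.Perm (Fin n)} (hσ : desCond n S σ) :
    ∀ (d : ℕ) (p q : Fin n), q.val = p.val + d + 1 → blkN S p.val = blkN S q.val → σ p < σ q := by
  intro d
  induction d with
  | zero =>
    intro p q hq hblk
    have hq1 : p.val + 1 < n := by have := q.isLt; omega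
    have hnotin : p.val + 1 ∉ S := by
      rw [← blkN_succ_eq_iff, (by omega : p.val + 1 = q.val)]
      exact hblk.symm
    have h := hσ p.val hq1 hnotin
    have e1 : (⟨p.val, by omega⟩ : Fin n) = p := Fin.ext rfl
    have e2 : (⟨p.val + 1, hq1⟩ : Fin n) = q := Fin.ext (show p.val + 1 = q.val by omega)
    rwa [e1, e2] at h
  | succ d ih =>
    intro p q hq hblk
    have hq' : q.val - 1 < n := by have := q.isLt; omega
    set q' : Fin n := ⟨q.val - 1, hq'⟩ with hq'def
    have hble : blkN S p.val ≤ blkN S q'.val := blkN_mono S (by show p.val ≤ q.val - 1; omega)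
    have hble2 : blkN S q'.val ≤ blkN S q.val := blkN_mono S (by show q.val - 1 ≤ q.val; omega)
    have hblk1 : blkN S p.val = blkN S q'.val := by omega
    have hblk2 : blkN S q'.val = blkN S q.val := by omega
    have h1 : σ p < σ q' := ih p q' (by show q.val - 1 = p.val + d + 1; omega) hblk1
    have h2 : σ q' < σ q := by
      have hq1 : q'.val + 1 < n := by have := q.isLt; show q.val - 1 + 1 < n; omega
      have hnotin : q'.val + 1 ∉ S := by
        rw [← blkN_succ_eq_iff]
        have he : q'.val + 1 = q.val := by show q.val - 1 + 1 = q.val; omega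
        rw [he]
        omega
      have h := hσ q'.val hq1 hnotin
      have e1 : (⟨q'.val, by omega⟩ : Fin n) = q' := Fin.ext rfl
      have e2 : (⟨q'.val + 1, hq1⟩ : Fin n) = q := Fin.ext (by show q.val - 1 + 1 = q.val; omega)
      rwa [e1, e2] at h
    exact lt_trans h1 h2

/-! ### the sort bijection -/

open scoped Classical in
noncomputable def pcount (n : ℕ) (S : Finset ℕ) : ℕ :=
  Fintype.card {σ : Equiv.Perm (Fin n) // desCond n S σ}

open scoped Classical in
theorem pcount_eq_fcnt (n : ℕ) (S : Finset ℕ) :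
    pcount n S = fcnt n (S.card + 1) (fun j => fibc (blkF n S) j) := by
  apply Fintype.card_congr
  refine Equiv.mk
    (fun σp => ⟨blkF n S ∘ ⇑(σp.1⁻¹), fun j => fibc_comp_perm _ _ j⟩)
    (fun gp => ⟨Tuple.sort gp.1, ?_⟩) ?_ ?_
  · -- desCond for sort
    obtain ⟨g, hg⟩ := gp
    have hms : Monotone (g ∘ ⇑(Tuple.sort g)) := Tuple.monotone_sort g
    have hgs : g ∘ ⇑(Tuple.sort g) = blkF n S := by
      refine mono_fib_ext hms (blkF_mono n S) ?_
      intro j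
      rw [fibc_comp_perm g (Tuple.sort g) j]
      exact hg j
    have hstab := (Tuple.eq_sort_iff (f := g) (σ := Tuple.sort g)).mp rfl
    intro k hk hkS
    refine hstab.2 ⟨k, by omega⟩ ⟨k + 1, hk⟩ (by simp [Fin.lt_def]) ?_
    have e1 := congr_fun hgs ⟨k, by omega⟩
    have e2 := congr_fun hgs ⟨k + 1, hk⟩
    simp only [Function.comp_apply] at e1 e2
    rw [e1, e2]
    refine Fin.ext ?_
    show blkN S k = blkN S (k + 1)
    rw [blkN_succ_eq_iff S k |>.mpr hkS]
  · -- left inverse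
    rintro ⟨σ, hσ⟩
    apply Subtype.ext
    show Tuple.sort (blkF n S ∘ ⇑(σ⁻¹)) = σ
    refine ((Tuple.eq_sort_iff).mpr ⟨?_, ?_⟩).symm
    · have he : (blkF n S ∘ ⇑(σ⁻¹)) ∘ ⇑σ = blkF n S := by
        funext k
        simp only [Function.comp_apply, Equiv.symm_apply_apply, Equiv.Perm.coe_inv]
      rw [he]
      exact blkF_mono n S
    · intro i j hij heq
      simp only [Function.comp_apply, Equiv.Perm.coe_inv, Equiv.symm_apply_apply] at heq
      have hblk : blkN S i.val = blkN S j.val := by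
        have := congrArg Fin.val heq
        exact this
      exact desCond_chain hσ (j.val - i.val - 1) i j (by have := hij; omega) hblk
  · -- right inverse
    rintro ⟨g, hg⟩
    apply Subtype.ext
    show blkF n S ∘ ⇑((Tuple.sort g)⁻¹) = g
    have hms : Monotone (g ∘ ⇑(Tuple.sort g)) := Tuple.monotone_sort g
    have hgs : g ∘ ⇑(Tuple.sort g) = blkF n S := by
      refine mono_fib_ext hms (blkF_mono n S) ?_
      intro j
      rw [fibc_comp_perm g (Tuple.sort g) j]
      exact hg j
    funext v
    simp only [Function.comp_apply]
    rw [← hgs]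
    simp only [Function.comp_apply, Equiv.Perm.coe_inv, Equiv.apply_symm_apply]


/-! ### computing the block fibers -/

lemma card_filter_val_lt {n : ℕ} (t : ℕ) (ht : t ≤ n) :
    (univ.filter fun k : Fin n => k.val < t).card = t := by
  have h : (univ.filter fun k : Fin n => k.val < t).card = (Finset.range t).card := by
    refine Finset.card_bij' (fun k _ => k.val) (fun m hm => ⟨m, by
        have := Finset.mem_range.mp hm; omega⟩) ?_ ?_ ?_ ?_
    · intro k hk
      simp only [Finset.mem_filter] at hk
      exact Finset.mem_range.mpr hk.2
    · intro m hm
      simp only [Finset.mem_filter, Finset.mem_univ, true_and]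
      exact Finset.mem_range.mp hm
    · intro k _; rfl
    · intro m _; rfl
  rw [h, Finset.card_range]

lemma blkN_singleton (t k : ℕ) : blkN {t} k = if t ≤ k then 1 else 0 := by
  unfold blkN
  rw [Finset.filter_singleton]
  split_ifs <;> simp

lemma fib_singleton (n t : ℕ) (ht : t ≤ n) (j : Fin (({t} : Finset ℕ).card + 1)) :
    fibc (blkF n {t}) j = if j.val = 0 then t else n - t := by
  have hcard : ({t} : Finset ℕ).card = 1 := Finset.card_singleton t
  have h0 : fibc (blkF n {t}) j
      = (univ.filter fun k : Fin n => blkN {t} k.val = j.val).card := by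
    unfold fibc
    congr 1
    apply Finset.filter_congr
    intro k _
    rw [show (blkF n {t} k = j) ↔ ((blkF n {t} k).val = j.val) from Fin.ext_iff]
    exact Iff.rfl
  by_cases hj : j.val = 0
  · rw [if_pos hj, h0]
    have he : (univ.filter fun k : Fin n => blkN {t} k.val = j.val)
        = (univ.filter fun k : Fin n => k.val < t) := by
      apply Finset.filter_congr
      intro k _
      rw [blkN_singleton, hj]
      by_cases h : t ≤ k.val
      · rw [if_pos h]
        exact iff_of_false (by omega) (by omega)
      · rw [if_neg h]
        exact iff_of_true rfl (by omega)
    rw [he, card_filter_val_lt t ht]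
  · rw [if_neg hj, h0]
    have he : (univ.filter fun k : Fin n => blkN {t} k.val = j.val)
        = (univ.filter fun k : Fin n => ¬ k.val < t) := by
      apply Finset.filter_congr
      intro k _
      have hj1 : (j : ℕ) = 1 := by have := j.isLt; omega
      rw [blkN_singleton, hj1]
      by_cases h : t ≤ k.val
      · rw [if_pos h]
        exact iff_of_true rfl (by omega)
      · rw [if_neg h]
        exact iff_of_false (by omega) (by omega)
    rw [he]
    have hsplit := Finset.card_filter_add_card_filter_not
      (s := (univ : Finset (Fin n))) (fun k : Fin n => k.val < t)
    rw [card_filter_val_lt t ht] at hsplit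
    simp only [Finset.card_univ, Fintype.card_fin] at hsplit
    omega

lemma nat_ivt (f : ℕ → ℕ) (hstep : ∀ k, f (k + 1) ≤ f k + 1) (h0 : f 0 = 0) :
    ∀ K j, j ≤ f K → ∃ k ≤ K, f k = j := by
  intro K
  induction K with
  | zero => intro j hj; exact ⟨0, le_rfl, by omega⟩
  | succ K ih =>
    intro j hj
    rcases le_or_gt j (f K) with h | h
    · obtain ⟨k, hk, he⟩ := ih j h
      exact ⟨k, by omega, he⟩
    · have := hstep K
      exact ⟨K + 1, le_rfl, by omega⟩

lemma fib_pos {n : ℕ} (T : Finset ℕ) (hT : T ⊆ Finset.Ico 1 n) (hn : 0 < n)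
    (j : Fin (T.card + 1)) : 0 < fibc (blkF n T) j := by
  have h0 : blkN T 0 = 0 := by
    unfold blkN
    rw [Finset.card_eq_zero]
    ext x
    simp only [Finset.mem_filter, Finset.notMem_empty, iff_false, not_and]
    intro hx hle
    have := hT hx
    rw [Finset.mem_Ico] at this
    omega
  have hlast : blkN T (n - 1) = T.card := by
    unfold blkN
    congr 1
    apply Finset.filter_true_of_mem
    intro x hx
    have := hT hx
    rw [Finset.mem_Ico] at this
    omega
  have hstep : ∀ k, blkN T (k + 1) ≤ blkN T k + 1 := by
    intro k
    rw [blkN_succ]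
    split_ifs <;> omega
  -- intermediate value: ∃ k ≤ n - 1, blkN T k = j.val
  have hexists : ∃ k ≤ n - 1, blkN T k = j.val := by
    have hjle : j.val ≤ T.card := by have := j.isLt; omega
    exact nat_ivt (blkN T) hstep h0 (n - 1) j.val (by omega)
  obtain ⟨k, hk, he⟩ := hexists
  rw [fibc, Finset.card_pos]
  refine ⟨⟨k, by omega⟩, ?_⟩
  simp only [Finset.mem_filter, Finset.mem_univ, true_and]
  exact Fin.ext (by show blkN T k = j.val; exact he)


/-! ### parity of pcount -/

lemma testBit_two_pow_add {a b : ℕ} (hab : a ≠ b) (i : ℕ) :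
    (2 ^ a + 2 ^ b).testBit i = (decide (a = i) || decide (b = i)) := by
  rw [testBit_add_of_disj, Nat.testBit_two_pow, Nat.testBit_two_pow]
  intro i hi
  rw [Nat.testBit_two_pow, Nat.testBit_two_pow] at hi
  simp only [decide_eq_true_eq] at hi
  omega

lemma disj_two {n t s : ℕ} (hts : t + s = n) (ht1 : 1 ≤ t) (htn : t < n)
    (hd : ∀ i, ¬(t.testBit i = true ∧ s.testBit i = true)) :
    Disj (fun j : Fin (({t} : Finset ℕ).card + 1) => fibc (blkF n {t}) j) := by
  intro j k hjk i hc
  have hβj := fib_singleton n t (by omega) j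
  have hβk := fib_singleton n t (by omega) k
  have hcardt : ({t} : Finset ℕ).card = 1 := Finset.card_singleton t
  have hjlt := j.isLt
  have hklt := k.isLt
  have hne : j.val ≠ k.val := fun h => hjk (Fin.ext h)
  have hc1 : (fibc (blkF n {t}) j).testBit i = true := hc.1
  have hc2 : (fibc (blkF n {t}) k).testBit i = true := hc.2
  rw [hβj] at hc1
  rw [hβk] at hc2
  have hs : n - t = s := by omega
  by_cases hj0 : j.val = 0
  · have hk1 : ¬ k.val = 0 := by omega
    rw [if_pos hj0] at hc1
    rw [if_neg hk1, hs] at hc2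
    exact hd i ⟨hc1, hc2⟩
  · have hk0 : k.val = 0 := by omega
    rw [if_neg hj0, hs] at hc1
    rw [if_pos hk0] at hc2
    exact hd i ⟨hc2, hc1⟩

open scoped Classical in
lemma pcount_parity {a b u v n : ℕ} (hu : u = 2 ^ a) (hv : v = 2 ^ b) (hab : a ≠ b)
    (hn : n = u + v) (T : Finset ℕ) (hT : T ⊆ Finset.Ico 1 n) :
    pcount n T % 2 = if T = ∅ ∨ T = {u} ∨ T = {v} then 1 else 0 := by
  have hu1 : 1 ≤ u := by rw [hu]; exact Nat.one_le_two_pow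
  have hv1 : 1 ≤ v := by rw [hv]; exact Nat.one_le_two_pow
  have hn0 : 0 < n := by omega
  have hnbit : ∀ i, n.testBit i = (decide (a = i) || decide (b = i)) := by
    intro i; rw [hn, hu, hv]; exact testBit_two_pow_add hab i
  have hduv : ∀ i, ¬(u.testBit i = true ∧ v.testBit i = true) := by
    intro i hi
    rw [hu, Nat.testBit_two_pow] at hi
    rw [hv, Nat.testBit_two_pow] at hi
    simp only [decide_eq_true_eq] at hi
    omega
  rw [pcount_eq_fcnt, fcnt_mod_two]
  have hsumβ : (∑ j, fibc (blkF n T) j) = n := sum_fibc _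
  have hmain : Disj (fun j : Fin (T.card + 1) => fibc (blkF n T) j)
      ↔ (T = ∅ ∨ T = {u} ∨ T = {v}) := by
    constructor
    · intro hD
      have hpos : ∀ j : Fin (T.card + 1), 0 < fibc (blkF n T) j := fun j => fib_pos T hT hn0 j
      have hch : ∀ j : Fin (T.card + 1), ∃ i, (fibc (blkF n T) j).testBit i = true := by
        intro j
        obtain ⟨i, hi, -⟩ := Nat.exists_most_significant_bit
          (by have := hpos j; omega : fibc (blkF n T) j ≠ 0)
        exact ⟨i, hi⟩
      choose bitf hbit using hch
      have hmem : ∀ j, bitf j ∈ ({a, b} : Finset ℕ) := by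
        intro j
        have h1 : (∑ j', fibc (blkF n T) j').testBit (bitf j) = true :=
          (testBit_sum_disj hD univ (bitf j)).mpr ⟨j, Finset.mem_univ j, hbit j⟩
        rw [hsumβ, hnbit] at h1
        simp only [Bool.or_eq_true, decide_eq_true_eq] at h1
        simp only [Finset.mem_insert, Finset.mem_singleton]
        omega
      have hinj : Set.InjOn bitf (univ : Finset (Fin (T.card + 1))) := by
        intro j _ k _ hjk
        by_contra hne
        exact hD j k hne (bitf j) ⟨hbit j, hjk ▸ hbit k⟩
      have hcard2 : T.card + 1 ≤ 2 := by
        have hle := Finset.card_le_card_of_injOn bitf (fun j _ => hmem j) hinj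
        simp only [Finset.card_univ, Fintype.card_fin] at hle
        have h2 : ({a, b} : Finset ℕ).card ≤ 2 :=
          (Finset.card_insert_le a {b}).trans (by simp)
        omega
      rcases Nat.lt_or_ge T.card 1 with h1 | h1
      · left
        exact Finset.card_eq_zero.mp (by omega)
      · have hc1 : T.card = 1 := by omega
        obtain ⟨t, rfl⟩ := Finset.card_eq_one.mp hc1
        have ht1 : 1 ≤ t ∧ t < n := by
          have := hT (Finset.mem_singleton_self t)
          rwa [Finset.mem_Ico] at this
        have hβ0 : fibc (blkF n {t}) ⟨0, by omega⟩ = t := by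
          rw [fib_singleton n t (by omega)]
          rw [if_pos rfl]
        have htb : ∀ i, t.testBit i = true → (a = i ∨ b = i) := by
          intro i hi
          have h1 : (∑ j', fibc (blkF n {t}) j').testBit i = true :=
            (testBit_sum_disj hD univ i).mpr ⟨⟨0, by omega⟩, Finset.mem_univ _, by
              rw [hβ0]; exact hi⟩
          rw [hsumβ, hnbit] at h1
          simpa using h1
        right
        by_cases hta : t.testBit a = true <;> by_cases htbb : t.testBit b = true
        · exfalso
          have ht : t = n := by
            apply Nat.eq_of_testBit_eq
            intro i
            rw [hnbit i]
            by_cases hia : a = i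
            · subst hia; simp [hta]
            · by_cases hib : b = i
              · subst hib; simp [htbb]
              · simp only [hia, hib, decide_false, Bool.or_false]
                by_contra hcon
                rcases htb i (by simpa using hcon) with h | h
                · exact hia h
                · exact hib h
          omega
        · left
          have ht : t = u := by
            rw [hu]
            apply Nat.eq_of_testBit_eq
            intro i
            rw [Nat.testBit_two_pow]
            by_cases hia : a = i
            · subst hia; simp [hta]
            · simp only [hia, decide_false]
              by_contra hcon
              rcases htb i (by simpa using hcon) with h | h
              · exact hia h
              · rw [← h] at hcon
                simp [htbb] at hcon
          rw [ht]
        · right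
          have ht : t = v := by
            rw [hv]
            apply Nat.eq_of_testBit_eq
            intro i
            rw [Nat.testBit_two_pow]
            by_cases hib : b = i
            · subst hib; simp [htbb]
            · simp only [hib, decide_false]
              by_contra hcon
              rcases htb i (by simpa using hcon) with h | h
              · rw [← h] at hcon
                simp [hta] at hcon
              · exact hib h
          rw [ht]
        · exfalso
          have ht : t = 0 := by
            apply Nat.eq_of_testBit_eq
            intro i
            rw [Nat.zero_testBit]
            by_contra hcon
            rcases htb i (by simpa using hcon) with h | h
            · rw [← h] at hcon
              simp [hta] at hcon
            · rw [← h] at hcon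
              simp [htbb] at hcon
          omega
    · rintro (rfl | rfl | rfl)
      · intro j k hjk i hc
        refine absurd (Fin.ext ?_ : j = k) hjk
        have h1 := j.isLt
        have h2 := k.isLt
        simp only [Finset.card_empty] at h1 h2
        omega
      · exact disj_two (by omega) hu1 (by omega) hduv
      · exact disj_two (by omega) hv1 (by omega) (fun i hi => hduv i ⟨hi.2, hi.1⟩)
  by_cases hcase : T = ∅ ∨ T = {u} ∨ T = {v}
  · rw [if_pos ⟨hsumβ, hmain.mpr hcase⟩, if_pos hcase]
  · rw [if_neg (fun h => hcase (hmain.mp h.2)), if_neg hcase]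


/-! ### exact descent sets and Moebius inversion mod 2 -/

def desSet (n : ℕ) (σ : Equiv.Perm (Fin n)) : Finset ℕ :=
  (Finset.Ico 1 n).filter fun i =>
    if h : i < n ∧ 1 ≤ i then σ ⟨i, h.1⟩ < σ ⟨i - 1, by omega⟩ else False

open scoped Classical in
noncomputable def rcountP (n : ℕ) (S : Finset ℕ) : ℕ :=
  Fintype.card {σ : Equiv.Perm (Fin n) // desSet n σ = S}

lemma desSet_subset_iff (n : ℕ) (S : Finset ℕ) (σ : Equiv.Perm (Fin n)) :
    desSet n σ ⊆ S ↔ desCond n S σ := by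
  constructor
  · intro h k hk hkS
    by_contra hlt
    have hne : σ ⟨k, by omega⟩ ≠ σ ⟨k + 1, hk⟩ := by
      intro he
      have := σ.injective he
      have := congrArg Fin.val this
      simp only at this
      omega
    have hdes : σ ⟨k + 1, hk⟩ < σ ⟨k, by omega⟩ := by
      rcases lt_or_ge (σ ⟨k + 1, hk⟩) (σ ⟨k, by omega⟩) with hh | hh
      · exact hh
      · exact absurd (lt_of_le_of_ne hh hne) hlt
    refine hkS (h ?_)
    simp only [desSet, Finset.mem_filter, Finset.mem_Ico]
    refine ⟨⟨by omega, by omega⟩, ?_⟩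
    rw [dif_pos ⟨by omega, by omega⟩]
    exact lt_of_lt_of_eq (lt_of_eq_of_lt (congrArg σ (Fin.ext rfl)) hdes)
      (congrArg σ (Fin.ext (by show k = k + 1 - 1; omega)))
  · intro hC i hi
    simp only [desSet, Finset.mem_filter, Finset.mem_Ico] at hi
    obtain ⟨⟨hi1, hi2⟩, hdes⟩ := hi
    rw [dif_pos ⟨hi2, hi1⟩] at hdes
    by_contra hiS
    have hstep := hC (i - 1) (by omega) (by rw [(by omega : i - 1 + 1 = i)]; exact hiS)
    have he1 : σ ⟨i - 1 + 1, by omega⟩ = σ ⟨i, hi2⟩ :=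
      congrArg σ (Fin.ext (by show i - 1 + 1 = i; omega))
    rw [he1] at hstep
    exact absurd hdes (not_lt_of_gt hstep)

open scoped Classical in
lemma pcount_eq_sum_rcount (n : ℕ) (S : Finset ℕ) :
    pcount n S = ∑ T ∈ S.powerset, rcountP n T := by
  have h1 : pcount n S = (univ.filter fun σ : Equiv.Perm (Fin n) => desSet n σ ⊆ S).card := by
    rw [pcount, Fintype.card_subtype]
    congr 1
    apply Finset.filter_congr
    intro σ _
    exact (desSet_subset_iff n S σ).symm
  rw [h1, Finset.card_eq_sum_card_fiberwise
    (f := fun σ => desSet n σ) (t := S.powerset) ?_]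
  · refine Finset.sum_congr rfl fun T hT => ?_
    rw [Finset.mem_powerset] at hT
    rw [rcountP, Fintype.card_subtype, Finset.filter_filter]
    congr 1
    apply Finset.filter_congr
    intro σ _
    constructor
    · rintro ⟨_, h⟩; exact h
    · intro h; exact ⟨h ▸ hT, h⟩
  · intro σ hσ
    simp only [Finset.mem_coe, Finset.mem_filter] at hσ
    exact Finset.mem_powerset.mpr hσ.2

open scoped Classical in
lemma rcount_zmod (n : ℕ) (S : Finset ℕ) :
    (rcountP n S : ZMod 2) = ∑ T ∈ S.powerset, (pcount n T : ZMod 2) := by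
  have key : ∀ T ∈ S.powerset, (pcount n T : ZMod 2)
      = ∑ U ∈ S.powerset, (if U ⊆ T then (rcountP n U : ZMod 2) else 0) := by
    intro T hT
    rw [Finset.mem_powerset] at hT
    rw [pcount_eq_sum_rcount, Nat.cast_sum, ← Finset.sum_filter]
    refine Finset.sum_congr ?_ fun U _ => rfl
    ext U
    simp only [Finset.mem_powerset, Finset.mem_filter]
    constructor
    · intro h; exact ⟨le_trans h hT, h⟩
    · rintro ⟨_, h⟩; exact h
  rw [Finset.sum_congr rfl key, Finset.sum_comm]
  have inner : ∀ U ∈ S.powerset,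
      (∑ T ∈ S.powerset, if U ⊆ T then (rcountP n U : ZMod 2) else 0)
      = (if U = S then (rcountP n U : ZMod 2) else 0) := by
    intro U hU
    rw [Finset.mem_powerset] at hU
    rw [← Finset.sum_filter]
    have hfil : S.powerset.filter (fun T => U ⊆ T) = Finset.Icc U S := by
      ext T
      simp only [Finset.mem_powerset, Finset.mem_filter, Finset.mem_Icc]
      constructor
      · rintro ⟨h1, h2⟩; exact ⟨h2, h1⟩
      · rintro ⟨h1, h2⟩; exact ⟨h2, h1⟩
    rw [hfil, Finset.sum_const, Finset.card_Icc_finset hU, nsmul_eq_mul]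
    by_cases hUS : U = S
    · subst hUS
      simp
    · have hlt : U.card < S.card := Finset.card_lt_card (lt_of_le_of_ne hU hUS)
      have hex : S.card - U.card = (S.card - U.card - 1) + 1 := by omega
      rw [if_neg hUS, hex, pow_succ, Nat.cast_mul,
        show ((2 : ℕ) : ZMod 2) = 0 by decide, mul_zero, zero_mul]
  rw [Finset.sum_congr rfl inner, Finset.sum_ite_eq' S.powerset S]
  rw [if_pos (Finset.mem_powerset.mpr le_rfl)]

open scoped Classical in
lemma rcount_parity {a b u v n : ℕ} (hu : u = 2 ^ a) (hv : v = 2 ^ b) (hab : a ≠ b)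
    (hn : n = u + v) (S : Finset ℕ) (hS : S ⊆ Finset.Ico 1 n) :
    (rcountP n S : ZMod 2)
      = 1 + (if u ∈ S then 1 else 0) + (if v ∈ S then 1 else 0) := by
  have huv : u ≠ v := by
    rw [hu, hv]
    intro h
    exact hab (Nat.pow_right_injective le_rfl h)
  rw [rcount_zmod]
  have hterm : ∀ T ∈ S.powerset, (pcount n T : ZMod 2)
      = (if T = ∅ then 1 else 0) + (if T = {u} then 1 else 0) + (if T = {v} then 1 else 0) := by
    intro T hT
    rw [Finset.mem_powerset] at hT
    have hp := pcount_parity hu hv hab hn T (le_trans hT hS)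
    have hcast : (pcount n T : ZMod 2) = ((pcount n T % 2 : ℕ) : ZMod 2) :=
      (ZMod.natCast_mod _ 2).symm
    rw [hcast, hp]
    by_cases h1 : T = ∅
    · subst h1
      rw [if_pos (Or.inl rfl), if_pos rfl,
        if_neg (fun h => Finset.singleton_ne_empty u h.symm),
        if_neg (fun h => Finset.singleton_ne_empty v h.symm)]
      simp
    · by_cases h2 : T = {u}
      · subst h2
        rw [if_pos (Or.inr (Or.inl rfl)), if_neg h1, if_pos rfl,
          if_neg (fun h => huv (Finset.singleton_injective h))]
        simp
      · by_cases h3 : T = {v}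
        · subst h3
          rw [if_pos (Or.inr (Or.inr rfl)), if_neg h1, if_neg h2, if_pos rfl]
          simp
        · rw [if_neg (by tauto), if_neg h1, if_neg h2, if_neg h3]
          simp
  rw [Finset.sum_congr rfl hterm, Finset.sum_add_distrib, Finset.sum_add_distrib]
  have e1 : (∑ T ∈ S.powerset, if T = ∅ then (1 : ZMod 2) else 0) = 1 := by
    rw [Finset.sum_ite_eq' S.powerset (∅ : Finset ℕ) (fun _ => (1 : ZMod 2))]
    rw [if_pos (Finset.empty_mem_powerset S)]
  have e2 : (∑ T ∈ S.powerset, if T = {u} then (1 : ZMod 2) else 0)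
      = if u ∈ S then 1 else 0 := by
    rw [Finset.sum_ite_eq' S.powerset ({u} : Finset ℕ) (fun _ => (1 : ZMod 2))]
    congr 1
    rw [Finset.mem_powerset, Finset.singleton_subset_iff]
  have e3 : (∑ T ∈ S.powerset, if T = {v} then (1 : ZMod 2) else 0)
      = if v ∈ S then 1 else 0 := by
    rw [Finset.sum_ite_eq' S.powerset ({v} : Finset ℕ) (fun _ => (1 : ZMod 2))]
    congr 1
    rw [Finset.mem_powerset, Finset.singleton_subset_iff]
  rw [e1, e2, e3]



end RibbonAux

/-! ### the statement definitions -/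

/-- Permutations of `{1, ..., n}`, modeled as functions `ℕ → ℕ` that restrict to a
bijection of `{1, ..., n}` and fix everything else. -/
def PermsA (n : ℕ) : Set (ℕ → ℕ) :=
  {w | Set.BijOn w (Set.Icc 1 n) (Set.Icc 1 n) ∧ ∀ i ∉ Set.Icc 1 n, w i = i}

/-- The descent set `D(w) = {i ∈ [n-1] : w(i) > w(i+1)}`. -/
def DesA (n : ℕ) (w : ℕ → ℕ) : Set ℕ :=
  {i | 1 ≤ i ∧ i < n ∧ w (i + 1) < w i}

/-- The descent set `D(α) = {α₁, α₁+α₂, …, α₁+⋯+α_{ℓ-1}}` of a composition `α` of `n`. -/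
def DsetA {n : ℕ} (α : Composition n) : Set ℕ :=
  {m | ∃ i, 0 < i ∧ i < α.length ∧ α.sizeUpTo i = m}

/-- The type A ribbon number `r_α = |{w ∈ S_n : D(w) = D(α)}|`. -/
noncomputable def ribbonA {n : ℕ} (α : Composition n) : ℕ :=
  Set.ncard {w ∈ PermsA n | DesA n w = DsetA α}

namespace RibbonAux

/-! ### relating the ℕ → ℕ model to permutations of Fin n -/

def wfun (n : ℕ) (σ : Equiv.Perm (Fin n)) : ℕ → ℕ :=
  fun i => if h : 1 ≤ i ∧ i ≤ n then (σ ⟨i - 1, by omega⟩).val + 1 else i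

lemma wfun_apply (n : ℕ) (σ : Equiv.Perm (Fin n)) {i : ℕ} (j : Fin n) (hij : i = j.val + 1) :
    wfun n σ i = (σ j).val + 1 := by
  simp only [wfun]
  have h1 : 1 ≤ i ∧ i ≤ n := ⟨by omega, by have := j.isLt; omega⟩
  rw [dif_pos h1]
  exact congrArg (fun x => (σ x).val + 1) (Fin.ext (by show i - 1 = j.val; omega))

lemma wfun_not (n : ℕ) (σ : Equiv.Perm (Fin n)) {i : ℕ} (h : ¬(1 ≤ i ∧ i ≤ n)) :
    wfun n σ i = i := by
  simp only [wfun]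
  rw [dif_neg h]

lemma wfun_mem (n : ℕ) (σ : Equiv.Perm (Fin n)) : wfun n σ ∈ PermsA n := by
  constructor
  · refine ⟨?_, ?_, ?_⟩
    · intro i hi
      rw [Set.mem_Icc] at hi ⊢
      set x : Fin n := ⟨i - 1, by omega⟩ with hx
      rw [wfun_apply n σ x (by show i = i - 1 + 1; omega)]
      have := (σ x).isLt
      omega
    · intro i hi i' hi' he
      rw [Set.mem_Icc] at hi hi'
      set x : Fin n := ⟨i - 1, by omega⟩ with hx
      set y : Fin n := ⟨i' - 1, by omega⟩ with hy
      rw [wfun_apply n σ x (by show i = i - 1 + 1; omega),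
        wfun_apply n σ y (by show i' = i' - 1 + 1; omega)] at he
      have hxy : x = y := σ.injective (Fin.ext (by omega))
      have hv := congrArg Fin.val hxy
      have hxv : x.val = i - 1 := rfl
      have hyv : y.val = i' - 1 := rfl
      omega
    · intro y hy
      rw [Set.mem_Icc] at hy
      set w' : Fin n := ⟨y - 1, by omega⟩ with hw'
      set z : Fin n := σ.symm w' with hz
      refine ⟨z.val + 1, ?_, ?_⟩
      · rw [Set.mem_Icc]
        have := z.isLt
        omega
      · rw [wfun_apply n σ z rfl]
        have hσz : σ z = w' := Equiv.apply_symm_apply σ w'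
        have hv := congrArg Fin.val hσz
        have hwv : w'.val = y - 1 := rfl
        omega
  · intro i hi
    rw [Set.mem_Icc] at hi
    exact wfun_not n σ (by omega)

lemma wfun_inj (n : ℕ) : Function.Injective (wfun n) := by
  intro σ σ' he
  apply Equiv.ext
  intro j
  have h := congr_fun he (j.val + 1)
  rw [wfun_apply n σ j rfl, wfun_apply n σ' j rfl] at h
  exact Fin.ext (by omega)

lemma wfun_surj (n : ℕ) (w : ℕ → ℕ) (hw : w ∈ PermsA n) : ∃ σ, wfun n σ = w := by
  obtain ⟨⟨hmap, hinj, hsurj⟩, hfix⟩ := hw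
  have hw1 : ∀ i, 1 ≤ i → i ≤ n → 1 ≤ w i ∧ w i ≤ n := by
    intro i h1 h2
    have := hmap (Set.mem_Icc.mpr ⟨h1, h2⟩)
    rwa [Set.mem_Icc] at this
  have hfb : ∀ j : Fin n, w (j.val + 1) - 1 < n := by
    intro j
    have := hw1 (j.val + 1) (by omega) (by have := j.isLt; omega)
    omega
  set f : Fin n → Fin n := fun j => ⟨w (j.val + 1) - 1, hfb j⟩ with hf
  have hfval : ∀ j : Fin n, (f j).val = w (j.val + 1) - 1 := fun j => rfl
  have hfinj : Function.Injective f := by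
    intro j j' he
    have hev := congrArg Fin.val he
    rw [hfval j, hfval j'] at hev
    have h1 := hw1 (j.val + 1) (by omega) (by have := j.isLt; omega)
    have h2 := hw1 (j'.val + 1) (by omega) (by have := j'.isLt; omega)
    have hww : w (j.val + 1) = w (j'.val + 1) := by omega
    have := hinj (Set.mem_Icc.mpr ⟨by omega, by have := j.isLt; omega⟩)
      (Set.mem_Icc.mpr ⟨by omega, by have := j'.isLt; omega⟩) hww
    exact Fin.ext (by omega)
  set σ := Equiv.ofBijective f ((Finite.injective_iff_bijective).mp hfinj) with hσ
  refine ⟨σ, ?_⟩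
  funext i
  by_cases h : 1 ≤ i ∧ i ≤ n
  · set x : Fin n := ⟨i - 1, by omega⟩ with hx
    rw [wfun_apply n σ x (by show i = i - 1 + 1; omega)]
    have happ : σ x = f x := rfl
    have hv : (σ x).val = (f x).val := congrArg Fin.val happ
    have hfx := hfval x
    have hxv : x.val = i - 1 := rfl
    have hwi : w (x.val + 1) = w i := congrArg w (by omega)
    have hb := hw1 i h.1 h.2
    omega
  · rw [wfun_not n σ h]
    exact (hfix i (by rw [Set.mem_Icc]; omega)).symm

lemma mem_desSet_iff {n : ℕ} (σ : Equiv.Perm (Fin n)) {i : ℕ} (p q : Fin n)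
    (hp : i = p.val) (hq : p.val = q.val + 1) :
    i ∈ desSet n σ ↔ σ p < σ q := by
  subst hp
  have h1 : 1 ≤ p.val := by omega
  have h2 : p.val < n := p.isLt
  simp only [desSet, Finset.mem_filter, Finset.mem_Ico]
  rw [dif_pos ⟨h2, h1⟩]
  constructor
  · rintro ⟨-, h⟩
    convert h using 2
    exact Fin.ext (by show q.val = p.val - 1; omega)
  · intro h
    refine ⟨⟨h1, h2⟩, ?_⟩
    convert h using 2
    exact Fin.ext (by show p.val - 1 = q.val; omega)

lemma DesA_wfun (n : ℕ) (σ : Equiv.Perm (Fin n)) :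
    DesA n (wfun n σ) = ↑(desSet n σ) := by
  ext i
  simp only [DesA, Set.mem_setOf_eq, Finset.mem_coe]
  constructor
  · rintro ⟨h1, h2, h3⟩
    set p : Fin n := ⟨i, h2⟩ with hpd
    set q : Fin n := ⟨i - 1, by omega⟩ with hqd
    rw [wfun_apply n σ p rfl, wfun_apply n σ q (by show i = i - 1 + 1; omega)] at h3
    refine (mem_desSet_iff σ p q rfl (by show i = i - 1 + 1; omega)).mpr ?_
    rw [Fin.lt_def]
    omega
  · intro hmem
    have hbounds : 1 ≤ i ∧ i < n := by
      have := (Finset.mem_filter.mp hmem).1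
      rwa [Finset.mem_Ico] at this
    obtain ⟨h1, h2⟩ := hbounds
    set p : Fin n := ⟨i, h2⟩ with hpd
    set q : Fin n := ⟨i - 1, by omega⟩ with hqd
    have h3 := (mem_desSet_iff σ p q rfl (by show i = i - 1 + 1; omega)).mp hmem
    refine ⟨h1, h2, ?_⟩
    rw [wfun_apply n σ p rfl, wfun_apply n σ q (by show i = i - 1 + 1; omega)]
    rw [Fin.lt_def] at h3
    omega

/-! ### the descent finset of a composition -/

open scoped Classical in
noncomputable def dfin {n : ℕ} (α : Composition n) : Finset ℕ :=
  (Finset.Ioo 0 α.length).image α.sizeUpTo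

lemma coe_dfin {n : ℕ} (α : Composition n) : ↑(dfin α) = DsetA α := by
  ext m
  simp only [dfin, Finset.coe_image, Set.mem_image, Finset.mem_coe, Finset.mem_Ioo,
    DsetA, Set.mem_setOf_eq]
  constructor
  · rintro ⟨i, ⟨hi1, hi2⟩, rfl⟩
    exact ⟨i, hi1, hi2, rfl⟩
  · rintro ⟨i, hi1, hi2, rfl⟩
    exact ⟨i, ⟨hi1, hi2⟩, rfl⟩

lemma dfin_subset {n : ℕ} (α : Composition n) : dfin α ⊆ Finset.Ico 1 n := by
  intro m hm
  simp only [dfin, Finset.mem_image, Finset.mem_Ioo] at hm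
  obtain ⟨i, ⟨hi1, hi2⟩, rfl⟩ := hm
  rw [Finset.mem_Ico]
  constructor
  · have h1 : α.sizeUpTo 0 < α.sizeUpTo 1 := α.sizeUpTo_strict_mono (by omega)
    have h2 : α.sizeUpTo 1 ≤ α.sizeUpTo i := α.monotone_sizeUpTo (by omega)
    rw [α.sizeUpTo_zero] at h1
    omega
  · have h1 : α.sizeUpTo i < α.sizeUpTo (i + 1) := α.sizeUpTo_strict_mono hi2
    have h2 : α.sizeUpTo (i + 1) ≤ n := α.sizeUpTo_le _
    omega

lemma ribbonA_eq_rcountP {n : ℕ} (α : Composition n) :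
    ribbonA α = rcountP n (dfin α) := by
  classical
  have hset : {w ∈ PermsA n | DesA n w = DsetA α}
      = wfun n '' {σ : Equiv.Perm (Fin n) | desSet n σ = dfin α} := by
    ext w
    simp only [Set.mem_setOf_eq, Set.mem_image]
    constructor
    · rintro ⟨hw, hdes⟩
      obtain ⟨σ, rfl⟩ := wfun_surj n w hw
      refine ⟨σ, ?_, rfl⟩
      apply Finset.coe_injective
      rw [coe_dfin, ← DesA_wfun, hdes]
    · rintro ⟨σ, hσ, rfl⟩
      refine ⟨wfun_mem n σ, ?_⟩
      rw [DesA_wfun, hσ, coe_dfin]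
  rw [ribbonA, hset, Set.ncard_image_of_injective _ (wfun_inj n)]
  have h2 : {σ : Equiv.Perm (Fin n) | desSet n σ = dfin α}
      = ↑(univ.filter fun σ : Equiv.Perm (Fin n) => desSet n σ = dfin α) := by
    ext σ; simp
  rw [h2, Set.ncard_coe_finset, rcountP, Fintype.card_subtype]

/-! ### dfin is a bijection onto subsets of [1, n-1] -/

lemma mem_boundaries_iff {n : ℕ} (α : Composition n) (j : Fin (n + 1)) :
    j ∈ α.boundaries ↔ (j.val = 0 ∨ j.val = n ∨ j.val ∈ dfin α) := by
  rw [Composition.boundaries, Finset.mem_map]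
  constructor
  · rintro ⟨i, -, rfl⟩
    rcases Nat.eq_zero_or_pos i.val with h0 | hpos
    · left
      show α.sizeUpTo i.val = 0
      rw [h0, α.sizeUpTo_zero]
    · rcases Nat.lt_or_ge i.val α.length with hlt | hge
      · right; right
        simp only [dfin, Finset.mem_image, Finset.mem_Ioo]
        exact ⟨i.val, ⟨hpos, hlt⟩, rfl⟩
      · right; left
        show α.sizeUpTo i.val = n
        exact α.sizeUpTo_ofLength_le i.val hge
  · rintro (h0 | hn | hd)
    · refine ⟨⟨0, by omega⟩, Finset.mem_univ _, ?_⟩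
      apply Fin.ext
      show α.sizeUpTo 0 = j.val
      rw [α.sizeUpTo_zero, h0]
    · refine ⟨⟨α.length, by omega⟩, Finset.mem_univ _, ?_⟩
      apply Fin.ext
      show α.sizeUpTo α.length = j.val
      rw [α.sizeUpTo_length, hn]
    · simp only [dfin, Finset.mem_image, Finset.mem_Ioo] at hd
      obtain ⟨i, ⟨hi1, hi2⟩, he⟩ := hd
      refine ⟨⟨i, by omega⟩, Finset.mem_univ _, ?_⟩
      apply Fin.ext
      show α.sizeUpTo i = j.val
      exact he

lemma dfin_inj {n : ℕ} (α β : Composition n) (h : dfin α = dfin β) : α = β := by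
  have hb : α.boundaries = β.boundaries := by
    ext j
    rw [mem_boundaries_iff, mem_boundaries_iff, h]
  have : α.toCompositionAsSet = β.toCompositionAsSet := by
    apply CompositionAsSet.ext
    rw [α.toCompositionAsSet_boundaries, β.toCompositionAsSet_boundaries, hb]
  exact (compositionEquiv n).injective this

lemma dfin_surj {n : ℕ} (hn : 0 < n) (S : Finset ℕ) (hS : S ⊆ Finset.Ico 1 n) :
    ∃ α : Composition n, dfin α = S := by
  classical
  have hSn : ∀ m ∈ S, m < n + 1 := by
    intro m hm
    have := hS hm
    rw [Finset.mem_Ico] at this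
    omega
  set c : CompositionAsSet n :=
    { boundaries := insert 0 (insert (Fin.last n) (S.attachFin hSn))
      zero_mem := Finset.mem_insert_self _ _
      getLast_mem := Finset.mem_insert_of_mem (Finset.mem_insert_self _ _) } with hc
  refine ⟨c.toComposition, ?_⟩
  have hbd : c.toComposition.boundaries = c.boundaries := c.toComposition_boundaries
  ext m
  constructor
  · intro hm
    have hrange := dfin_subset c.toComposition hm
    rw [Finset.mem_Ico] at hrange
    have hmem : (⟨m, by omega⟩ : Fin (n + 1)) ∈ c.toComposition.boundaries :=
      (mem_boundaries_iff _ _).mpr (Or.inr (Or.inr hm))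
    rw [hbd, hc] at hmem
    simp only [Finset.mem_insert, Finset.mem_attachFin] at hmem
    rcases hmem with h0 | hl | hS'
    · have := congrArg Fin.val h0
      simp only [Fin.val_zero] at this
      omega
    · have := congrArg Fin.val hl
      simp only [Fin.val_last] at this
      omega
    · exact hS'
  · intro hm
    have hrange := hS hm
    rw [Finset.mem_Ico] at hrange
    have hmem : (⟨m, by omega⟩ : Fin (n + 1)) ∈ c.boundaries := by
      rw [hc]
      simp only [Finset.mem_insert, Finset.mem_attachFin]
      right; right
      exact hm
    rw [← hbd] at hmem
    rcases (mem_boundaries_iff _ _).mp hmem with h0 | hn' | hd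
    · simp only at h0
      omega
    · simp only at hn'
      omega
    · exact hd

end RibbonAux

open RibbonAux Finset in
/-- If n = u + v is a sum of two distinct powers of 2, then exactly 2^{n-2} compositions
of n have even ribbon number and exactly 2^{n-2} have odd ribbon number. -/
theorem count_ribbonA_mod_two_sum_two_pows {n u v a b : ℕ}
    (hu : u = 2 ^ a) (hv : v = 2 ^ b) (hab : a ≠ b) (hn : n = u + v) :
    (Finset.univ.filter fun α : Composition n => ribbonA α % 2 = 0).card = 2 ^ (n - 2) ∧
    (Finset.univ.filter fun α : Composition n => ribbonA α % 2 = 1).card = 2 ^ (n - 2) := by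
  classical
  have hu1 : 1 ≤ u := by rw [hu]; exact Nat.one_le_two_pow
  have hv1 : 1 ≤ v := by rw [hv]; exact Nat.one_le_two_pow
  have huv : u ≠ v := by
    rw [hu, hv]
    intro h
    exact hab (Nat.pow_right_injective le_rfl h)
  have hn2 : 2 ≤ n := by omega
  have hcrit : ∀ α : Composition n, ribbonA α % 2 = 1 ↔ (u ∈ dfin α ↔ v ∈ dfin α) := by
    intro α
    rw [ribbonA_eq_rcountP]
    have hz := rcount_parity hu hv hab hn (dfin α) (dfin_subset α)
    have hiff : rcountP n (dfin α) % 2 = 1 ↔ ((rcountP n (dfin α) : ZMod 2) = 1) := by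
      rw [show (1 : ZMod 2) = ((1 : ℕ) : ZMod 2) by simp]
      rw [ZMod.natCast_eq_natCast_iff']
    rw [hiff, hz]
    by_cases h1 : u ∈ dfin α <;> by_cases h2 : v ∈ dfin α <;>
      simp only [h1, h2, if_true, if_false, iff_self, true_iff, iff_true, false_iff,
        iff_false, not_true, not_false_iff] <;> first | decide | (constructor <;> intro h <;>
          first | rfl | (exfalso; revert h; decide) | tauto)
  have htrans : (univ.filter fun α : Composition n => (u ∈ dfin α ↔ v ∈ dfin α)).card
      = ((Finset.Ico 1 n).powerset.filter fun S => (u ∈ S ↔ v ∈ S)).card := by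
    refine Finset.card_bij (fun α _ => dfin α) ?_ ?_ ?_
    · intro α hα
      simp only [Finset.mem_filter, Finset.mem_univ, true_and] at hα ⊢
      exact ⟨Finset.mem_powerset.mpr (dfin_subset α), hα⟩
    · intro α _ β _ h
      exact dfin_inj α β h
    · intro S hS
      simp only [Finset.mem_filter, Finset.mem_powerset] at hS
      obtain ⟨α, rfl⟩ := dfin_surj (by omega) S hS.1
      exact ⟨α, by simp only [Finset.mem_filter, Finset.mem_univ, true_and]; exact hS.2, rfl⟩
  have humem : u ∈ Finset.Ico 1 n := Finset.mem_Ico.mpr ⟨hu1, by omega⟩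
  have hflip : ∀ S ∈ (Finset.Ico 1 n).powerset,
      (if u ∈ S then S.erase u else insert u S) ∈ (Finset.Ico 1 n).powerset
      ∧ (v ∈ (if u ∈ S then S.erase u else insert u S) ↔ v ∈ S)
      ∧ (u ∈ (if u ∈ S then S.erase u else insert u S) ↔ u ∉ S)
      ∧ (if u ∈ (if u ∈ S then S.erase u else insert u S)
          then (if u ∈ S then S.erase u else insert u S).erase u
          else insert u (if u ∈ S then S.erase u else insert u S)) = S := by
    intro S hS
    rw [Finset.mem_powerset] at hS
    by_cases hus : u ∈ S
    · rw [if_pos hus]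
      have hu' : u ∉ S.erase u := Finset.notMem_erase u S
      refine ⟨?_, ?_, ?_, ?_⟩
      · exact Finset.mem_powerset.mpr ((Finset.erase_subset u S).trans hS)
      · simp [Finset.mem_erase, Ne.symm huv, hus]
      · simp [hu', hus]
      · rw [if_neg hu', Finset.insert_erase hus]
    · rw [if_neg hus]
      refine ⟨?_, ?_, ?_, ?_⟩
      · exact Finset.mem_powerset.mpr (Finset.insert_subset humem hS)
      · simp [Finset.mem_insert, Ne.symm huv]
      · simp [hus]
      · rw [if_pos (Finset.mem_insert_self u S), Finset.erase_insert hus]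
  have hhalf : (((Finset.Ico 1 n).powerset).filter fun S => (u ∈ S ↔ v ∈ S)).card
      = 2 ^ (n - 2) := by
    have hAB : (((Finset.Ico 1 n).powerset).filter fun S => (u ∈ S ↔ v ∈ S)).card
        = (((Finset.Ico 1 n).powerset).filter fun S => ¬(u ∈ S ↔ v ∈ S)).card := by
      refine Finset.card_bij' (fun S _ => if u ∈ S then S.erase u else insert u S)
        (fun S _ => if u ∈ S then S.erase u else insert u S) ?_ ?_ ?_ ?_
      · intro S hSf
        simp only [Finset.mem_filter] at hSf ⊢
        obtain ⟨hmem, hvi, hui, _⟩ := hflip S hSf.1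
        refine ⟨hmem, ?_⟩
        rw [hui, hvi]
        tauto
      · intro S hSf
        simp only [Finset.mem_filter] at hSf ⊢
        obtain ⟨hmem, hvi, hui, _⟩ := hflip S hSf.1
        refine ⟨hmem, ?_⟩
        rw [hui, hvi]
        tauto
      · intro S hSf
        simp only [Finset.mem_filter] at hSf
        exact (hflip S hSf.1).2.2.2
      · intro S hSf
        simp only [Finset.mem_filter] at hSf
        exact (hflip S hSf.1).2.2.2
    have hsplit := Finset.card_filter_add_card_filter_not
      (s := (Finset.Ico 1 n).powerset) (fun S => (u ∈ S ↔ v ∈ S))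
    have hPcard : ((Finset.Ico 1 n).powerset).card = 2 ^ (n - 1) := by
      rw [Finset.card_powerset, Nat.card_Ico]
    have hpow : 2 ^ (n - 1) = 2 ^ (n - 2) + 2 ^ (n - 2) := by
      rw [show n - 1 = (n - 2) + 1 by omega, pow_succ]
      ring
    omega
  have h1 : (univ.filter fun α : Composition n => ribbonA α % 2 = 1).card = 2 ^ (n - 2) := by
    have he : (univ.filter fun α : Composition n => ribbonA α % 2 = 1)
        = univ.filter fun α : Composition n => (u ∈ dfin α ↔ v ∈ dfin α) :=
      Finset.filter_congr (fun α _ => by rw [hcrit α])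
    rw [he, htrans, hhalf]
  refine ⟨?_, h1⟩
  have he0 : (univ.filter fun α : Composition n => ribbonA α % 2 = 0)
      = univ.filter fun α : Composition n => ¬ (ribbonA α % 2 = 1) :=
    Finset.filter_congr (fun α _ => by omega)
  have hsplit := Finset.card_filter_add_card_filter_not
    (s := (univ : Finset (Composition n))) (fun α => ribbonA α % 2 = 1)
  have hucard : (univ : Finset (Composition n)).card = 2 ^ (n - 1) := by
    rw [Finset.card_univ, composition_card]
  have hpow : 2 ^ (n - 1) = 2 ^ (n - 2) + 2 ^ (n - 2) := by
    rw [show n - 1 = (n - 2) + 1 by omega, pow_succ]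
    ring
  rw [he0]
  omega
end

section
/- Suppose n = u + v where u and v are distinct nonnegative powers of an odd prime p. Then among the 2^{n-1} compositions α of n: exactly 2^{n-2} satisfy r_α ≡ 0 (mod p), exactly 2^{n-3} satisfy r_α ≡ 1 (mod p), exactly 2^{n-3} satisfy r_α ≡ -1 (mod p), and no composition has r_α in any other residue class mod p. -/
open Finset

/-- value of σ at j, as ℕ (0-indexed); identity outside range. -/
def pval (n : ℕ) (σ : Equiv.Perm (Fin n)) (j : ℕ) : ℕ :=
  if h : j < n then (σ ⟨j, h⟩ : ℕ) else j

/-- 0-indexed descent set of a `Fin n` permutation, as positions `i ∈ (0,n)`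
with `σ i < σ (i-1)`. -/
def desF (n : ℕ) (σ : Equiv.Perm (Fin n)) : Finset ℕ :=
  (Finset.Ioo 0 n).filter fun i => pval n σ i < pval n σ (i - 1)

lemma pval_eq (n : ℕ) (σ : Equiv.Perm (Fin n)) (j : ℕ) (h : j < n) :
    pval n σ j = (σ ⟨j, h⟩ : ℕ) := dif_pos h

lemma mem_desF {n : ℕ} {σ : Equiv.Perm (Fin n)} {i : ℕ} :
    i ∈ desF n σ ↔ 0 < i ∧ i < n ∧ pval n σ i < pval n σ (i - 1) := by
  simp [desF, and_assoc]

lemma pval_lt_pval {n : ℕ} (σ : Equiv.Perm (Fin n)) {i j : ℕ} (hij : i < j) (hj : j < n)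
    (h : ∀ k, i < k → k ≤ j → k ∉ desF n σ) : pval n σ i < pval n σ j := by
  induction j, hij using Nat.le_induction with
  | base =>
    have h1 : i + 1 ∉ desF n σ := h (i + 1) (Nat.lt_succ_self i) le_rfl
    rw [mem_desF] at h1
    push_neg at h1
    have h2 := h1 (Nat.succ_pos i) hj
    rcases lt_or_eq_of_le h2 with h3 | h3
    · simpa using h3
    · exfalso
      have hi : i < n := by omega
      rw [pval_eq n σ (i+1) hj] at h3
      have : (i + 1) - 1 = i := by omega
      rw [this, pval_eq n σ i hi] at h3
      have := σ.injective (Fin.val_injective h3)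
      simp only [Fin.mk.injEq] at this
      omega
  | succ m hm ih =>
    have h1 : pval n σ i < pval n σ m := ih (by omega) (fun k hk hk' => h k hk (by omega))
    have h2 : m + 1 ∉ desF n σ := h (m + 1) (by omega) le_rfl
    rw [mem_desF] at h2
    push_neg at h2
    have h3 := h2 (Nat.succ_pos m) hj
    have hmn : m < n := by omega
    have hne : pval n σ (m+1) ≠ pval n σ m := by
      rw [pval_eq n σ (m+1) hj, pval_eq n σ m hmn]
      intro hc
      have := σ.injective (Fin.val_injective hc)
      simp only [Fin.mk.injEq] at this
      omega
    have : (m + 1) - 1 = m := by omega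
    rw [this] at h3 h2
    omega

lemma pval_strictMono {n : ℕ} (σ : Equiv.Perm (Fin n)) (hdes : desF n σ = ∅) :
    StrictMono σ := by
  intro a b hab
  have := pval_lt_pval σ (i := a) (j := b) hab b.isLt (fun k _ _ => by simp [hdes])
  rwa [pval_eq n σ a a.isLt, pval_eq n σ b b.isLt, Fin.eta, Fin.eta, ← Fin.lt_iff_val_lt_val]
    at this

/-- the count of permutations of `Fin n` with descent set contained in `T`. -/
def Ac (n : ℕ) (T : Finset ℕ) : ℕ :=
  (univ.filter fun σ : Equiv.Perm (Fin n) => desF n σ ⊆ T).card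

lemma desF_one (n : ℕ) : desF n 1 = ∅ := by
  ext i
  simp only [mem_desF, Finset.notMem_empty, iff_false, not_and]
  intro h1 h2
  rw [pval_eq n 1 i h2, pval_eq n 1 (i-1) (by omega)]
  simp only [Equiv.Perm.one_apply]
  omega

lemma Ac_empty (n : ℕ) : Ac n ∅ = 1 := by
  have : (univ.filter fun σ : Equiv.Perm (Fin n) => desF n σ ⊆ (∅ : Finset ℕ)) = {1} := by
    ext σ
    simp only [Finset.mem_filter, Finset.mem_univ, true_and, Finset.subset_empty,
      Finset.mem_singleton]
    constructor
    · intro h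
      have hsm := pval_strictMono σ h
      have hiso : Fin n ≃o Fin n :=
        StrictMono.orderIsoOfSurjective σ hsm σ.surjective
      have : (StrictMono.orderIsoOfSurjective σ hsm σ.surjective) = OrderIso.refl (Fin n) :=
        Subsingleton.elim _ _
      apply Equiv.ext
      intro j
      have := congrArg (fun e : Fin n ≃o Fin n => e j) this
      simpa using this
    · rintro rfl
      exact desF_one n
  rw [Ac, this, Finset.card_singleton]
section InsertLemma

open Finset

variable {n t : ℕ}

/-- image of the first `t` positions. -/
def fwdB (h : t ≤ n) (σ : Equiv.Perm (Fin n)) : Finset (Fin n) :=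
  (univ : Finset (Fin t)).image (fun j => σ (Fin.castLE h j))

lemma fwdB_card (h : t ≤ n) (σ : Equiv.Perm (Fin n)) : (fwdB h σ).card = t := by
  have : Function.Injective (fun j => σ (Fin.castLE h j)) :=
    σ.injective.comp (Fin.castLE_injective h)
  rw [fwdB, Finset.card_image_of_injective _ this, card_univ, Fintype.card_fin]

lemma mem_fwdB (h : t ≤ n) (σ : Equiv.Perm (Fin n)) (j : Fin t) :
    σ (Fin.castLE h j) ∈ fwdB h σ :=
  Finset.mem_image_of_mem _ (Finset.mem_univ j)

/-- standardization of `σ` on first `t` positions, as a function. -/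
def fwdg (h : t ≤ n) (σ : Equiv.Perm (Fin n)) : Fin t → Fin t := fun j =>
  ((fwdB h σ).orderIsoOfFin (fwdB_card h σ)).symm ⟨σ (Fin.castLE h j), mem_fwdB h σ j⟩

lemma fwdg_inj (h : t ≤ n) (σ : Equiv.Perm (Fin n)) : Function.Injective (fwdg h σ) := by
  intro j j' hjj
  have := ((fwdB h σ).orderIsoOfFin (fwdB_card h σ)).symm.injective hjj
  have h2 : σ (Fin.castLE h j) = σ (Fin.castLE h j') := congrArg Subtype.val this
  exact Fin.castLE_injective h (σ.injective h2)

/-- standardization of `σ` on first `t` positions, as a permutation. -/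
noncomputable def fwdτ (h : t ≤ n) (σ : Equiv.Perm (Fin n)) : Equiv.Perm (Fin t) :=
  Equiv.ofBijective _ (Finite.injective_iff_bijective.mp (fwdg_inj h σ))

lemma fwdτ_apply (h : t ≤ n) (σ : Equiv.Perm (Fin n)) (j : Fin t) :
    fwdτ h σ j = ((fwdB h σ).orderIsoOfFin (fwdB_card h σ)).symm
      ⟨σ (Fin.castLE h j), mem_fwdB h σ j⟩ := rfl

lemma fwdτ_lt_iff (h : t ≤ n) (σ : Equiv.Perm (Fin n)) (j j' : Fin t) :
    fwdτ h σ j < fwdτ h σ j' ↔ σ (Fin.castLE h j) < σ (Fin.castLE h j') := by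
  rw [fwdτ_apply, fwdτ_apply, OrderIso.lt_iff_lt, Subtype.mk_lt_mk]

lemma desF_fwdτ (h : t ≤ n) (σ : Equiv.Perm (Fin n)) :
    desF t (fwdτ h σ) ⊆ desF n σ := by
  intro i hi
  rw [mem_desF] at hi
  obtain ⟨hi0, hit, hdes⟩ := hi
  have hin : i < n := lt_of_lt_of_le hit h
  have hi1t : i - 1 < t := by omega
  rw [mem_desF]
  refine ⟨hi0, hin, ?_⟩
  rw [pval_eq t _ i hit, pval_eq t _ (i-1) hi1t] at hdes
  rw [pval_eq n σ i hin, pval_eq n σ (i-1) (by omega)]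
  have := (fwdτ_lt_iff h σ ⟨i, hit⟩ ⟨i - 1, hi1t⟩).mp (by exact_mod_cast hdes)
  have h1 : Fin.castLE h ⟨i, hit⟩ = ⟨i, hin⟩ := rfl
  have h2 : Fin.castLE h ⟨i - 1, hi1t⟩ = (⟨i - 1, by omega⟩ : Fin n) := rfl
  rw [h1, h2] at this
  exact_mod_cast this

variable {B : Finset (Fin n)}

lemma compl_card (hB : B.card = t) : Bᶜ.card = n - t := by
  rw [Finset.card_compl, hB, Fintype.card_fin]

/-- inverse construction: glue a `t`-subset (increasing) with a pattern. -/
def bwdf (hB : B.card = t) (τ : Equiv.Perm (Fin t)) : Fin n → Fin n := fun j =>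
  if hj : (j : ℕ) < t then (B.orderIsoOfFin hB (τ ⟨j, hj⟩) : Fin n)
  else (Bᶜ.orderIsoOfFin (compl_card hB) ⟨(j : ℕ) - t, by omega⟩ : Fin n)

lemma bwdf_inj (hB : B.card = t) (τ : Equiv.Perm (Fin t)) : Function.Injective (bwdf hB τ) := by
  intro j j' hjj
  unfold bwdf at hjj
  by_cases hj : (j : ℕ) < t <;> by_cases hj' : (j' : ℕ) < t
  · rw [dif_pos hj, dif_pos hj'] at hjj
    have := ((B.orderIsoOfFin hB).injective (Subtype.coe_injective hjj))
    have := τ.injective this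
    simp only [Fin.mk.injEq] at this
    exact Fin.ext this
  · rw [dif_pos hj, dif_neg hj'] at hjj
    exfalso
    have h1 : (B.orderIsoOfFin hB (τ ⟨j, hj⟩) : Fin n) ∈ B := (B.orderIsoOfFin hB (τ ⟨j, hj⟩)).2
    have h2 : ((Bᶜ.orderIsoOfFin (compl_card hB) ⟨(j' : ℕ) - t, by omega⟩ : Fin n)) ∈ Bᶜ :=
      (Bᶜ.orderIsoOfFin (compl_card hB) _).2
    rw [hjj] at h1
    rw [Finset.mem_compl] at h2
    exact h2 h1
  · rw [dif_neg hj, dif_pos hj'] at hjj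
    exfalso
    have h1 : (B.orderIsoOfFin hB (τ ⟨j', hj'⟩) : Fin n) ∈ B := (B.orderIsoOfFin hB (τ ⟨j', hj'⟩)).2
    have h2 : ((Bᶜ.orderIsoOfFin (compl_card hB) ⟨(j : ℕ) - t, by omega⟩ : Fin n)) ∈ Bᶜ :=
      (Bᶜ.orderIsoOfFin (compl_card hB) _).2
    rw [← hjj] at h1
    rw [Finset.mem_compl] at h2
    exact h2 h1
  · rw [dif_neg hj, dif_neg hj'] at hjj
    have := (Bᶜ.orderIsoOfFin (compl_card hB)).injective (Subtype.coe_injective hjj)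
    simp only [Fin.mk.injEq] at this
    have hjn := j.isLt
    have hjn' := j'.isLt
    exact Fin.ext (by omega)

/-- inverse construction as a permutation. -/
noncomputable def bwdσ (hB : B.card = t) (τ : Equiv.Perm (Fin t)) : Equiv.Perm (Fin n) :=
  Equiv.ofBijective _ (Finite.injective_iff_bijective.mp (bwdf_inj hB τ))

lemma bwdσ_apply_lt (hB : B.card = t) (τ : Equiv.Perm (Fin t)) (j : Fin n) (hj : (j : ℕ) < t) :
    bwdσ hB τ j = (B.orderIsoOfFin hB (τ ⟨j, hj⟩) : Fin n) := by
  show bwdf hB τ j = _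
  rw [bwdf, dif_pos hj]

lemma bwdσ_apply_ge (hB : B.card = t) (τ : Equiv.Perm (Fin t)) (j : Fin n) (hj : ¬ (j : ℕ) < t) :
    bwdσ hB τ j = (Bᶜ.orderIsoOfFin (compl_card hB) ⟨(j : ℕ) - t, by omega⟩ : Fin n) := by
  show bwdf hB τ j = _
  rw [bwdf, dif_neg hj]

lemma desF_bwdσ (hB : B.card = t) (τ : Equiv.Perm (Fin t)) :
    desF n (bwdσ hB τ) ⊆ insert t (desF t τ) := by
  intro i hi
  rw [mem_desF] at hi
  obtain ⟨hi0, hin, hdes⟩ := hi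
  rcases eq_or_ne i t with rfl | hit
  · exact Finset.mem_insert_self _ _
  apply Finset.mem_insert_of_mem
  rcases lt_or_gt_of_ne hit with hlt | hgt
  · -- i < t : descent of τ
    rw [mem_desF]
    refine ⟨hi0, hlt, ?_⟩
    rw [pval_eq n _ i hin, pval_eq n _ (i-1) (by omega)] at hdes
    rw [bwdσ_apply_lt hB τ ⟨i, hin⟩ hlt, bwdσ_apply_lt hB τ ⟨i-1, by omega⟩ (by simp; omega)]
      at hdes
    have hdes' : (B.orderIsoOfFin hB (τ ⟨i, hlt⟩)) < (B.orderIsoOfFin hB (τ ⟨i-1, by omega⟩)) := by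
      rw [← Subtype.coe_lt_coe]
      exact_mod_cast hdes
    have := (B.orderIsoOfFin hB).lt_iff_lt.mp hdes'
    rw [pval_eq t τ i hlt, pval_eq t τ (i-1) (by omega)]
    exact_mod_cast this
  · -- i > t : no descent possible, contradiction
    exfalso
    rw [pval_eq n _ i hin, pval_eq n _ (i-1) (by omega)] at hdes
    rw [bwdσ_apply_ge hB τ ⟨i, hin⟩ (by simp; omega),
      bwdσ_apply_ge hB τ ⟨i-1, by omega⟩ (by simp; omega)] at hdes
    have hdes' : (Bᶜ.orderIsoOfFin (compl_card hB) ⟨i - t, by omega⟩)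
        < (Bᶜ.orderIsoOfFin (compl_card hB) ⟨i - 1 - t, by omega⟩) := by
      rw [← Subtype.coe_lt_coe]
      exact_mod_cast hdes
    have := (Bᶜ.orderIsoOfFin (compl_card hB)).lt_iff_lt.mp hdes'
    rw [Fin.mk_lt_mk] at this
    omega

end InsertLemma
section AcInsert

open Finset

variable {n t : ℕ}

lemma bwd_fwd {σ : Equiv.Perm (Fin n)} {T : Finset ℕ} (ht0 : 0 < t) (htn : t < n)
    (hT : T ⊆ Finset.Ioo 0 t) (ha : desF n σ ⊆ insert t T) :
    bwdσ (fwdB_card htn.le σ) (fwdτ htn.le σ) = σ := by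
  apply Equiv.ext
  intro j
  by_cases hj : (j : ℕ) < t
  · rw [bwdσ_apply_lt _ _ j hj, fwdτ_apply, OrderIso.apply_symm_apply]
    have hcast : Fin.castLE htn.le ⟨(j : ℕ), hj⟩ = j := Fin.ext (by simp)
    show σ (Fin.castLE htn.le ⟨(j : ℕ), hj⟩) = σ j
    exact congrArg _ hcast
  · rw [bwdσ_apply_ge _ _ j hj]
    -- σ on positions ≥ t is the increasing enumeration of (fwdB)ᶜ
    set f : Fin (n - t) → Fin n := fun k => σ ⟨t + (k : ℕ), by omega⟩ with hf
    have hmem : ∀ k, f k ∈ (fwdB htn.le σ)ᶜ := by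
      intro k
      rw [Finset.mem_compl, fwdB, Finset.mem_image]
      rintro ⟨j', -, hj'⟩
      have := σ.injective hj'
      have h2 : (Fin.castLE htn.le j' : ℕ) = t + (k : ℕ) := congrArg Fin.val this
      simp only [Fin.coe_castLE] at h2
      have := j'.isLt
      omega
    have hsm : StrictMono f := by
      intro k k' hkk
      have hlt := pval_lt_pval σ (i := t + (k : ℕ)) (j := t + (k' : ℕ))
        (by exact_mod_cast Nat.add_lt_add_left hkk t) (by omega) ?_
      · rw [pval_eq n σ _ (by omega), pval_eq n σ _ (by omega)] at hlt
        exact_mod_cast hlt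
      · intro l hl1 hl2 hl
        have := ha hl
        rcases Finset.mem_insert.mp this with rfl | h
        · omega
        · have := hT h
          rw [Finset.mem_Ioo] at this
          omega
    have huniq := Finset.orderEmbOfFin_unique
      (compl_card (fwdB_card htn.le σ)) hmem hsm
    have hval : ((fwdB htn.le σ)ᶜ.orderIsoOfFin (compl_card (fwdB_card htn.le σ))
        ⟨(j : ℕ) - t, by omega⟩ : Fin n)
        = f ⟨(j : ℕ) - t, by omega⟩ := by
      rw [Finset.coe_orderIsoOfFin_apply, ← huniq]
    rw [hval, hf]
    refine congrArg σ (Fin.ext ?_)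
    simp
    omega

lemma fwd_bwd_B {B : Finset (Fin n)} (htn : t < n) (hB : B.card = t) (τ : Equiv.Perm (Fin t)) :
    fwdB htn.le (bwdσ hB τ) = B := by
  ext b
  rw [fwdB, Finset.mem_image]
  constructor
  · rintro ⟨j, -, rfl⟩
    rw [bwdσ_apply_lt hB τ _ (by simp)]
    exact Subtype.mem _
  · intro hb
    refine ⟨τ.symm ((B.orderIsoOfFin hB).symm ⟨b, hb⟩), Finset.mem_univ _, ?_⟩
    rw [bwdσ_apply_lt hB τ _ (by simp)]
    have h1 : (⟨((Fin.castLE htn.le (τ.symm ((B.orderIsoOfFin hB).symm ⟨b, hb⟩))) : ℕ), by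
        simp⟩ : Fin t) = τ.symm ((B.orderIsoOfFin hB).symm ⟨b, hb⟩) := Fin.ext (by simp)
    rw [h1, Equiv.apply_symm_apply, OrderIso.apply_symm_apply]

lemma fwd_bwd_τ {B : Finset (Fin n)} (htn : t < n) (hB : B.card = t) (τ : Equiv.Perm (Fin t)) :
    fwdτ htn.le (bwdσ hB τ) = τ := by
  apply Equiv.ext
  intro j
  rw [fwdτ_apply, OrderIso.symm_apply_eq]
  have hemb : ⇑(B.orderEmbOfFin hB)
      = ⇑((fwdB htn.le (bwdσ hB τ)).orderEmbOfFin (fwdB_card htn.le (bwdσ hB τ))) := by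
    apply Finset.orderEmbOfFin_unique
    · intro x
      rw [fwd_bwd_B htn hB τ]
      exact Finset.orderEmbOfFin_mem B hB x
    · exact (B.orderEmbOfFin hB).strictMono
  apply Subtype.ext
  have hfun := congrFun hemb (τ j)
  rw [Finset.coe_orderIsoOfFin_apply, ← hfun]
  show bwdσ hB τ (Fin.castLE htn.le j) = _
  rw [bwdσ_apply_lt hB τ _ (by simp)]
  have h1 : (⟨((Fin.castLE htn.le j) : ℕ), by simp⟩ : Fin t) = j := Fin.ext (by simp)
  rw [h1, Finset.coe_orderIsoOfFin_apply]

lemma Ac_insert {T : Finset ℕ} (ht0 : 0 < t) (htn : t < n) (hT : T ⊆ Finset.Ioo 0 t) :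
    Ac n (insert t T) = n.choose t * Ac t T := by
  classical
  have hcard : ((powersetCard t (univ : Finset (Fin n))) ×ˢ
      (univ.filter fun τ : Equiv.Perm (Fin t) => desF t τ ⊆ T)).card = n.choose t * Ac t T := by
    rw [Finset.card_product, card_powersetCard, card_univ, Fintype.card_fin, Ac]
  rw [← hcard, Ac]
  apply Finset.card_bij'
    (i := fun σ _ => (fwdB htn.le σ, fwdτ htn.le σ))
    (j := fun b hb => bwdσ (B := b.1)
      ((Finset.mem_powersetCard_univ).mp (Finset.mem_product.mp hb).1) b.2)
  case hi =>
    intro σ ha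
    rw [Finset.mem_filter] at ha
    rw [Finset.mem_product]
    constructor
    · rw [Finset.mem_powersetCard_univ]
      exact fwdB_card htn.le σ
    · rw [Finset.mem_filter]
      refine ⟨Finset.mem_univ _, ?_⟩
      intro i hi
      have h1 := desF_fwdτ htn.le σ hi
      have h2 := ha.2 h1
      rcases Finset.mem_insert.mp h2 with rfl | h3
      · exfalso
        have := (mem_desF.mp hi).2.1
        omega
      · exact h3
  case hj =>
    intro b hb
    rw [Finset.mem_filter]
    refine ⟨Finset.mem_univ _, ?_⟩
    intro i hi
    have h1 := desF_bwdσ ((Finset.mem_powersetCard_univ).mp (Finset.mem_product.mp hb).1) b.2 hi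
    rcases Finset.mem_insert.mp h1 with rfl | h2
    · exact Finset.mem_insert_self _ _
    · apply Finset.mem_insert_of_mem
      have := (Finset.mem_filter.mp (Finset.mem_product.mp hb).2).2
      exact this h2
  case left_inv =>
    intro σ ha
    rw [Finset.mem_filter] at ha
    exact bwd_fwd ht0 htn hT ha.2
  case right_inv =>
    intro b hb
    have hB := (Finset.mem_powersetCard_univ).mp (Finset.mem_product.mp hb).1
    exact Prod.ext (fwd_bwd_B htn hB b.2) (fwd_bwd_τ htn hB b.2)

end AcInsert
section Moebius

open Finset

variable {R : Type*} [CommRing R]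

lemma sum_powerset_neg_one_pow_card_ring (x : Finset ℕ) :
    (∑ U ∈ x.powerset, (-1 : R) ^ U.card) = if x = ∅ then 1 else 0 := by
  have h := Finset.sum_powerset_neg_one_pow_card (x := x)
  have h2 := congrArg (fun z : ℤ => (z : R)) h
  push_cast at h2
  rw [h2]

lemma neg_one_pow_sub (a b : ℕ) (hba : b ≤ a) :
    (-1 : R) ^ (a - b) = (-1) ^ a * (-1) ^ b := by
  conv_rhs => rw [show a = (a - b) + b by omega]
  rw [pow_add, mul_assoc, ← pow_add, show b + b = 2 * b by ring, pow_mul, neg_one_sq,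
    one_pow, mul_one]

lemma sdiff_eq_sdiff_sdiff {S Q T : Finset ℕ} (hQ : Q ⊆ T) (hT : T ⊆ S) :
    S \ T = (S \ Q) \ (T \ Q) := by
  ext x
  simp only [Finset.mem_sdiff]
  constructor
  · intro ⟨hxS, hxT⟩
    exact ⟨⟨hxS, fun hxQ => hxT (hQ hxQ)⟩, fun h => hxT h.1⟩
  · intro ⟨⟨hxS, hxQ⟩, h⟩
    refine ⟨hxS, fun hxT => h ⟨hxT, hxQ⟩⟩

lemma inner_moebius_sum (S Q : Finset ℕ) (hQ : Q ⊆ S) :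
    (∑ T ∈ S.powerset, if Q ⊆ T then ((-1 : R)) ^ ((S \ T).card) else 0)
      = if Q = S then 1 else 0 := by
  rw [← Finset.sum_filter]
  rw [Finset.sum_nbij' (t := (S \ Q).powerset)
    (g := fun U => (-1 : R) ^ ((S \ Q).card) * (-1) ^ U.card)
    (i := fun T => T \ Q) (j := fun U => U ∪ Q)
    (fun T hT => by
      rw [Finset.mem_filter, Finset.mem_powerset] at hT
      rw [Finset.mem_powerset]
      exact fun x hx => Finset.mem_sdiff.mpr
        ⟨hT.1 (Finset.mem_sdiff.mp hx).1, (Finset.mem_sdiff.mp hx).2⟩)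
    (fun U hU => by
      rw [Finset.mem_powerset] at hU
      rw [Finset.mem_filter, Finset.mem_powerset]
      exact ⟨Finset.union_subset (hU.trans Finset.sdiff_subset) hQ,
        Finset.subset_union_right⟩)
    (fun T hT => by
      rw [Finset.mem_filter] at hT
      show T \ Q ∪ Q = T
      rw [Finset.sdiff_union_self_eq_union]
      exact Finset.union_eq_left.mpr hT.2)
    (fun U hU => by
      rw [Finset.mem_powerset] at hU
      show (U ∪ Q) \ Q = U
      rw [Finset.union_sdiff_right]
      exact Finset.sdiff_eq_self_of_disjoint (Finset.disjoint_right.mpr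
        (fun x hxQ hxU => (Finset.mem_sdiff.mp (hU hxU)).2 hxQ)))
    (fun T hT => by
      rw [Finset.mem_filter, Finset.mem_powerset] at hT
      have h1 : S \ T = (S \ Q) \ (T \ Q) := sdiff_eq_sdiff_sdiff hT.2 hT.1
      have h2 : T \ Q ⊆ S \ Q := fun x hx => Finset.mem_sdiff.mpr
        ⟨hT.1 (Finset.mem_sdiff.mp hx).1, (Finset.mem_sdiff.mp hx).2⟩
      rw [h1, Finset.card_sdiff_of_subset h2, neg_one_pow_sub _ _ (Finset.card_le_card h2)])]
  rw [← Finset.mul_sum, sum_powerset_neg_one_pow_card_ring]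
  by_cases h : Q = S
  · subst h
    simp
  · have : ¬ (S \ Q = ∅) := by
      intro hc
      exact h (Finset.Subset.antisymm hQ (Finset.sdiff_eq_empty_iff_subset.mp hc))
    rw [if_neg this, if_neg h, mul_zero]

lemma moebius_inv (f g : Finset ℕ → R) (S : Finset ℕ)
    (hg : ∀ T, T ⊆ S → g T = ∑ Q ∈ T.powerset, f Q) :
    f S = ∑ T ∈ S.powerset, (-1 : R) ^ ((S \ T).card) * g T := by
  symm
  have hps : ∀ T : Finset ℕ, T ⊆ S → T.powerset = S.powerset.filter (fun Q => Q ⊆ T) := by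
    intro T hT
    ext Q
    simp only [Finset.mem_powerset, Finset.mem_filter]
    exact ⟨fun h => ⟨h.trans hT, h⟩, fun h => h.2⟩
  calc ∑ T ∈ S.powerset, (-1 : R) ^ ((S \ T).card) * g T
      = ∑ T ∈ S.powerset, ∑ Q ∈ S.powerset,
          (if Q ⊆ T then (-1 : R) ^ ((S \ T).card) * f Q else 0) := by
        apply Finset.sum_congr rfl
        intro T hT
        rw [Finset.mem_powerset] at hT
        rw [hg T hT, hps T hT, Finset.mul_sum, Finset.sum_filter]
    _ = ∑ Q ∈ S.powerset, f Q *
          ∑ T ∈ S.powerset, (if Q ⊆ T then (-1 : R) ^ ((S \ T).card) else 0) := by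
        rw [Finset.sum_comm]
        apply Finset.sum_congr rfl
        intro Q _
        rw [Finset.mul_sum]
        apply Finset.sum_congr rfl
        intro T _
        split <;> ring
    _ = ∑ Q ∈ S.powerset, f Q * (if Q = S then 1 else 0) := by
        apply Finset.sum_congr rfl
        intro Q hQ
        rw [inner_moebius_sum S Q (Finset.mem_powerset.mp hQ)]
    _ = f S := by
        have hmul : ∀ Q ∈ S.powerset, f Q * (if Q = S then 1 else 0)
            = if Q = S then f Q else 0 := by
          intro Q _
          split <;> simp
        rw [Finset.sum_congr rfl hmul, Finset.sum_ite_eq' S.powerset S f,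
          if_pos (Finset.mem_powerset_self S)]

end Moebius
section BetaCast

open Finset

/-- number of permutations with descent set exactly `S`. -/
def betaF (n : ℕ) (S : Finset ℕ) : ℕ :=
  (univ.filter fun σ : Equiv.Perm (Fin n) => desF n σ = S).card

lemma Ac_eq_sum_betaF (n : ℕ) (S : Finset ℕ) :
    Ac n S = ∑ T ∈ S.powerset, betaF n T := by
  rw [Ac]
  rw [Finset.card_eq_sum_card_fiberwise (f := desF n) (t := S.powerset)
    (fun σ hσ => Finset.mem_powerset.mpr (Finset.mem_filter.mp hσ).2)]
  apply Finset.sum_congr rfl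
  intro T hT
  rw [betaF]
  congr 1
  ext σ
  simp only [Finset.mem_filter, Finset.mem_univ, true_and]
  constructor
  · rintro ⟨-, h⟩
    exact h
  · intro h
    exact ⟨h ▸ Finset.mem_powerset.mp hT, h⟩

variable {p a b : ℕ}

lemma pow_ne_pow (hp : p.Prime) (hab : a ≠ b) : p ^ a ≠ p ^ b :=
  fun h => hab (Nat.pow_right_injective hp.two_le h)

lemma choose_pow_cast (hp : p.Prime) {c i : ℕ} (hi0 : i ≠ 0) (hic : i ≠ p ^ c) :
    (((p ^ c).choose i : ℕ) : ZMod p) = 0 :=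
  (ZMod.natCast_eq_zero_iff _ p).mpr (hp.dvd_choose_pow hi0 hic)

lemma choose_cast_zmod (hp : p.Prime) (hab : a ≠ b) (m : ℕ) (hm0 : 0 < m)
    (hmn : m < p ^ a + p ^ b) :
    (((p ^ a + p ^ b).choose m : ℕ) : ZMod p)
      = if m = p ^ a ∨ m = p ^ b then 1 else 0 := by
  have hne := pow_ne_pow hp hab
  have hpa0 : p ^ a ≠ 0 := pow_ne_zero _ hp.pos.ne'
  have hpb0 : p ^ b ≠ 0 := pow_ne_zero _ hp.pos.ne'
  rw [Nat.add_choose_eq]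
  push_cast
  by_cases hma : m = p ^ a
  · rw [if_pos (Or.inl hma)]
    rw [Finset.sum_eq_single_of_mem (p ^ a, 0)
      (Finset.HasAntidiagonal.mem_antidiagonal.mpr (by omega))]
    · simp
    · rintro ⟨i, j⟩ hij hne'
      rw [Finset.HasAntidiagonal.mem_antidiagonal] at hij
      simp only at hij ⊢
      by_cases hi0 : i = 0
      · subst hi0
        have hj : j = p ^ a := by omega
        subst hj
        rw [choose_pow_cast hp hpa0 hne, mul_zero]
      · by_cases hia : i = p ^ a
        · exfalso
          apply hne'
          have : j = 0 := by omega
          simp [hia, this]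
        · rw [choose_pow_cast hp hi0 hia, zero_mul]
  · by_cases hmb : m = p ^ b
    · rw [if_pos (Or.inr hmb)]
      rw [Finset.sum_eq_single_of_mem (0, p ^ b)
        (Finset.HasAntidiagonal.mem_antidiagonal.mpr (by omega))]
      · simp
      · rintro ⟨i, j⟩ hij hne'
        rw [Finset.HasAntidiagonal.mem_antidiagonal] at hij
        simp only at hij ⊢
        by_cases hi0 : i = 0
        · subst hi0
          exfalso
          apply hne'
          have : j = p ^ b := by omega
          simp [this]
        · by_cases hia : i = p ^ a
          · have hj : j ≠ 0 := by omega
            have hj' : j ≠ p ^ b := by omega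
            rw [choose_pow_cast hp hj hj', mul_zero]
          · rw [choose_pow_cast hp hi0 hia, zero_mul]
    · rw [if_neg (by tauto)]
      apply Finset.sum_eq_zero
      rintro ⟨i, j⟩ hij
      rw [Finset.HasAntidiagonal.mem_antidiagonal] at hij
      simp only at hij ⊢
      by_cases hi0 : i = 0
      · subst hi0
        have hj : j = m := by omega
        subst hj
        rw [choose_pow_cast hp (c := b) (i := j) (by omega) (by omega), mul_zero]
      · by_cases hia : i = p ^ a
        · have hj : j ≠ 0 := by omega
          have hj' : j ≠ p ^ b := by omega
          rw [choose_pow_cast hp hj hj', mul_zero]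
        · rw [choose_pow_cast hp hi0 hia, zero_mul]

lemma Ac_cast_zmod (hp : p.Prime) (hab : a ≠ b) (T : Finset ℕ)
    (hT : T ⊆ Finset.Ioo 0 (p ^ a + p ^ b)) :
    ((Ac (p ^ a + p ^ b) T : ℕ) : ZMod p)
      = if T = ∅ ∨ T = {p ^ a} ∨ T = {p ^ b} then 1 else 0 := by
  set n := p ^ a + p ^ b with hn
  by_cases hT0 : T = ∅
  · subst hT0
    rw [Ac_empty, if_pos (Or.inl rfl)]
    norm_num
  have hne : T.Nonempty := Finset.nonempty_iff_ne_empty.mpr hT0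
  set t := T.max' hne with ht
  have htT : t ∈ T := T.max'_mem hne
  have htIoo := Finset.mem_Ioo.mp (hT htT)
  have herase : T = insert t (T.erase t) := (Finset.insert_erase htT).symm
  have herase_sub : T.erase t ⊆ Finset.Ioo 0 t := by
    intro x hx
    have hxT := Finset.mem_of_mem_erase hx
    have hxt : x ≠ t := Finset.ne_of_mem_erase hx
    have hle := T.le_max' x hxT
    have := Finset.mem_Ioo.mp (hT hxT)
    rw [Finset.mem_Ioo]
    omega
  have hAc : Ac n T = n.choose t * Ac t (T.erase t) := by
    conv_lhs => rw [herase]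
    exact Ac_insert htIoo.1 htIoo.2 herase_sub
  by_cases h1 : T.erase t = ∅
  · -- T = {t}
    have hTt : T = {t} := by rw [herase, h1]; rfl
    rw [hAc, h1, Ac_empty, mul_one]
    rw [choose_cast_zmod hp hab t htIoo.1 htIoo.2]
    have hiff : (t = p ^ a ∨ t = p ^ b) ↔ (T = ∅ ∨ T = {p ^ a} ∨ T = {p ^ b}) := by
      rw [hTt]
      constructor
      · rintro (h | h)
        · exact Or.inr (Or.inl (by rw [h]))
        · exact Or.inr (Or.inr (by rw [h]))
      · rintro (h | h | h)
        · exact absurd h (Finset.singleton_ne_empty t)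
        · exact Or.inl (Finset.singleton_injective h)
        · exact Or.inr (Finset.singleton_injective h)
    by_cases hc : t = p ^ a ∨ t = p ^ b
    · rw [if_pos hc, if_pos (hiff.mp hc)]
    · rw [if_neg hc, if_neg (fun h => hc (hiff.mpr h))]
  · -- T has at least two elements
    have hne2 : (T.erase t).Nonempty := Finset.nonempty_iff_ne_empty.mpr h1
    set s := (T.erase t).max' hne2 with hs
    have hsT : s ∈ T.erase t := Finset.max'_mem _ hne2
    have hsIoo := Finset.mem_Ioo.mp (herase_sub hsT)
    have herase2 : T.erase t = insert s ((T.erase t).erase s) :=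
      (Finset.insert_erase hsT).symm
    have herase2_sub : (T.erase t).erase s ⊆ Finset.Ioo 0 s := by
      intro x hx
      have hxT := Finset.mem_of_mem_erase hx
      have hxs : x ≠ s := Finset.ne_of_mem_erase hx
      have hle := (T.erase t).le_max' x hxT
      have := Finset.mem_Ioo.mp (herase_sub hxT)
      rw [Finset.mem_Ioo]
      omega
    have hAc2 : Ac t (T.erase t) = t.choose s * Ac s ((T.erase t).erase s) := by
      conv_lhs => rw [herase2]
      exact Ac_insert hsIoo.1 hsIoo.2 herase2_sub
    have hTne : ¬ (T = ∅ ∨ T = {p ^ a} ∨ T = {p ^ b}) := by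
      have htwo : ∀ x : ℕ, T ≠ {x} := by
        intro x hx
        have h1' : t = x := by
          have := htT; rw [hx, Finset.mem_singleton] at this; exact this
        have h2' : s = x := by
          have := Finset.mem_of_mem_erase hsT
          rw [hx, Finset.mem_singleton] at this; exact this
        have : s ≠ t := Finset.ne_of_mem_erase hsT
        exact this (h2'.trans h1'.symm)
      push_neg
      exact ⟨hne, htwo _, htwo _⟩
    rw [if_neg hTne, hAc, hAc2]
    push_cast
    rw [choose_cast_zmod hp hab t htIoo.1 htIoo.2]
    by_cases hta : t = p ^ a ∨ t = p ^ b
    · have hchoose2 : ((t.choose s : ℕ) : ZMod p) = 0 := by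
        rcases hta with h | h <;>
          { rw [h]
            exact choose_pow_cast hp hsIoo.1.ne' (by omega) }
      rw [hchoose2]
      ring
    · rw [if_neg hta]
      ring

end BetaCast
section Master

open Finset

variable {p a b : ℕ}

lemma betaF_cast (hp : p.Prime) (hab : a ≠ b) (S : Finset ℕ)
    (hS : S ⊆ Finset.Ioo 0 (p ^ a + p ^ b)) :
    ((betaF (p ^ a + p ^ b) S : ℕ) : ZMod p) = (-1) ^ S.card *
      (1 - (if p ^ a ∈ S then 1 else 0) - (if p ^ b ∈ S then 1 else 0)) := by
  have hne := pow_ne_pow hp hab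
  have hmo := moebius_inv (R := ZMod p) (fun T => ((betaF (p ^ a + p ^ b) T : ℕ) : ZMod p))
    (fun T => ((Ac (p ^ a + p ^ b) T : ℕ) : ZMod p)) S
    (fun T _ => by rw [Ac_eq_sum_betaF]; push_cast; rfl)
  rw [hmo]
  rw [Finset.sum_congr rfl (fun T hT => by
    rw [Ac_cast_zmod hp hab T ((Finset.mem_powerset.mp hT).trans hS)])]
  have hsplit : ∀ T ∈ S.powerset,
      (-1 : ZMod p) ^ ((S \ T).card)
          * (if T = ∅ ∨ T = {p ^ a} ∨ T = {p ^ b} then 1 else 0)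
      = (if T = ∅ then (-1 : ZMod p) ^ ((S \ T).card) else 0)
        + (if T = {p ^ a} then (-1 : ZMod p) ^ ((S \ T).card) else 0)
        + (if T = {p ^ b} then (-1 : ZMod p) ^ ((S \ T).card) else 0) := by
    intro T _
    by_cases h1 : T = ∅
    · have hfa : T ≠ {p ^ a} := by rw [h1]; exact Ne.symm (Finset.singleton_ne_empty _)
      have hfb : T ≠ {p ^ b} := by rw [h1]; exact Ne.symm (Finset.singleton_ne_empty _)
      rw [if_pos (Or.inl h1), if_pos h1, if_neg hfa, if_neg hfb]
      ring
    · by_cases h2 : T = {p ^ a}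
      · have hfb : T ≠ {p ^ b} := by
          rw [h2]; exact fun hc => hne (Finset.singleton_injective hc)
        rw [if_pos (Or.inr (Or.inl h2)), if_neg h1, if_pos h2, if_neg hfb]
        ring
      · by_cases h3 : T = {p ^ b}
        · rw [if_pos (Or.inr (Or.inr h3)), if_neg h1, if_neg h2, if_pos h3]
          ring
        · rw [if_neg (by tauto), if_neg h1, if_neg h2, if_neg h3]
          ring
  rw [Finset.sum_congr rfl hsplit, Finset.sum_add_distrib, Finset.sum_add_distrib,
    Finset.sum_ite_eq' S.powerset (∅ : Finset ℕ) (fun T => (-1 : ZMod p) ^ ((S \ T).card)),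
    Finset.sum_ite_eq' S.powerset ({p ^ a} : Finset ℕ) (fun T => (-1 : ZMod p) ^ ((S \ T).card)),
    Finset.sum_ite_eq' S.powerset ({p ^ b} : Finset ℕ) (fun T => (-1 : ZMod p) ^ ((S \ T).card))]
  rw [if_pos (Finset.empty_mem_powerset S), Finset.sdiff_empty]
  have hmem : ∀ x : ℕ, ({x} : Finset ℕ) ∈ S.powerset ↔ x ∈ S := by
    intro x
    rw [Finset.mem_powerset, Finset.singleton_subset_iff]
  have herase : ∀ x : ℕ, x ∈ S →
      ((-1 : ZMod p)) ^ ((S \ {x}).card) = -((-1) ^ S.card) := by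
    intro x hx
    rw [Finset.sdiff_singleton_eq_erase]
    have h := Finset.card_erase_add_one hx
    rw [← h, pow_succ]
    ring
  by_cases hu : p ^ a ∈ S <;> by_cases hv : p ^ b ∈ S
  · rw [if_pos ((hmem _).mpr hu), if_pos ((hmem _).mpr hv), herase _ hu, herase _ hv,
      if_pos hu, if_pos hv]
    ring
  · rw [if_pos ((hmem _).mpr hu), if_neg (fun h => hv ((hmem _).mp h)), herase _ hu,
      if_pos hu, if_neg hv]
    ring
  · rw [if_neg (fun h => hu ((hmem _).mp h)), if_pos ((hmem _).mpr hv), herase _ hv,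
      if_neg hu, if_pos hv]
    ring
  · rw [if_neg (fun h => hu ((hmem _).mp h)), if_neg (fun h => hv ((hmem _).mp h)),
      if_neg hu, if_neg hv]
    ring

end Master
section Bridge

open Finset

variable {n : ℕ}

/-- descent set of a composition as a finset. -/
def DFin (α : Composition n) : Finset ℕ :=
  (Finset.Ioo 0 α.length).image α.sizeUpTo

lemma DsetA_eq_DFin (α : Composition n) : DsetA α = ↑(DFin α) := by
  ext m
  simp only [DsetA, Set.mem_setOf_eq, DFin, Finset.coe_image, Set.mem_image,
    Finset.mem_coe, Finset.mem_Ioo]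
  constructor
  · rintro ⟨i, h1, h2, h3⟩
    exact ⟨i, ⟨h1, h2⟩, h3⟩
  · rintro ⟨i, ⟨h1, h2⟩, h3⟩
    exact ⟨i, h1, h2, h3⟩

/-- embedding of `Fin n` permutations into the `ℕ → ℕ` model. -/
def natPerm (n : ℕ) (σ : Equiv.Perm (Fin n)) : ℕ → ℕ := fun i =>
  if 1 ≤ i ∧ i ≤ n then pval n σ (i - 1) + 1 else i

lemma natPerm_apply_mem (σ : Equiv.Perm (Fin n)) {i : ℕ} (h1 : 1 ≤ i) (h2 : i ≤ n) :
    natPerm n σ i = pval n σ (i - 1) + 1 := if_pos ⟨h1, h2⟩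

lemma natPerm_apply_not_mem (σ : Equiv.Perm (Fin n)) {i : ℕ} (h : ¬ (1 ≤ i ∧ i ≤ n)) :
    natPerm n σ i = i := if_neg h

lemma natPerm_mem_PermsA (σ : Equiv.Perm (Fin n)) : natPerm n σ ∈ PermsA n := by
  constructor
  · constructor
    · intro i hi
      rw [Set.mem_Icc] at hi
      rw [natPerm_apply_mem σ hi.1 hi.2, Set.mem_Icc]
      have : pval n σ (i - 1) < n := by
        rw [pval_eq n σ (i - 1) (by omega)]
        exact (σ _).isLt
      omega
    constructor
    · intro i hi j hj hij
      rw [Set.mem_Icc] at hi hj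
      rw [natPerm_apply_mem σ hi.1 hi.2, natPerm_apply_mem σ hj.1 hj.2] at hij
      have h1 : pval n σ (i - 1) = pval n σ (j - 1) := by omega
      rw [pval_eq n σ (i - 1) (by omega), pval_eq n σ (j - 1) (by omega)] at h1
      have := σ.injective (Fin.val_injective h1)
      simp only [Fin.mk.injEq] at this
      omega
    · intro y hy
      rw [Set.mem_Icc] at hy
      refine ⟨(σ.symm ⟨y - 1, by omega⟩ : ℕ) + 1, ?_, ?_⟩
      · rw [Set.mem_Icc]
        have := (σ.symm ⟨y - 1, by omega⟩).isLt
        omega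
      · have hlt := (σ.symm ⟨y - 1, by omega⟩).isLt
        rw [natPerm_apply_mem σ (by omega) (by omega)]
        rw [pval_eq n σ _ (by omega)]
        have : (⟨(σ.symm ⟨y - 1, by omega⟩ : ℕ) + 1 - 1, by omega⟩ : Fin n)
            = σ.symm ⟨y - 1, by omega⟩ := Fin.ext (by simp)
        rw [this, Equiv.apply_symm_apply]
        simp only [Fin.val_mk]
        omega
  · intro i hi
    rw [Set.mem_Icc] at hi
    exact natPerm_apply_not_mem σ (by omega)

lemma natPerm_injective : Function.Injective (natPerm n) := by
  intro σ σ' h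
  apply Equiv.ext
  intro j
  have := congrFun h ((j : ℕ) + 1)
  rw [natPerm_apply_mem σ (by omega) (by have := j.isLt; omega),
    natPerm_apply_mem σ' (by omega) (by have := j.isLt; omega)] at this
  simp only [Nat.add_sub_cancel] at this
  rw [pval_eq n σ _ j.isLt, pval_eq n σ' _ j.isLt] at this
  have h2 : σ ⟨(j : ℕ), j.isLt⟩ = σ' ⟨(j : ℕ), j.isLt⟩ := Fin.val_injective (by omega)
  simpa [Fin.eta] using h2

lemma DesA_natPerm (σ : Equiv.Perm (Fin n)) : DesA n (natPerm n σ) = ↑(desF n σ) := by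
  ext i
  simp only [DesA, Set.mem_setOf_eq, Finset.mem_coe, mem_desF]
  constructor
  · rintro ⟨h1, h2, h3⟩
    refine ⟨h1, h2, ?_⟩
    rw [natPerm_apply_mem σ (by omega) (by omega), natPerm_apply_mem σ (by omega) (by omega)]
      at h3
    simp only [Nat.add_sub_cancel] at h3
    omega
  · rintro ⟨h1, h2, h3⟩
    refine ⟨h1, h2, ?_⟩
    rw [natPerm_apply_mem σ (by omega) (by omega), natPerm_apply_mem σ (by omega) (by omega)]
    simp only [Nat.add_sub_cancel]
    omega

lemma natPerm_surj {w : ℕ → ℕ} (hw : w ∈ PermsA n) : ∃ σ : Equiv.Perm (Fin n), natPerm n σ = w := by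
  obtain ⟨⟨hmaps, hinj, hsurj⟩, hid⟩ := hw
  have hmem : ∀ j : Fin n, w ((j : ℕ) + 1) ∈ Set.Icc 1 n := by
    intro j
    exact hmaps (Set.mem_Icc.mpr ⟨by omega, by have := j.isLt; omega⟩)
  set f : Fin n → Fin n := fun j => ⟨w ((j : ℕ) + 1) - 1, by
    have := Set.mem_Icc.mp (hmem j); omega⟩ with hf
  have hfinj : Function.Injective f := by
    intro j j' hjj
    rw [hf] at hjj
    simp only [Fin.mk.injEq] at hjj
    have h1 := Set.mem_Icc.mp (hmem j)
    have h2 := Set.mem_Icc.mp (hmem j')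
    have heq : w ((j : ℕ) + 1) = w ((j' : ℕ) + 1) := by omega
    have := hinj (Set.mem_Icc.mpr ⟨by omega, by have := j.isLt; omega⟩)
      (Set.mem_Icc.mpr ⟨by omega, by have := j'.isLt; omega⟩) heq
    exact Fin.ext (by omega)
  refine ⟨Equiv.ofBijective f (Finite.injective_iff_bijective.mp hfinj), ?_⟩
  funext i
  by_cases hi : 1 ≤ i ∧ i ≤ n
  · rw [natPerm_apply_mem _ hi.1 hi.2, pval_eq n _ (i - 1) (by omega)]
    show (f ⟨i - 1, by omega⟩ : ℕ) + 1 = w i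
    rw [hf]
    simp only []
    have h1 : (i - 1) + 1 = i := by omega
    rw [h1]
    have := Set.mem_Icc.mp (hmaps (Set.mem_Icc.mpr ⟨hi.1, hi.2⟩))
    omega
  · rw [natPerm_apply_not_mem _ hi]
    exact (hid i (by rw [Set.mem_Icc]; omega)).symm

lemma ribbonA_eq_betaF (α : Composition n) : ribbonA α = betaF n (DFin α) := by
  rw [ribbonA, betaF]
  have himg : {w ∈ PermsA n | DesA n w = DsetA α}
      = natPerm n '' {σ : Equiv.Perm (Fin n) | desF n σ = DFin α} := by
    ext w
    simp only [Set.mem_setOf_eq, Set.mem_image]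
    constructor
    · rintro ⟨hw, hdes⟩
      obtain ⟨σ, rfl⟩ := natPerm_surj hw
      refine ⟨σ, ?_, rfl⟩
      rw [DesA_natPerm, DsetA_eq_DFin] at hdes
      exact Finset.coe_injective hdes
    · rintro ⟨σ, hσ, rfl⟩
      exact ⟨natPerm_mem_PermsA σ, by rw [DesA_natPerm, hσ, DsetA_eq_DFin]⟩
  rw [himg, Set.ncard_image_of_injective _ natPerm_injective]
  have hset : {σ : Equiv.Perm (Fin n) | desF n σ = DFin α}
      = ↑(univ.filter fun σ : Equiv.Perm (Fin n) => desF n σ = DFin α) := by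
    ext σ
    simp
  rw [hset, Set.ncard_coe_finset]

end Bridge
section DFinBij

open Finset

variable {n : ℕ}

lemma sizeUpTo_lt_sizeUpTo (α : Composition n) {i j : ℕ} (hij : i < j) (hj : j ≤ α.length) :
    α.sizeUpTo i < α.sizeUpTo j := by
  induction j, hij using Nat.le_induction with
  | base => exact α.sizeUpTo_strict_mono (by omega)
  | succ m hm ih =>
    exact lt_trans (ih (by omega)) (α.sizeUpTo_strict_mono (by omega))

lemma DFin_subset (α : Composition n) : DFin α ⊆ Finset.Ioo 0 n := by
  intro m hm
  rw [DFin, Finset.mem_image] at hm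
  obtain ⟨i, hi, rfl⟩ := hm
  rw [Finset.mem_Ioo] at hi ⊢
  constructor
  · have := sizeUpTo_lt_sizeUpTo α hi.1 (le_of_lt hi.2)
    rwa [α.sizeUpTo_zero] at this
  · have := sizeUpTo_lt_sizeUpTo α hi.2 le_rfl
    rwa [α.sizeUpTo_length] at this

lemma boundary_val (α : Composition n) (i : Fin (α.length + 1)) :
    ((α.boundary i : Fin (n + 1)) : ℕ) = α.sizeUpTo i := rfl

lemma image_val_boundaries (α : Composition n) :
    α.boundaries.image Fin.val = insert 0 (insert n (DFin α)) := by
  ext m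
  rw [Finset.mem_image]
  constructor
  · rintro ⟨x, hx, rfl⟩
    rw [Composition.boundaries, Finset.mem_map] at hx
    obtain ⟨i, -, rfl⟩ := hx
    rw [show ((α.boundary.toEmbedding i : Fin (n + 1)) : ℕ) = α.sizeUpTo i from rfl]
    rcases Nat.eq_zero_or_pos (i : ℕ) with h0 | h0
    · rw [h0, α.sizeUpTo_zero]
      exact Finset.mem_insert_self _ _
    · rcases eq_or_lt_of_le (Nat.lt_succ_iff.mp i.isLt) with hlen | hlen
      · rw [hlen, α.sizeUpTo_length]
        exact Finset.mem_insert_of_mem (Finset.mem_insert_self _ _)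
      · apply Finset.mem_insert_of_mem
        apply Finset.mem_insert_of_mem
        rw [DFin, Finset.mem_image]
        exact ⟨(i : ℕ), Finset.mem_Ioo.mpr ⟨h0, hlen⟩, rfl⟩
  · intro hm
    rcases Finset.mem_insert.mp hm with rfl | hm'
    · refine ⟨α.boundary 0, ?_, ?_⟩
      · rw [Composition.boundaries, Finset.mem_map]
        exact ⟨0, Finset.mem_univ _, rfl⟩
      · rw [boundary_val]
        show α.sizeUpTo 0 = 0
        exact α.sizeUpTo_zero
    rcases Finset.mem_insert.mp hm' with rfl | hm''
    · refine ⟨α.boundary (Fin.last α.length), ?_, ?_⟩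
      · rw [Composition.boundaries, Finset.mem_map]
        exact ⟨Fin.last _, Finset.mem_univ _, rfl⟩
      · rw [boundary_val, Fin.val_last]
        exact α.sizeUpTo_length
    · rw [DFin, Finset.mem_image] at hm''
      obtain ⟨i, hi, rfl⟩ := hm''
      rw [Finset.mem_Ioo] at hi
      refine ⟨α.boundary ⟨i, by omega⟩, ?_, by rw [boundary_val]⟩
      rw [Composition.boundaries, Finset.mem_map]
      exact ⟨⟨i, by omega⟩, Finset.mem_univ _, rfl⟩

lemma DFin_injective : Function.Injective (DFin : Composition n → Finset ℕ) := by
  intro α β h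
  have h2 : α.boundaries.image Fin.val = β.boundaries.image Fin.val := by
    rw [image_val_boundaries, image_val_boundaries, h]
  have h3 : α.boundaries = β.boundaries := Finset.image_injective Fin.val_injective h2
  have h4 : α.toCompositionAsSet = β.toCompositionAsSet :=
    CompositionAsSet.ext (by rw [Composition.toCompositionAsSet_boundaries,
      Composition.toCompositionAsSet_boundaries, h3])
  exact (compositionEquiv n).injective h4

lemma insert_cancel_Ioo {X Y : Finset ℕ} (hX : X ⊆ Finset.Ioo 0 n) (hY : Y ⊆ Finset.Ioo 0 n)
    (h : insert 0 (insert n X) = insert 0 (insert n Y)) : X = Y := by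
  ext x
  constructor <;> intro hx
  · have hIoo := Finset.mem_Ioo.mp (hX hx)
    have hx' := (Finset.ext_iff.mp h x).mp
      (Finset.mem_insert_of_mem (Finset.mem_insert_of_mem hx))
    rcases Finset.mem_insert.mp hx' with h0 | hx''
    · omega
    rcases Finset.mem_insert.mp hx'' with h0 | hx'''
    · omega
    · exact hx'''
  · have hIoo := Finset.mem_Ioo.mp (hY hx)
    have hx' := (Finset.ext_iff.mp h x).mpr
      (Finset.mem_insert_of_mem (Finset.mem_insert_of_mem hx))
    rcases Finset.mem_insert.mp hx' with h0 | hx''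
    · omega
    rcases Finset.mem_insert.mp hx'' with h0 | hx'''
    · omega
    · exact hx'''

open Fin.NatCast in
lemma DFin_surjOn (T : Finset ℕ) (hT : T ⊆ Finset.Ioo 0 n) :
    ∃ α : Composition n, DFin α = T := by
  have hlt : ∀ m ∈ T, m < n + 1 := by
    intro m hm
    have := Finset.mem_Ioo.mp (hT hm)
    omega
  classical
  set Tc : Finset (Fin (n + 1)) := T.image (fun m : ℕ => (m : Fin (n + 1))) with hTc
  set B : Finset (Fin (n + 1)) := insert 0 (insert (Fin.last n) Tc) with hB
  set c : CompositionAsSet n :=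
    ⟨B, Finset.mem_insert_self _ _,
      Finset.mem_insert_of_mem (Finset.mem_insert_self _ _)⟩ with hc
  refine ⟨c.toComposition, ?_⟩
  have h1 : c.toComposition.boundaries = B := CompositionAsSet.toComposition_boundaries c
  have himg2 : Tc.image Fin.val = T := by
    rw [hTc]
    ext m
    simp only [Finset.mem_image]
    constructor
    · rintro ⟨x, ⟨m', hm', rfl⟩, rfl⟩
      rwa [Fin.val_natCast, Nat.mod_eq_of_lt (hlt m' hm')]
    · intro hm
      exact ⟨(m : Fin (n + 1)), ⟨m, hm, rfl⟩, by
        rw [Fin.val_natCast]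
        exact Nat.mod_eq_of_lt (hlt m hm)⟩
  have himgB : B.image Fin.val = insert 0 (insert n T) := by
    rw [hB, Finset.image_insert, Finset.image_insert, himg2]
    rfl
  have h3 : insert 0 (insert n (DFin c.toComposition)) = insert 0 (insert n T) := by
    rw [← image_val_boundaries, h1, himgB]
  exact insert_cancel_Ioo (DFin_subset _) hT h3

lemma count_DFin (P : Finset ℕ → Prop) [DecidablePred P] :
    (univ.filter fun α : Composition n => P (DFin α)).card
      = ((Finset.Ioo 0 n).powerset.filter P).card := by
  apply Finset.card_bij (fun α _ => DFin α)
  · intro α hα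
    rw [Finset.mem_filter] at hα ⊢
    exact ⟨Finset.mem_powerset.mpr (DFin_subset α), hα.2⟩
  · intro α1 h1 α2 h2 h
    exact DFin_injective h
  · intro T hT
    rw [Finset.mem_filter, Finset.mem_powerset] at hT
    obtain ⟨α, rfl⟩ := DFin_surjOn T hT.1
    exact ⟨α, Finset.mem_filter.mpr ⟨Finset.mem_univ _, hT.2⟩, rfl⟩

end DFinBij

section Counting

open Finset

lemma count_mem_q (s : Finset ℕ) (x : ℕ) (hx : x ∈ s) (Q : Finset ℕ → Prop) [DecidablePred Q] :
    (s.powerset.filter fun T => x ∈ T ∧ Q T).card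
      = ((s.erase x).powerset.filter fun R => Q (insert x R)).card := by
  apply Finset.card_bij (fun T _ => T.erase x)
  · intro T hT
    rw [Finset.mem_filter, Finset.mem_powerset] at hT
    rw [Finset.mem_filter, Finset.mem_powerset]
    refine ⟨Finset.erase_subset_erase x hT.1, ?_⟩
    rw [Finset.insert_erase hT.2.1]
    exact hT.2.2
  · intro T1 h1 T2 h2 h
    rw [Finset.mem_filter] at h1 h2
    rw [← Finset.insert_erase h1.2.1, ← Finset.insert_erase h2.2.1, h]
  · intro R hR
    rw [Finset.mem_filter, Finset.mem_powerset] at hR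
    have hxR : x ∉ R := fun hc => (Finset.mem_erase.mp (hR.1 hc)).1 rfl
    refine ⟨insert x R, ?_, ?_⟩
    · rw [Finset.mem_filter, Finset.mem_powerset]
      exact ⟨Finset.insert_subset hx (hR.1.trans (Finset.erase_subset x s)),
        Finset.mem_insert_self _ _, hR.2⟩
    · rw [Finset.erase_insert hxR]

lemma count_not_mem_q (s : Finset ℕ) (x : ℕ) (Q : Finset ℕ → Prop) [DecidablePred Q] :
    (s.powerset.filter fun T => x ∉ T ∧ Q T).card
      = ((s.erase x).powerset.filter Q).card := by
  congr 1
  ext T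
  rw [Finset.mem_filter, Finset.mem_filter, Finset.mem_powerset, Finset.mem_powerset,
    Finset.subset_erase]
  tauto

lemma count_parity (s : Finset ℕ) (hs : s.Nonempty) :
    (s.powerset.filter fun T => Even T.card).card = 2 ^ (s.card - 1)
    ∧ (s.powerset.filter fun T => ¬ Even T.card).card = 2 ^ (s.card - 1) := by
  classical
  set e := (s.powerset.filter fun T => Even T.card).card with he
  set o := (s.powerset.filter fun T => ¬ Even T.card).card with ho
  have hsum : e + o = 2 ^ s.card := by
    rw [he, ho, Finset.card_filter_add_card_filter_not, Finset.card_powerset]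
  have hdiff : (e : ℤ) = (o : ℤ) := by
    have h := Finset.sum_powerset_neg_one_pow_card (x := s)
    rw [if_neg (Finset.nonempty_iff_ne_empty.mp hs)] at h
    rw [← Finset.sum_filter_add_sum_filter_not s.powerset (fun T => Even T.card)] at h
    have h1 : ∑ T ∈ s.powerset.filter (fun T => Even T.card), (-1 : ℤ) ^ T.card
        = (e : ℤ) := by
      rw [Finset.sum_congr rfl (fun T hT => (Finset.mem_filter.mp hT).2.neg_one_pow),
        Finset.sum_const, he]
      simp
    have h2 : ∑ T ∈ s.powerset.filter (fun T => ¬ Even T.card), (-1 : ℤ) ^ T.card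
        = -(o : ℤ) := by
      rw [Finset.sum_congr rfl (fun T hT =>
        (Nat.not_even_iff_odd.mp (Finset.mem_filter.mp hT).2).neg_one_pow),
        Finset.sum_const, ho]
      simp
    rw [h1, h2] at h
    omega
  have he_eq : e = o := by exact_mod_cast hdiff
  have hpow : 2 ^ s.card = 2 * 2 ^ (s.card - 1) := by
    rw [← pow_succ']
    congr 1
    have := Finset.card_pos.mpr hs
    omega
  constructor <;> omega

end Counting
section Counting2

open Finset

variable {n u v : ℕ}

lemma count_both (hu : u ∈ Finset.Ioo 0 n) (hv : v ∈ Finset.Ioo 0 n) (huv : u ≠ v)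
    (C : ℕ → Prop) [DecidablePred C] :
    ((Finset.Ioo 0 n).powerset.filter fun T => (u ∈ T ∧ v ∈ T) ∧ C T.card).card
      = ((((Finset.Ioo 0 n).erase u).erase v).powerset.filter
          fun R => C (R.card + 2)).card := by
  classical
  have h1 : ((Finset.Ioo 0 n).powerset.filter fun T => (u ∈ T ∧ v ∈ T) ∧ C T.card)
      = ((Finset.Ioo 0 n).powerset.filter fun T => u ∈ T ∧ (v ∈ T ∧ C T.card)) :=
    Finset.filter_congr (fun T _ => by tauto)
  rw [h1, count_mem_q _ u hu]
  have h2 : (((Finset.Ioo 0 n).erase u).powerset.filter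
        fun R => v ∈ insert u R ∧ C (insert u R).card)
      = (((Finset.Ioo 0 n).erase u).powerset.filter
        fun R => v ∈ R ∧ C (R.card + 1)) := by
    apply Finset.filter_congr
    intro R hR
    rw [Finset.mem_powerset] at hR
    have huR : u ∉ R := fun hc => Finset.notMem_erase u _ (hR hc)
    rw [Finset.card_insert_of_notMem huR, Finset.mem_insert]
    have : ¬ (v = u) := Ne.symm huv
    tauto
  rw [h2, count_mem_q _ v (Finset.mem_erase.mpr ⟨Ne.symm huv, hv⟩)]
  congr 1
  apply Finset.filter_congr
  intro R hR
  rw [Finset.mem_powerset] at hR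
  have hvR : v ∉ R := fun hc => Finset.notMem_erase v _ (hR hc)
  rw [Finset.card_insert_of_notMem hvR]

lemma count_neither (C : ℕ → Prop) [DecidablePred C] :
    ((Finset.Ioo 0 n).powerset.filter fun T => (u ∉ T ∧ v ∉ T) ∧ C T.card).card
      = ((((Finset.Ioo 0 n).erase u).erase v).powerset.filter fun R => C R.card).card := by
  classical
  have h1 : ((Finset.Ioo 0 n).powerset.filter fun T => (u ∉ T ∧ v ∉ T) ∧ C T.card)
      = ((Finset.Ioo 0 n).powerset.filter fun T => u ∉ T ∧ (v ∉ T ∧ C T.card)) :=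
    Finset.filter_congr (fun T _ => by tauto)
  rw [h1, count_not_mem_q _ u, count_not_mem_q _ v]

lemma count_mixed (hu : u ∈ Finset.Ioo 0 n) (huv : u ≠ v) :
    ((Finset.Ioo 0 n).powerset.filter fun T => u ∈ T ∧ v ∉ T).card
      = ((((Finset.Ioo 0 n).erase u).erase v).powerset).card := by
  classical
  rw [count_mem_q _ u hu]
  have h2 : (((Finset.Ioo 0 n).erase u).powerset.filter fun R => v ∉ insert u R)
      = (((Finset.Ioo 0 n).erase u).powerset.filter fun R => v ∉ R ∧ True) := by
    apply Finset.filter_congr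
    intro R hR
    rw [Finset.mem_insert]
    have : ¬ (v = u) := Ne.symm huv
    tauto
  rw [h2, count_not_mem_q _ v]
  rw [Finset.filter_true_of_mem (fun _ _ => trivial)]

lemma erase_erase_card (hu : u ∈ Finset.Ioo 0 n) (hv : v ∈ Finset.Ioo 0 n) (huv : u ≠ v) :
    ((((Finset.Ioo 0 n)).erase u).erase v).card = n - 3 := by
  rw [Finset.card_erase_of_mem (Finset.mem_erase.mpr ⟨Ne.symm huv, hv⟩),
    Finset.card_erase_of_mem hu, Nat.card_Ioo]
  omega

end Counting2

section MainThm

open Finset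

set_option maxHeartbeats 2000000 in
/-- If n = u + v is a sum of two distinct nonnegative powers of an odd prime p, then
exactly 2^{n-2} compositions of n have r_α ≡ 0 (mod p), exactly 2^{n-3} have
r_α ≡ 1 (mod p), exactly 2^{n-3} have r_α ≡ -1 (mod p), and no other residue occurs. -/
theorem count_ribbonA_mod_odd_prime_sum_two_pows {p n u v a b : ℕ}
    (hp : p.Prime) (hodd : Odd p)
    (hu : u = p ^ a) (hv : v = p ^ b) (hab : a ≠ b) (hn : n = u + v) :
    (Finset.univ.filter fun α : Composition n => ribbonA α % p = 0).card = 2 ^ (n - 2) ∧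
    (Finset.univ.filter fun α : Composition n => ribbonA α % p = 1).card = 2 ^ (n - 3) ∧
    (Finset.univ.filter fun α : Composition n => ribbonA α % p = p - 1).card = 2 ^ (n - 3) ∧
    ∀ i : ℕ, i < p → i ≠ 0 → i ≠ 1 → i ≠ p - 1 →
      (Finset.univ.filter fun α : Composition n => ribbonA α % p = i).card = 0 := by
  classical
  subst hu hv hn
  haveI : Fact p.Prime := ⟨hp⟩
  have hp3 : 3 ≤ p := by
    rcases Nat.lt_or_ge p 3 with h | h
    · interval_cases p
      · exact absurd hp (by norm_num)
      · exact absurd hp (by norm_num)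
      · exact absurd hodd (by decide)
    · exact h
  haveI : NeZero p := ⟨by omega⟩
  haveI : Fact (1 < p) := ⟨by omega⟩
  set u := p ^ a with hu
  set v := p ^ b with hv
  set n := u + v with hn
  have huv : u ≠ v := pow_ne_pow hp hab
  have hu1 : 1 ≤ u := Nat.one_le_pow _ _ hp.pos
  have hv1 : 1 ≤ v := Nat.one_le_pow _ _ hp.pos
  have huv3 : 3 ≤ u ∨ 3 ≤ v := by
    rcases Nat.eq_zero_or_pos a with ha0 | ha0
    · right
      have hb0 : b ≠ 0 := fun hb => hab (by omega)
      calc 3 ≤ p := hp3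
        _ = p ^ 1 := (pow_one p).symm
        _ ≤ p ^ b := Nat.pow_le_pow_right hp.pos (by omega)
    · left
      calc 3 ≤ p := hp3
        _ = p ^ 1 := (pow_one p).symm
        _ ≤ p ^ a := Nat.pow_le_pow_right hp.pos (by omega)
  have hn4 : 4 ≤ n := by omega
  have huI : u ∈ Finset.Ioo 0 n := Finset.mem_Ioo.mpr ⟨by omega, by omega⟩
  have hvI : v ∈ Finset.Ioo 0 n := Finset.mem_Ioo.mpr ⟨by omega, by omega⟩
  have hJcard : ((((Finset.Ioo 0 n)).erase u).erase v).card = n - 3 :=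
    erase_erase_card huI hvI huv
  have hJne : ((((Finset.Ioo 0 n)).erase u).erase v).Nonempty := by
    rw [← Finset.card_pos, hJcard]
    omega
  -- master formula
  have hform : ∀ α : Composition n, ((ribbonA α : ℕ) : ZMod p)
      = (-1) ^ (DFin α).card * (1 - (if u ∈ DFin α then 1 else 0)
          - (if v ∈ DFin α then 1 else 0)) := by
    intro α
    rw [ribbonA_eq_betaF]
    exact betaF_cast hp hab (DFin α) (DFin_subset α)
  -- distinctness of 0, 1, -1 in ZMod p
  have h10 : (1 : ZMod p) ≠ 0 := one_ne_zero
  have hm10 : (-1 : ZMod p) ≠ 0 := neg_ne_zero.mpr one_ne_zero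
  have h01 : (0 : ZMod p) ≠ 1 := fun h => h10 h.symm
  have h0m1 : (0 : ZMod p) ≠ -1 := fun h => hm10 h.symm
  have hm11 : (-1 : ZMod p) ≠ 1 := by
    intro hc
    have h2 : ((2 : ℕ) : ZMod p) = 0 := by
      push_cast
      linear_combination -hc
    rw [ZMod.natCast_eq_zero_iff] at h2
    have := Nat.le_of_dvd (by norm_num) h2
    omega
  have h1m1 : (1 : ZMod p) ≠ -1 := fun h => hm11 h.symm
  have hpow1 : ∀ c : ℕ, Even c → ((-1 : ZMod p)) ^ c = 1 := fun c hc => hc.neg_one_pow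
  have hpow2 : ∀ c : ℕ, ¬ Even c → ((-1 : ZMod p)) ^ c = -1 := fun c hc =>
    (Nat.not_even_iff_odd.mp hc).neg_one_pow
  -- case analysis on the formula
  have hcases : ∀ α : Composition n,
      (((ribbonA α : ℕ) : ZMod p) = 0 ↔
        ((u ∈ DFin α ∧ v ∉ DFin α) ∨ (u ∉ DFin α ∧ v ∈ DFin α)))
      ∧ (((ribbonA α : ℕ) : ZMod p) = 1 ↔
        (((u ∈ DFin α ∧ v ∈ DFin α) ∧ ¬ Even (DFin α).card)
          ∨ ((u ∉ DFin α ∧ v ∉ DFin α) ∧ Even (DFin α).card)))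
      ∧ (((ribbonA α : ℕ) : ZMod p) = -1 ↔
        (((u ∈ DFin α ∧ v ∈ DFin α) ∧ Even (DFin α).card)
          ∨ ((u ∉ DFin α ∧ v ∉ DFin α) ∧ ¬ Even (DFin α).card)))
      ∧ (((ribbonA α : ℕ) : ZMod p) = 0 ∨ ((ribbonA α : ℕ) : ZMod p) = 1
          ∨ ((ribbonA α : ℕ) : ZMod p) = -1) := by
    intro α
    rw [hform α]
    by_cases hu' : u ∈ DFin α <;> by_cases hv' : v ∈ DFin α <;>
      by_cases hev : Even (DFin α).card
    · have hx : ((-1 : ZMod p)) ^ (DFin α).card * (1 - (if u ∈ DFin α then 1 else 0)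
          - (if v ∈ DFin α then 1 else 0)) = -1 := by
        rw [if_pos hu', if_pos hv', hpow1 _ hev]; ring
      rw [hx]
      simp [hu', hv', hev, hm10, hm11]
    · have hx : ((-1 : ZMod p)) ^ (DFin α).card * (1 - (if u ∈ DFin α then 1 else 0)
          - (if v ∈ DFin α then 1 else 0)) = 1 := by
        rw [if_pos hu', if_pos hv', hpow2 _ hev]; ring
      rw [hx]
      simp [hu', hv', hev, h10, h1m1]
    · have hx : ((-1 : ZMod p)) ^ (DFin α).card * (1 - (if u ∈ DFin α then 1 else 0)
          - (if v ∈ DFin α then 1 else 0)) = 0 := by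
        rw [if_pos hu', if_neg hv']; ring
      rw [hx]
      simp [hu', hv', hev, h01, h0m1]
    · have hx : ((-1 : ZMod p)) ^ (DFin α).card * (1 - (if u ∈ DFin α then 1 else 0)
          - (if v ∈ DFin α then 1 else 0)) = 0 := by
        rw [if_pos hu', if_neg hv']; ring
      rw [hx]
      simp [hu', hv', hev, h01, h0m1]
    · have hx : ((-1 : ZMod p)) ^ (DFin α).card * (1 - (if u ∈ DFin α then 1 else 0)
          - (if v ∈ DFin α then 1 else 0)) = 0 := by
        rw [if_neg hu', if_pos hv']; ring
      rw [hx]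
      simp [hu', hv', hev, h01, h0m1]
    · have hx : ((-1 : ZMod p)) ^ (DFin α).card * (1 - (if u ∈ DFin α then 1 else 0)
          - (if v ∈ DFin α then 1 else 0)) = 0 := by
        rw [if_neg hu', if_pos hv']; ring
      rw [hx]
      simp [hu', hv', hev, h01, h0m1]
    · have hx : ((-1 : ZMod p)) ^ (DFin α).card * (1 - (if u ∈ DFin α then 1 else 0)
          - (if v ∈ DFin α then 1 else 0)) = 1 := by
        rw [if_neg hu', if_neg hv', hpow1 _ hev]; ring
      rw [hx]
      simp [hu', hv', hev, h10, h1m1]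
    · have hx : ((-1 : ZMod p)) ^ (DFin α).card * (1 - (if u ∈ DFin α then 1 else 0)
          - (if v ∈ DFin α then 1 else 0)) = -1 := by
        rw [if_neg hu', if_neg hv', hpow2 _ hev]; ring
      rw [hx]
      simp [hu', hv', hev, hm10, hm11]
  -- residue translation
  have hmodiff : ∀ (i : ℕ), i < p → ∀ α : Composition n,
      (ribbonA α % p = i ↔ ((ribbonA α : ℕ) : ZMod p) = (i : ZMod p)) := by
    intro i hi α
    rw [show ribbonA α % p = ((ribbonA α : ℕ) : ZMod p).val from (ZMod.val_natCast _ _).symm]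
    constructor
    · intro h
      rw [← h]
      exact (ZMod.natCast_rightInverse _).symm
    · intro h
      rw [h, ZMod.val_natCast, Nat.mod_eq_of_lt hi]
  have hpm1cast : (((p - 1 : ℕ)) : ZMod p) = -1 := by
    rw [Nat.cast_sub (by omega : 1 ≤ p)]
    rw [ZMod.natCast_self]
    push_cast
    ring
  -- pow arithmetic
  have hpowsum3 : 2 ^ (n - 4) + 2 ^ (n - 4) = 2 ^ (n - 3) := by
    rw [← two_mul, ← pow_succ']
    congr 1
    omega
  have hpowsum2 : 2 ^ (n - 3) + 2 ^ (n - 3) = 2 ^ (n - 2) := by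
    rw [← two_mul, ← pow_succ']
    congr 1
    omega
  have hparJ := count_parity ((((Finset.Ioo 0 n)).erase u).erase v) hJne
  refine ⟨?_, ?_, ?_, ?_⟩
  · -- residue 0
    have hfe : (Finset.univ.filter fun α : Composition n => ribbonA α % p = 0)
        = (Finset.univ.filter fun α : Composition n =>
            (u ∈ DFin α ∧ v ∉ DFin α) ∨ (u ∉ DFin α ∧ v ∈ DFin α)) := by
      apply Finset.filter_congr
      intro α _
      rw [hmodiff 0 hp.pos α, Nat.cast_zero]
      exact (hcases α).1
    rw [hfe, count_DFin (fun T => (u ∈ T ∧ v ∉ T) ∨ (u ∉ T ∧ v ∈ T)),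
      Finset.filter_or, Finset.card_union_of_disjoint (by
        rw [Finset.disjoint_left]
        intro T hT1 hT2
        rw [Finset.mem_filter] at hT1 hT2
        exact hT2.2.1 hT1.2.1)]
    have hswap : ((Finset.Ioo 0 n).powerset.filter fun T => u ∉ T ∧ v ∈ T)
        = ((Finset.Ioo 0 n).powerset.filter fun T => v ∈ T ∧ u ∉ T) :=
      Finset.filter_congr (fun T _ => by tauto)
    rw [count_mixed huI huv, hswap, count_mixed hvI (Ne.symm huv),
      Finset.card_powerset, Finset.card_powerset, hJcard]
    have : ((((Finset.Ioo 0 n)).erase v).erase u).card = n - 3 :=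
      erase_erase_card hvI huI (Ne.symm huv)
    rw [this]
    exact hpowsum2
  · -- residue 1
    have hfe : (Finset.univ.filter fun α : Composition n => ribbonA α % p = 1)
        = (Finset.univ.filter fun α : Composition n =>
            ((u ∈ DFin α ∧ v ∈ DFin α) ∧ ¬ Even (DFin α).card)
              ∨ ((u ∉ DFin α ∧ v ∉ DFin α) ∧ Even (DFin α).card)) := by
      apply Finset.filter_congr
      intro α _
      rw [hmodiff 1 (by omega) α, Nat.cast_one]
      exact (hcases α).2.1
    rw [hfe, count_DFin (fun T => ((u ∈ T ∧ v ∈ T) ∧ ¬ Even T.card)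
        ∨ ((u ∉ T ∧ v ∉ T) ∧ Even T.card)),
      Finset.filter_or, Finset.card_union_of_disjoint (by
        rw [Finset.disjoint_left]
        intro T hT1 hT2
        rw [Finset.mem_filter] at hT1 hT2
        exact hT2.2.1.1 hT1.2.1.1)]
    rw [count_both huI hvI huv (fun c => ¬ Even c), count_neither (fun c => Even c)]
    have hpar2 : (((((Finset.Ioo 0 n)).erase u).erase v).powerset.filter
          fun R => ¬ Even (R.card + 2))
        = (((((Finset.Ioo 0 n)).erase u).erase v).powerset.filter
          fun R => ¬ Even R.card) :=
      Finset.filter_congr (fun R _ => by simp [Nat.even_add])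
    rw [hpar2, hparJ.2, hparJ.1, hJcard]
    have h43 : n - 3 - 1 = n - 4 := by omega
    rw [h43]
    exact hpowsum3
  · -- residue p - 1
    have hfe : (Finset.univ.filter fun α : Composition n => ribbonA α % p = p - 1)
        = (Finset.univ.filter fun α : Composition n =>
            ((u ∈ DFin α ∧ v ∈ DFin α) ∧ Even (DFin α).card)
              ∨ ((u ∉ DFin α ∧ v ∉ DFin α) ∧ ¬ Even (DFin α).card)) := by
      apply Finset.filter_congr
      intro α _
      rw [hmodiff (p - 1) (by omega) α, hpm1cast]
      exact (hcases α).2.2.1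
    rw [hfe, count_DFin (fun T => ((u ∈ T ∧ v ∈ T) ∧ Even T.card)
        ∨ ((u ∉ T ∧ v ∉ T) ∧ ¬ Even T.card)),
      Finset.filter_or, Finset.card_union_of_disjoint (by
        rw [Finset.disjoint_left]
        intro T hT1 hT2
        rw [Finset.mem_filter] at hT1 hT2
        exact hT2.2.1.1 hT1.2.1.1)]
    rw [count_both huI hvI huv (fun c => Even c), count_neither (fun c => ¬ Even c)]
    have hpar2 : (((((Finset.Ioo 0 n)).erase u).erase v).powerset.filter
          fun R => Even (R.card + 2))
        = (((((Finset.Ioo 0 n)).erase u).erase v).powerset.filter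
          fun R => Even R.card) :=
      Finset.filter_congr (fun R _ => by simp [Nat.even_add])
    rw [hpar2, hparJ.1, hparJ.2, hJcard]
    have h43 : n - 3 - 1 = n - 4 := by omega
    rw [h43]
    exact hpowsum3
  · -- other residues
    intro i hi hi0 hi1 hipm
    rw [Finset.card_eq_zero, Finset.filter_eq_empty_iff]
    intro α _
    intro hcontra
    have hieq := (hmodiff i hi α).mp hcontra
    rcases (hcases α).2.2.2 with h | h | h
    · rw [h] at hieq
      have : i % p = 0 := by
        rw [show (0 : ℕ) = ZMod.val (0 : ZMod p) from (ZMod.val_zero).symm, ← hieq.symm,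
          ZMod.val_natCast]
      rw [Nat.mod_eq_of_lt hi] at this
      exact hi0 this
    · rw [h] at hieq
      have : i % p = 1 := by
        rw [show (1 : ℕ) = ZMod.val (1 : ZMod p) from (ZMod.val_one p).symm, ← hieq.symm,
          ZMod.val_natCast]
      rw [Nat.mod_eq_of_lt hi] at this
      exact hi1 this
    · rw [h] at hieq
      rw [← hpm1cast] at hieq
      have : i % p = (p - 1) % p := by
        have h2 := congrArg ZMod.val hieq
        rw [ZMod.val_natCast, ZMod.val_natCast] at h2
        omega
      rw [Nat.mod_eq_of_lt hi, Nat.mod_eq_of_lt (by omega)] at this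
      exact hipm this

end MainThm
end

section
/- For every pseudo-composition α of n, the type B ribbon number r^B_α = |{w ∈ B_n : D(w) = D(α)}| is odd. -/
/-- Signed permutations of `[n]`: bijections `w` of `ℤ` with `w(-i) = -w(i)` that fix
all integers of absolute value greater than `n`.  These form the hyperoctahedral
group `Bₙ`. -/
def SignedPerms (n : ℕ) : Set (ℤ → ℤ) :=
  {w | Function.Bijective w ∧ (∀ i : ℤ, w (-i) = -w i) ∧ ∀ i : ℤ, (n : ℤ) < |i| → w i = i}

/-- The type B descent set `D(w) = {i ∈ {0,…,n-1} : w(i) > w(i+1)}` (note `w(0) = 0`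
automatically). -/
def DesB (n : ℕ) (w : ℤ → ℤ) : Set ℕ :=
  {i | i < n ∧ w ((i : ℤ) + 1) < w (i : ℤ)}

/-- A pseudo-composition of `n`: a sequence `(β₁, …, β_ℓ)` with `β₁ ≥ 0`,
`β₂, …, β_ℓ > 0` and `β₁ + ⋯ + β_ℓ = n`. -/
structure PseudoComposition (n : ℕ) where
  parts : List ℕ
  ne_nil : parts ≠ []
  tail_pos : ∀ i ∈ parts.tail, 0 < i
  sum_eq : parts.sum = n

/-- The descent set `D(β) = {β₁, β₁+β₂, …, β₁+⋯+β_{ℓ-1}} ⊆ {0,…,n-1}` of a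
pseudo-composition. -/
def DsetB {n : ℕ} (β : PseudoComposition n) : Set ℕ :=
  {m | ∃ i, 0 < i ∧ i < β.parts.length ∧ (β.parts.take i).sum = m}

/-- The type B ribbon number `r^B_α = |{w ∈ Bₙ : D(w) = D(α)}|`. -/
noncomputable def ribbonB {n : ℕ} (α : PseudoComposition n) : ℕ :=
  Set.ncard {w ∈ SignedPerms n | DesB n w = DsetB α}

/-!
Write `r(T)` for the number of `w ∈ Bₙ` with `D(w) = T` and `b(T) = ∑_{T' ⊆ T} r(T')` for the
number with `D(w) ⊆ T`. The identity is the only signed permutation without descents, so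
`r(∅) = 1`. If `T` is nonempty with maximum `s`, then replacing the window `w(s+1), …, w(n)` by
`-w(n), …, -w(s+1)` keeps `D(w) ⊆ T` (descents after `s` are mirrored, and there are none) and is
a fixed-point-free involution, so `b(T)` is even. Since a nonempty `T` has an odd number of
proper subsets, induction on `T` gives `r(T) ≡ 1 (mod 2)`. This applies to `T = D(α)`, which lies
in `{0, …, n-1}` because all parts of `α` after the first are positive.
-/

open Finset

theorem Int.add_sub_le_of_lt_succ {f : ℕ → ℤ} {n : ℕ} (hf : ∀ i < n, f i < f (i + 1))
    {i j : ℕ} (hij : i ≤ j) (hjn : j ≤ n) : f i + (j - i : ℕ) ≤ f j := by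
  induction j, hij using Nat.le_induction with
  | base => simp
  | succ j hij ih =>
    have := hf j (by omega)
    have := ih (by omega)
    omega

theorem Finset.even_card_of_involution {α : Type*} {s : Finset α} (g : α → α)
    (hg_mem : ∀ a ∈ s, g a ∈ s) (hg_invol : ∀ a ∈ s, g (g a) = a) (hg_ne : ∀ a ∈ s, g a ≠ a) :
    Even #s := by
  rw [← ZMod.natCast_eq_zero_iff_even, card_eq_sum_ones, Nat.cast_sum, Nat.cast_one]
  exact sum_involution (fun a _ => g a) (fun _ _ => by decide)
    (fun a ha _ => hg_ne a ha) hg_mem hg_invol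

theorem Finset.card_filter_subset_eq_sum_powerset {α β : Type*} [DecidableEq β] (s : Finset α)
    (f : α → Finset β) (T : Finset β) :
    #{a ∈ s | f a ⊆ T} = ∑ T' ∈ T.powerset, #{a ∈ s | f a = T'} := by
  rw [card_eq_sum_card_fiberwise fun a ha => mem_powerset.2 (mem_filter.1 ha).2]
  refine sum_congr rfl fun T' hT' => ?_
  rw [filter_filter]
  congr 1
  exact filter_congr fun a _ => ⟨fun h => h.2, fun h => ⟨h ▸ mem_powerset.1 hT', h⟩⟩

theorem Finset.odd_of_even_sum_powerset {α : Type*} [DecidableEq α] {f : Finset α → ℕ}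
    {U : Finset α} (h_empty : Odd (f ∅))
    (h_sum : ∀ T ⊆ U, T.Nonempty → Even (∑ T' ∈ T.powerset, f T')) :
    ∀ T ⊆ U, Odd (f T) := by
  intro T
  induction T using strongInduction with
  | _ T ih =>
    intro hTU
    obtain rfl | hne := T.eq_empty_or_nonempty
    · exact h_empty
    have h_proper : ∑ T' ∈ T.powerset.erase T, (f T' : ZMod 2) = 1 := by
      rw [sum_congr (s₁ := T.powerset.erase T) rfl fun T' hT' => ZMod.natCast_eq_one_iff_odd.2
          (ih T' (mem_ssubsets.1 hT') ((mem_ssubsets.1 hT').subset.trans hTU)),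
        sum_const, nsmul_one, ZMod.natCast_eq_one_iff_odd,
        card_erase_of_mem (mem_powerset_self T), card_powerset]
      exact Nat.Even.sub_odd Nat.one_le_two_pow (Nat.even_pow.2 ⟨even_two, hne.card_ne_zero⟩)
        odd_one
    have h_all := h_sum T hTU hne
    rw [← ZMod.natCast_eq_zero_iff_even, Nat.cast_sum,
      ← sum_erase_add _ _ (mem_powerset_self T), h_proper] at h_all
    rw [← ZMod.natCast_eq_one_iff_odd, eq_neg_of_add_eq_zero_right h_all]
    rfl

namespace SignedPerms

variable {n : ℕ} {w v : ℤ → ℤ}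

theorem map_zero (hw : w ∈ SignedPerms n) : w 0 = 0 := by
  have h := hw.2.1 0
  rw [neg_zero] at h
  omega

theorem abs_apply_le (hw : w ∈ SignedPerms n) {i : ℤ} (hi : |i| ≤ n) : |w i| ≤ n := by
  by_contra! h
  rw [hw.1.1 (hw.2.2 _ h)] at h
  omega

theorem id_mem : id ∈ SignedPerms n :=
  ⟨Function.bijective_id, fun _ => rfl, fun _ _ => rfl⟩

theorem comp_mem (hw : w ∈ SignedPerms n) (hv : v ∈ SignedPerms n) : w ∘ v ∈ SignedPerms n :=
  ⟨hw.1.comp hv.1, fun i => by simp only [Function.comp_apply, hv.2.1, hw.2.1],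
    fun i hi => by simp only [Function.comp_apply, hv.2.2 i hi, hw.2.2 i hi]⟩

theorem finite (n : ℕ) : (SignedPerms n).Finite := by
  let box := Finset.Icc (-(n : ℤ)) n
  have mem_box {i : ℤ} : i ∈ box ↔ |i| ≤ n := by rw [Finset.mem_Icc, abs_le]
  let restrict (w : SignedPerms n) : box → box :=
    fun i => ⟨w.1 i, mem_box.2 (abs_apply_le w.2 (mem_box.1 i.2))⟩
  refine Set.finite_coe_iff.1 (Finite.of_injective restrict fun w v hwv => ?_)
  ext i
  by_cases hi : |i| ≤ n
  · exact congrArg Subtype.val (congrFun hwv ⟨i, mem_box.2 hi⟩)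
  · rw [w.2.2.2 i (not_le.1 hi), v.2.2.2 i (not_le.1 hi)]

theorem eq_id_of_apply_natCast (hw : w ∈ SignedPerms n) (h : ∀ i : ℕ, i ≤ n → w i = i) :
    w = id := by
  funext i
  by_cases hi : (n : ℤ) < |i|
  · exact hw.2.2 i hi
  obtain ⟨k, rfl | rfl⟩ := Int.eq_nat_or_neg i
  · rw [Nat.abs_cast] at hi
    exact h k (by omega)
  · rw [abs_neg, Nat.abs_cast] at hi
    rw [hw.2.1, h k (by omega), id_eq]

-- `0 = w(0) < w(1) < ⋯ < w(n) ≤ n` forces `w(i) = i`.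
theorem eq_id_of_desB_eq_empty (hw : w ∈ SignedPerms n) (hD : DesB n w = ∅) : w = id := by
  have hstep : ∀ i < n, w i < w ((i + 1 : ℕ) : ℤ) := by
    intro i hi
    have hnot : ¬ w (i + 1) < w i := fun h => Set.eq_empty_iff_forall_notMem.1 hD i ⟨hi, h⟩
    have hne : w (i + 1) ≠ w i := fun h => by have := hw.1.1 h; omega
    push_cast
    exact lt_of_le_of_ne (not_lt.1 hnot) hne.symm
  have hwn : w n ≤ n := (abs_le.1 (abs_apply_le hw (by simp))).2
  refine eq_id_of_apply_natCast hw fun i hi => le_antisymm ?_ ?_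
  · have := Int.add_sub_le_of_lt_succ (f := fun j : ℕ => w j) hstep hi le_rfl
    omega
  · have := Int.add_sub_le_of_lt_succ (f := fun j : ℕ => w j) hstep (Nat.zero_le i) hi
    simp only [Nat.cast_zero, map_zero hw] at this
    omega

end SignedPerms

/-- On positions, `w ∘ blockReversal n s` keeps `w(1), …, w(s)` and replaces
`w(s+1), …, w(n)` by `-w(n), …, -w(s+1)`. -/
def blockReversal (n s : ℕ) (i : ℤ) : ℤ :=
  if (s : ℤ) < i ∧ i ≤ n then i - (n + s + 1)
  else if -(n : ℤ) ≤ i ∧ i < -s then i + (n + s + 1) else i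

theorem blockReversal_involutive (n s : ℕ) : Function.Involutive (blockReversal n s) := by
  intro i
  simp only [blockReversal]
  split_ifs <;> omega

theorem blockReversal_mem (n s : ℕ) : blockReversal n s ∈ SignedPerms n := by
  refine ⟨(blockReversal_involutive n s).bijective, fun i => ?_, fun i hi => ?_⟩
  · simp only [blockReversal]
    split_ifs <;> omega
  · rw [lt_abs] at hi
    simp only [blockReversal]
    split_ifs <;> omega

section BlockReversal

variable {n s : ℕ} {w : ℤ → ℤ}

theorem desB_comp_blockReversal_subset {T : Set ℕ} (hw : w ∈ SignedPerms n) (hsT : s ∈ T)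
    (hs : ∀ t ∈ T, t ≤ s) (hT : DesB n w ⊆ T) : DesB n (w ∘ blockReversal n s) ⊆ T := by
  rintro i ⟨hin, hdes⟩
  simp only [Function.comp_apply, blockReversal] at hdes
  rcases lt_trichotomy i s with hlt | rfl | hgt
  · rw [if_neg (by omega), if_neg (by omega), if_neg (by omega), if_neg (by omega)] at hdes
    exact hT ⟨hin, hdes⟩
  · exact hsT
  · -- positions `i, i + 1` read `-w(k + 1), -w(k)` with `k = n + s - i`: a descent of `w` past `s`
    set k := n + s - i with hk
    have hi : (i : ℤ) = n + s - k := by omega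
    rw [if_pos (by omega), if_pos (by omega), hi, show (n + s - k - (n + s + 1) : ℤ) = -(k + 1) by
      ring, show (n + s - k + 1 - (n + s + 1) : ℤ) = -k by ring, hw.2.1, hw.2.1, neg_lt_neg_iff]
      at hdes
    have := hs k (hT ⟨by omega, hdes⟩)
    omega

theorem comp_blockReversal_ne (hw : w ∈ SignedPerms n) (hs : s < n) :
    w ∘ blockReversal n s ≠ w := by
  intro h
  have := hw.1.1 (congrFun h n)
  simp only [blockReversal] at this
  split_ifs at this <;> omega

end BlockReversal

noncomputable def signedPermsFinset (n : ℕ) : Finset (ℤ → ℤ) := (SignedPerms.finite n).toFinset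

theorem mem_signedPermsFinset {n : ℕ} {w : ℤ → ℤ} : w ∈ signedPermsFinset n ↔ w ∈ SignedPerms n :=
  Set.Finite.mem_toFinset _

def desFinset (n : ℕ) (w : ℤ → ℤ) : Finset ℕ := {i ∈ range n | w (i + 1) < w i}

theorem coe_desFinset (n : ℕ) (w : ℤ → ℤ) : (desFinset n w : Set ℕ) = DesB n w := by
  ext i
  simp [desFinset, DesB]

theorem ncard_desB_eq_card_desFinset (n : ℕ) (T : Finset ℕ) :
    {w ∈ SignedPerms n | DesB n w = T}.ncard = #{w ∈ signedPermsFinset n | desFinset n w = T} := by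
  rw [← Set.ncard_coe_finset]
  congr 1
  ext w
  simp [mem_signedPermsFinset, ← coe_desFinset]

theorem filter_desFinset_eq_empty_eq_id (n : ℕ) :
    {w ∈ signedPermsFinset n | desFinset n w = ∅} = {id} := by
  ext w
  simp only [Finset.mem_filter, Finset.mem_singleton, mem_signedPermsFinset,
    ← Finset.coe_eq_empty, coe_desFinset]
  refine ⟨fun ⟨hw, hD⟩ => SignedPerms.eq_id_of_desB_eq_empty hw hD, ?_⟩
  rintro rfl
  exact ⟨SignedPerms.id_mem, Set.eq_empty_of_forall_notMem fun i hi => by simp [DesB] at hi⟩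

theorem even_card_desFinset_subset {n : ℕ} {T : Finset ℕ} (hT : T ⊆ range n) (hne : T.Nonempty) :
    Even #{w ∈ signedPermsFinset n | desFinset n w ⊆ T} := by
  have hs := T.max'_mem hne
  refine even_card_of_involution (· ∘ blockReversal n (T.max' hne)) (fun w hw => ?_)
    (fun w _ => by simp [Function.comp_assoc, (blockReversal_involutive n _).comp_self])
    (fun w hw => comp_blockReversal_ne (mem_signedPermsFinset.1 (Finset.mem_filter.1 hw).1)
      (Finset.mem_range.1 (hT hs)))
  simp only [Finset.mem_filter, mem_signedPermsFinset, ← Finset.coe_subset, coe_desFinset] at hw ⊢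
  exact ⟨SignedPerms.comp_mem hw.1 (blockReversal_mem n _),
    desB_comp_blockReversal_subset hw.1 hs (fun t ht => T.le_max' t ht) hw.2⟩

theorem odd_card_desFinset_eq {n : ℕ} {T : Finset ℕ} (hT : T ⊆ range n) :
    Odd #{w ∈ signedPermsFinset n | desFinset n w = T} := by
  refine odd_of_even_sum_powerset (f := fun T => #{w ∈ signedPermsFinset n | desFinset n w = T})
    ?_ (fun T hT hne => ?_) T hT
  · simp [filter_desFinset_eq_empty_eq_id]
  · rw [← Finset.card_filter_subset_eq_sum_powerset]
    exact even_card_desFinset_subset hT hne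

theorem PseudoComposition.dsetB_subset_range {n : ℕ} (α : PseudoComposition n) :
    DsetB α ⊆ range n := by
  rintro m ⟨i, hi_pos, hi_len, rfl⟩
  obtain ⟨j, rfl⟩ := Nat.exists_eq_add_one_of_ne_zero hi_pos.ne'
  have hpos : 0 < α.parts[j + 1] :=
    List.getElem_tail (l := α.parts) (i := j) (by simp; omega) ▸
      α.tail_pos _ (List.getElem_mem _)
  have hle : (α.parts.take (j + 1 + 1)).sum ≤ α.parts.sum :=
    (List.take_sublist _ _).sum_le_sum fun _ _ => Nat.zero_le _
  rw [List.sum_take_succ _ _ hi_len, α.sum_eq] at hle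
  simp only [Finset.coe_range, Set.mem_Iio]
  omega

/-- Every type B ribbon number is odd. -/
theorem ribbonB_odd {n : ℕ} (α : PseudoComposition n) : Odd (ribbonB α) := by
  have hfin : (DsetB α).Finite := (range n).finite_toSet.subset α.dsetB_subset_range
  have hT : hfin.toFinset ⊆ range n := by
    rw [← Finset.coe_subset, hfin.coe_toFinset]
    exact α.dsetB_subset_range
  rw [ribbonB, ← hfin.coe_toFinset, ncard_desB_eq_card_desFinset]
  exact odd_card_desFinset_eq hT
end

section
/- Let p be a prime and let n = p^{d_1} + ⋯ + p^{d_k} be a sum of k distinct powers of p. For any composition β of n, the multinomial coefficient n!/(β_1!⋯β_ℓ!) is congruent to 1 modulo p if each part β_i is a sum of a subset of {p^{d_1},...,p^{d_k}} and these subsets partition {p^{d_1},...,p^{d_k}}, and is congruent to 0 modulo p otherwise. -/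
open Finset

section Aux
variable {p : ℕ}

def sub1 (E : Finset ℕ) : Finset ℕ := (E.erase 0).image (· - 1)

lemma decomp (hp : 0 < p) (E : Finset ℕ) :
    ∑ m ∈ E, p ^ m = (if 0 ∈ E then 1 else 0) + p * ∑ m ∈ sub1 E, p ^ m := by
  have hinj : ∀ x ∈ E.erase 0, ∀ y ∈ E.erase 0, x - 1 = y - 1 → x = y := by
    intro a ha b hb h
    simp only [Finset.mem_erase] at ha hb
    omega
  have h1 : ∑ m ∈ sub1 E, p ^ m = ∑ m ∈ E.erase 0, p ^ (m - 1) :=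
    Finset.sum_image hinj
  have h2 : p * ∑ m ∈ E.erase 0, p ^ (m - 1) = ∑ m ∈ E.erase 0, p ^ m := by
    rw [Finset.mul_sum]
    refine Finset.sum_congr rfl fun m hm => ?_
    have hm0 : m ≠ 0 := (Finset.mem_erase.mp hm).1
    rw [← pow_succ']
    congr 1
    omega
  rw [h1, h2]
  by_cases h0 : 0 ∈ E
  · rw [if_pos h0, ← Finset.add_sum_erase _ _ h0, pow_zero]
  · rw [if_neg h0, Finset.erase_eq_of_notMem h0, zero_add]

lemma sumpow_mod (hp : 1 < p) (E : Finset ℕ) :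
    (∑ m ∈ E, p ^ m) % p = if 0 ∈ E then 1 else 0 := by
  rw [decomp (by omega) E, Nat.add_mul_mod_self_left, Nat.mod_eq_of_lt]
  split_ifs <;> omega

lemma sumpow_div (hp : 1 < p) (E : Finset ℕ) :
    (∑ m ∈ E, p ^ m) / p = ∑ m ∈ sub1 E, p ^ m := by
  rw [decomp (by omega) E, Nat.add_mul_div_left _ _ (by omega : 0 < p), Nat.div_eq_of_lt]
  · omega
  · split_ifs <;> omega

lemma erase_zero_eq (E : Finset ℕ) : E.erase 0 = (sub1 E).image (· + 1) := by
  ext a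
  simp only [sub1, Finset.mem_image, Finset.mem_erase]
  constructor
  · rintro ⟨ha, haE⟩
    exact ⟨a - 1, ⟨a, ⟨ha, haE⟩, rfl⟩, by omega⟩
  · rintro ⟨b, ⟨c, ⟨hc0, hcE⟩, rfl⟩, rfl⟩
    constructor
    · omega
    · have : c - 1 + 1 = c := by omega
      rwa [this]

lemma sumpow_inj (hp : 1 < p) : ∀ N (E F : Finset ℕ),
    ∑ m ∈ E, p ^ m = N → ∑ m ∈ F, p ^ m = N → E = F := by
  intro N
  induction N using Nat.strong_induction_on with
  | _ N ih =>
    intro E F hE hF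
    rcases Nat.eq_zero_or_pos N with h0 | h0
    · subst h0
      have hE' : E = ∅ := Finset.eq_empty_of_forall_notMem fun x hx =>
        absurd (Finset.sum_eq_zero_iff.mp hE x hx) (pow_ne_zero x (by omega))
      have hF' : F = ∅ := Finset.eq_empty_of_forall_notMem fun x hx =>
        absurd (Finset.sum_eq_zero_iff.mp hF x hx) (pow_ne_zero x (by omega))
      rw [hE', hF']
    · have hmE : (if 0 ∈ E then 1 else 0) = N % p := by rw [← sumpow_mod hp E, hE]
      have hmF : (if 0 ∈ F then 1 else 0) = N % p := by rw [← sumpow_mod hp F, hF]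
      have hdE : ∑ m ∈ sub1 E, p ^ m = N / p := by rw [← sumpow_div hp E, hE]
      have hdF : ∑ m ∈ sub1 F, p ^ m = N / p := by rw [← sumpow_div hp F, hF]
      have hlt : N / p < N := Nat.div_lt_self h0 hp
      have hsub : sub1 E = sub1 F := ih _ hlt _ _ hdE hdF
      have h0iff : (0 ∈ E) ↔ (0 ∈ F) := by
        constructor <;> intro h
        · by_contra h2
          rw [if_pos h] at hmE
          rw [if_neg h2] at hmF
          omega
        · by_contra h2
          rw [if_pos h] at hmF
          rw [if_neg h2] at hmE
          omega
      have herase : E.erase 0 = F.erase 0 := by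
        rw [erase_zero_eq, erase_zero_eq, hsub]
      ext a
      rcases Nat.eq_zero_or_pos a with rfl | ha
      · exact h0iff
      · constructor <;> intro h
        · have : a ∈ E.erase 0 := Finset.mem_erase.mpr ⟨by omega, h⟩
          rw [herase] at this
          exact (Finset.mem_erase.mp this).2
        · have : a ∈ F.erase 0 := Finset.mem_erase.mpr ⟨by omega, h⟩
          rw [← herase] at this
          exact (Finset.mem_erase.mp this).2

lemma ite_one_zero_mul {R : Type*} [MulZeroOneClass R] {A B : Prop} [Decidable A] [Decidable B] :
    (if A then (1:R) else 0) * (if B then (1:R) else 0) = if A ∧ B then 1 else 0 := by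
  split_ifs <;> simp_all

lemma choose_le_one (c r : ℕ) (h : c ≤ 1) : c.choose r = if r ≤ c then 1 else 0 := by
  interval_cases c <;> rcases r with _ | _ | r <;> simp [Nat.choose]

variable [hp : Fact p.Prime]

lemma choose_sumpow : ∀ N (E : Finset ℕ), ∑ m ∈ E, p ^ m = N → ∀ b : ℕ,
    ((N.choose b : ZMod p)) = if ∃ F ⊆ E, b = ∑ m ∈ F, p ^ m then 1 else 0 := by
  have hp1 : 1 < p := hp.out.one_lt
  intro N
  induction N using Nat.strong_induction_on with
  | _ N ih =>
    intro E hE b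
    rcases Nat.eq_zero_or_pos N with h0 | h0
    · subst h0
      rcases Nat.eq_zero_or_pos b with rfl | hb
      · rw [if_pos ⟨∅, Finset.empty_subset _, by simp⟩]
        simp
      · rw [Nat.choose_eq_zero_of_lt hb, if_neg]
        · simp
        · rintro ⟨F, hF, rfl⟩
          have : ∑ m ∈ F, p ^ m ≤ ∑ m ∈ E, p ^ m :=
            Finset.sum_le_sum_of_subset hF
          omega
    · have lucas := (Choose.choose_modEq_choose_mod_mul_choose_div_nat (n := N) (k := b) (p := p))
      have lucas' : ((N.choose b : ZMod p)) =
          (((N % p).choose (b % p) : ℕ) : ZMod p) * (((N / p).choose (b / p) : ℕ) : ZMod p) := by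
        have := (ZMod.natCast_eq_natCast_iff _ _ _).mpr lucas
        push_cast at this ⊢
        exact this
      have hmod : N % p = if 0 ∈ E then 1 else 0 := by rw [← hE, sumpow_mod hp1]
      have hdiv : N / p = ∑ m ∈ sub1 E, p ^ m := by rw [← hE, sumpow_div hp1]
      have hlt : N / p < N := Nat.div_lt_self h0 hp1
      have ihM := ih _ hlt (sub1 E) hdiv.symm (b / p)
      have hc1 : (N % p) ≤ 1 := by rw [hmod]; split_ifs <;> omega
      have hfirst : (N % p).choose (b % p) = if b % p ≤ N % p then 1 else 0 :=
        choose_le_one _ _ hc1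
      have key : (b % p ≤ N % p ∧ ∃ F ⊆ sub1 E, b / p = ∑ m ∈ F, p ^ m) ↔
          (∃ F ⊆ E, b = ∑ m ∈ F, p ^ m) := by
        constructor
        · rintro ⟨hble, F', hF'sub, hF'⟩
          have hmle : b % p ≤ 1 := le_trans hble hc1
          set F0 : Finset ℕ := F'.image (· + 1) with hF0
          have hF0sub : F0 ⊆ E.erase 0 := by
            intro a ha
            rw [hF0, Finset.mem_image] at ha
            obtain ⟨c, hc, rfl⟩ := ha
            have := hF'sub hc
            rw [sub1, Finset.mem_image] at this
            obtain ⟨m, hm, rfl⟩ := this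
            have hm' := Finset.mem_erase.mp hm
            have : m - 1 + 1 = m := by omega
            rw [this]
            exact hm
          have hsumF0 : ∑ m ∈ F0, p ^ m = p * ∑ m ∈ F', p ^ m := by
            rw [hF0, Finset.sum_image (by intro x _ y _ h; simp only at h; omega), Finset.mul_sum]
            refine Finset.sum_congr rfl fun m _ => ?_
            rw [← pow_succ']
          have hbm := Nat.div_add_mod b p
          rcases Nat.eq_zero_or_pos (b % p) with hb0 | hb1
          · refine ⟨F0, le_trans hF0sub (Finset.erase_subset _ _), ?_⟩
            rw [hsumF0, ← hF']
            omega
          · have hbp1 : b % p = 1 := by omega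
            have h0E : 0 ∈ E := by
              by_contra h
              rw [hmod, if_neg h] at hble
              omega
            refine ⟨insert 0 F0, ?_, ?_⟩
            · intro a ha
              rcases Finset.mem_insert.mp ha with rfl | ha'
              · exact h0E
              · exact (Finset.erase_subset _ _) (hF0sub ha')
            · have h0F0 : 0 ∉ F0 := by
                intro h
                have := hF0sub h
                exact (Finset.mem_erase.mp this).1 rfl
              rw [Finset.sum_insert h0F0, pow_zero, hsumF0, ← hF']
              omega
        · rintro ⟨F, hFsub, rfl⟩
          have hdF : ∑ m ∈ F, p ^ m = (if 0 ∈ F then 1 else 0) + p * ∑ m ∈ sub1 F, p ^ m :=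
            decomp (by omega) F
          have hFm : (∑ m ∈ F, p ^ m) % p = if 0 ∈ F then 1 else 0 := sumpow_mod hp1 F
          have hFd : (∑ m ∈ F, p ^ m) / p = ∑ m ∈ sub1 F, p ^ m := sumpow_div hp1 F
          constructor
          · rw [hFm, hmod]
            split_ifs with h1 h2
            · omega
            · exact absurd (hFsub h1) h2
            · omega
            · omega
          · refine ⟨sub1 F, ?_, hFd⟩
            rw [sub1, sub1]
            exact Finset.image_subset_image (Finset.erase_subset_erase _ hFsub)

      rw [lucas', hfirst, ihM]
      push_cast [apply_ite (fun x : ℕ => (x : ZMod p))]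
      rw [ite_one_zero_mul, if_congr key rfl rfl]
lemma choose_sumpow_fin {k : ℕ} (d : Fin k → ℕ) (hd : Function.Injective d)
    (S : Finset (Fin k)) (b : ℕ) :
    (((∑ j ∈ S, p ^ d j).choose b : ℕ) : ZMod p) =
      if ∃ T ⊆ S, b = ∑ j ∈ T, p ^ d j then 1 else 0 := by
  have himg : ∑ j ∈ S, p ^ d j = ∑ m ∈ S.image d, p ^ m :=
    (Finset.sum_image (fun x _ y _ h => hd h)).symm
  rw [himg, choose_sumpow _ (S.image d) rfl b]
  refine if_congr ?_ rfl rfl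
  constructor
  · rintro ⟨F, hF, rfl⟩
    refine ⟨S.filter (fun j => d j ∈ F), Finset.filter_subset _ _, ?_⟩
    have himgT : (S.filter (fun j => d j ∈ F)).image d = F := by
      ext m
      simp only [Finset.mem_image, Finset.mem_filter]
      constructor
      · rintro ⟨j, ⟨hjS, hjF⟩, rfl⟩
        exact hjF
      · intro hm
        obtain ⟨j, hjS, rfl⟩ := Finset.mem_image.mp (hF hm)
        exact ⟨j, ⟨hjS, hm⟩, rfl⟩
    conv_lhs => rw [← himgT]
    exact Finset.sum_image (fun x _ y _ h => hd h)
  · rintro ⟨T, hT, rfl⟩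
    exact ⟨T.image d, Finset.image_subset_image hT,
      (Finset.sum_image (fun x _ y _ h => hd h)).symm⟩

lemma subsetsum_inj {k : ℕ} (d : Fin k → ℕ) (hd : Function.Injective d)
    (T T' : Finset (Fin k)) (h : ∑ j ∈ T, p ^ d j = ∑ j ∈ T', p ^ d j) : T = T' := by
  have h1 : ∑ m ∈ T.image d, p ^ m = ∑ j ∈ T, p ^ d j :=
    Finset.sum_image (fun x _ y _ h => hd h)
  have h2 : ∑ m ∈ T'.image d, p ^ m = ∑ j ∈ T', p ^ d j :=
    Finset.sum_image (fun x _ y _ h => hd h)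
  have := sumpow_inj hp.out.one_lt (∑ j ∈ T', p ^ d j) (T.image d) (T'.image d)
    (by rw [h1, h]) h2
  exact Finset.image_injective hd this

def listMult : List ℕ → ℕ
  | [] => 1
  | b :: bs => (b + bs.sum).choose b * listMult bs

lemma listMult_mul (L : List ℕ) :
    listMult L * (L.map Nat.factorial).prod = L.sum.factorial := by
  induction L with
  | nil => simp [listMult]
  | cons b bs ih =>
    show (b + bs.sum).choose b * listMult bs * (b.factorial * (bs.map Nat.factorial).prod)
      = (b + bs.sum).factorial
    have h1 := Nat.choose_mul_factorial_mul_factorial (Nat.le_add_right b bs.sum)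
    rw [Nat.add_sub_cancel_left] at h1
    calc (b + bs.sum).choose b * listMult bs * (b.factorial * (bs.map Nat.factorial).prod)
        = ((b + bs.sum).choose b * b.factorial) * (listMult bs * (bs.map Nat.factorial).prod) := by
          ring
      _ = ((b + bs.sum).choose b * b.factorial) * bs.sum.factorial := by rw [ih]
      _ = (b + bs.sum).factorial := h1

lemma factorial_div (L : List ℕ) :
    L.sum.factorial / (L.map Nat.factorial).prod = listMult L := by
  have hpos : 0 < (L.map Nat.factorial).prod := by
    apply List.prod_pos
    intro a ha
    obtain ⟨b, _, rfl⟩ := List.mem_map.mp ha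
    exact Nat.factorial_pos b
  exact Nat.div_eq_of_eq_mul_left hpos (listMult_mul L).symm

open scoped Classical in
lemma main_lemma {k : ℕ} (d : Fin k → ℕ) (hd : Function.Injective d) :
    ∀ (L : List ℕ) (S : Finset (Fin k)), L.sum = ∑ j ∈ S, p ^ d j →
    ((listMult L : ℕ) : ZMod p) =
      if (∃ f : Fin L.length → Finset (Fin k),
          (∀ i, L.get i = ∑ j ∈ f i, p ^ d j) ∧ (∀ j ∈ S, ∃! i, j ∈ f i) ∧ (∀ i, f i ⊆ S))
      then 1 else 0 := by
  intro L
  induction L with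
  | nil =>
    intro S hS
    have hS0 : S = ∅ := by
      refine Finset.eq_empty_of_forall_notMem fun x hx => ?_
      exact absurd (Finset.sum_eq_zero_iff.mp hS.symm x hx)
        (pow_ne_zero (d x) (by have := hp.out.one_lt; omega))
    subst hS0
    rw [if_pos ⟨fun i => i.elim0, fun i => i.elim0, fun j hj => absurd hj (Finset.notMem_empty j),
      fun i => i.elim0⟩]
    simp [listMult]
  | cons b bs ih =>
    intro S hS
    simp only [List.sum_cons] at hS
    have hlm : listMult (b :: bs) = (b + bs.sum).choose b * listMult bs := rfl
    rw [hlm]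
    push_cast
    by_cases hT : ∃ T ⊆ S, b = ∑ j ∈ T, p ^ d j
    · obtain ⟨T, hTS, hbT⟩ := hT
      have h1 : (((b + bs.sum).choose b : ℕ) : ZMod p) = 1 := by
        rw [hS, choose_sumpow_fin d hd, if_pos ⟨T, hTS, hbT⟩]
      have hrest : bs.sum = ∑ j ∈ S \ T, p ^ d j := by
        have hsd : ∑ j ∈ S \ T, p ^ d j + ∑ j ∈ T, p ^ d j = ∑ j ∈ S, p ^ d j :=
          Finset.sum_sdiff hTS
        omega
      rw [h1, one_mul, ih (S \ T) hrest]
      refine if_congr ?_ rfl rfl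
      constructor
      · rintro ⟨g, hg1, hg2, hg3⟩
        refine ⟨Fin.cases T g, ?_, ?_, ?_⟩
        · intro i
          rcases Fin.eq_zero_or_eq_succ i with rfl | ⟨i', rfl⟩
          · simp only [Fin.cases_zero]
            exact hbT
          · simp only [Fin.cases_succ]
            exact hg1 i'
        · intro j hjS
          by_cases hjT : j ∈ T
          · refine ⟨(0 : Fin (bs.length + 1)), by simp only [Fin.cases_zero]; exact hjT, ?_⟩
            intro y hy
            rcases Fin.eq_zero_or_eq_succ y with rfl | ⟨y', rfl⟩
            · rfl
            · simp only [Fin.cases_succ] at hy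
              exact absurd (Finset.mem_sdiff.mp (hg3 y' hy)).2 (not_not.mpr hjT)
          · have hjST : j ∈ S \ T := Finset.mem_sdiff.mpr ⟨hjS, hjT⟩
            obtain ⟨i, hi, hiu⟩ := hg2 j hjST
            refine ⟨i.succ, by simp only [Fin.cases_succ]; exact hi, ?_⟩
            intro y hy
            rcases Fin.eq_zero_or_eq_succ y with rfl | ⟨y', rfl⟩
            · simp only [Fin.cases_zero] at hy
              exact absurd hy hjT
            · simp only [Fin.cases_succ] at hy
              rw [hiu y' hy]
        · intro i
          rcases Fin.eq_zero_or_eq_succ i with rfl | ⟨i', rfl⟩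
          · simp only [Fin.cases_zero]; exact hTS
          · simp only [Fin.cases_succ]
            exact (hg3 i').trans (Finset.sdiff_subset)
      · rintro ⟨f, hf1, hf2, hf3⟩
        have hf0 : f (0 : Fin (bs.length + 1)) = T := by
          apply subsetsum_inj (p := p) d hd
          have h0 := hf1 (0 : Fin (bs.length + 1))
          have hget : (b :: bs).get (0 : Fin (bs.length + 1)) = b := rfl
          rw [hget] at h0
          rw [← h0, ← hbT]
        refine ⟨fun i => f i.succ, ?_, ?_, ?_⟩
        · intro i
          exact hf1 i.succ
        · intro j hj
          obtain ⟨hjS, hjT⟩ := Finset.mem_sdiff.mp hj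
          obtain ⟨i, hi, hiu⟩ := hf2 j hjS
          rcases Fin.eq_zero_or_eq_succ i with rfl | ⟨i', rfl⟩
          · exact absurd (hf0 ▸ hi) hjT
          · refine ⟨i', hi, ?_⟩
            intro y hy
            exact Fin.succ_injective _ (hiu y.succ hy)
        · intro i x hx
          refine Finset.mem_sdiff.mpr ⟨hf3 i.succ hx, fun hxT => ?_⟩
          obtain ⟨i0, _, hiu⟩ := hf2 x (hTS hxT)
          have h1 := hiu (0 : Fin (bs.length + 1)) (by show x ∈ f (0 : Fin (bs.length + 1)); rw [hf0]; exact hxT)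
          have h2 := hiu i.succ hx
          rw [← h1] at h2
          exact (Fin.succ_ne_zero i) h2
    · have h1 : (((b + bs.sum).choose b : ℕ) : ZMod p) = 0 := by
        rw [hS, choose_sumpow_fin d hd, if_neg hT]
      rw [h1, zero_mul, if_neg]
      rintro ⟨f, hf1, hf2, hf3⟩
      refine hT ⟨f (0 : Fin (bs.length + 1)), hf3 (0 : Fin (bs.length + 1)), ?_⟩
      have h0 := hf1 (0 : Fin (bs.length + 1))
      have hget : (b :: bs).get (0 : Fin (bs.length + 1)) = b := rfl
      rwa [hget] at h0

end Aux

/-- Let p be a prime and n = p^{d₁} + ⋯ + p^{d_k} a sum of k distinct powers of p.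
For a composition β of n, the multinomial coefficient n!/(β₁!⋯β_ℓ!) is ≡ 1 (mod p)
if each part βᵢ is the sum of a subset of {p^{d₁},…,p^{d_k}} and these subsets
partition {p^{d₁},…,p^{d_k}}, and is ≡ 0 (mod p) otherwise. -/
theorem multinomial_mod_p_sum_distinct_pows {p k n : ℕ} (hp : p.Prime)
    (d : Fin k → ℕ) (hd : Function.Injective d) (hn : n = ∑ i : Fin k, p ^ d i)
    (β : Composition n) :
    ((∃ f : Fin β.blocks.length → Finset (Fin k),
        (∀ i : Fin β.blocks.length, β.blocks.get i = ∑ j ∈ f i, p ^ d j) ∧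
        ∀ j : Fin k, ∃! i : Fin β.blocks.length, j ∈ f i) →
      n.factorial / (β.blocks.map Nat.factorial).prod ≡ 1 [MOD p]) ∧
    (¬(∃ f : Fin β.blocks.length → Finset (Fin k),
        (∀ i : Fin β.blocks.length, β.blocks.get i = ∑ j ∈ f i, p ^ d j) ∧
        ∀ j : Fin k, ∃! i : Fin β.blocks.length, j ∈ f i) →
      n.factorial / (β.blocks.map Nat.factorial).prod ≡ 0 [MOD p]) := by
  haveI : Fact p.Prime := ⟨hp⟩
  have hb : β.blocks.sum = n := β.blocks_sum
  have hdiv : n.factorial / (β.blocks.map Nat.factorial).prod = listMult β.blocks := by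
    have h := factorial_div β.blocks
    rwa [hb] at h
  have hmain := main_lemma d hd β.blocks Finset.univ (by rw [hb, hn])
  constructor
  · rintro ⟨f, h1, h2⟩
    rw [hdiv]
    have hcast : ((listMult β.blocks : ℕ) : ZMod p) = ((1 : ℕ) : ZMod p) := by
      rw [hmain, if_pos ⟨f, h1, fun j _ => h2 j, fun i => Finset.subset_univ _⟩]
      push_cast
      rfl
    exact (ZMod.natCast_eq_natCast_iff _ _ _).mp hcast
  · intro hC
    rw [hdiv]
    have hcast : ((listMult β.blocks : ℕ) : ZMod p) = ((0 : ℕ) : ZMod p) := by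
      rw [hmain, if_neg]
      · push_cast
        rfl
      · rintro ⟨f, h1, h2, _⟩
        exact hC ⟨f, h1, fun j => h2 j (Finset.mem_univ j)⟩
    exact (ZMod.natCast_eq_natCast_iff _ _ _).mp hcast
end
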